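/- arXiv:0912.1280 — 7 statements merged into one kernel-verified Lean document; each statement's English description precedes it below -/
import Mathlib

section
/- Let p > 3 be a prime. If p ≡ 1 (mod 4), then Σ_{k=0}^{p-1} S_k · C(2k,k)² / 64^k ≡ 0 (mod p²); if p ≡ 3 (mod 4), then Σ_{k=0}^{p-1} T_k · C(2k,k)² / 64^k ≡ 0 (mod p²), where S_n = u_n(4,1) and T_n = v_n(4,1). -/
open Finset


lemma vdm (m k : ℕ) : (m+k).choose k = ∑ i ∈ range (k+1), m.choose (k-i) * k.choose i := by
  rw [Nat.add_choose_eq, Finset.Nat.sum_antidiagonal_eq_sum_range_succ_mk]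
  rw [← Finset.sum_range_reflect (fun i => m.choose (k-i) * k.choose i) (k+1)]
  refine Finset.sum_congr rfl (fun i hi => ?_)
  simp only [Finset.mem_range] at hi
  have h1 : k + 1 - 1 - i = k - i := by omega
  have h2 : k - (k - i) = i := by omega
  rw [h1, h2]

lemma ringid {R : Type*} [CommRing R] (m : ℕ) (x z : R) :
    ∑ k ∈ range (m+1), ((m.choose k * (m+k).choose k : ℕ) : R) * x^k * z^(m-k)
  = ∑ k ∈ range (m+1), ((m.choose k * m.choose k : ℕ) : R) * x^(m-k) * (x+z)^k := by
  have hL : ∀ k ∈ range (m+1),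
      ((m.choose k * (m+k).choose k : ℕ) : R) * x^k * z^(m-k)
      = ∑ i ∈ range (k+1), ((m.choose k * (m.choose (k-i) * k.choose i) : ℕ) : R) * x^k * z^(m-k) := by
    intro k hk
    rw [vdm m k, Nat.cast_mul, Nat.cast_sum, Finset.mul_sum, Finset.sum_mul, Finset.sum_mul]
    refine Finset.sum_congr rfl (fun i hi => by push_cast; ring)
  have hRt : ∀ k ∈ range (m+1),
      ((m.choose k * m.choose k : ℕ) : R) * x^(m-k) * (x+z)^k
      = ∑ i ∈ range (k+1), ((m.choose k * (m.choose k * k.choose i) : ℕ) : R) * x^(m-k+i) * z^(k-i) := by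
    intro k hk
    rw [add_pow, Finset.mul_sum]
    refine Finset.sum_congr rfl (fun i hi => ?_)
    push_cast
    rw [pow_add]
    ring
  rw [Finset.sum_congr rfl hL, Finset.sum_congr rfl hRt]
  rw [Finset.sum_sigma', Finset.sum_sigma']
  refine Finset.sum_nbij' (fun q => ⟨m - q.1 + q.2, q.2⟩) (fun q => ⟨m - q.1 + q.2, q.2⟩) ?_ ?_ ?_ ?_ ?_
  · rintro ⟨k, i⟩ ha
    simp only [Finset.mem_sigma, Finset.mem_range] at *
    omega
  · rintro ⟨k, i⟩ ha
    simp only [Finset.mem_sigma, Finset.mem_range] at *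
    omega
  · rintro ⟨k, i⟩ ha
    simp only [Finset.mem_sigma, Finset.mem_range] at ha
    have hx : m - (m - k + i) + i = k := by omega
    simp only [hx]
  · rintro ⟨k, i⟩ ha
    simp only [Finset.mem_sigma, Finset.mem_range] at ha
    have hx : m - (m - k + i) + i = k := by omega
    simp only [hx]
  · rintro ⟨k, i⟩ ha
    simp only [Finset.mem_sigma, Finset.mem_range] at ha
    simp only
    have hik : i ≤ k := by omega
    have hkm : k ≤ m := by omega
    have hx : m - (m - k + i) + i = k := by omega
    have hz : (m - k + i) - i = m - k := by omega
    have hc1 : m.choose (m - k + i) = m.choose (k - i) := by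
      rw [← Nat.choose_symm (show m - k + i ≤ m by omega)]
      congr 1
      omega
    have key : m.choose k * k.choose i = m.choose (k - i) * (m - k + i).choose i := by
      have h2 := Nat.choose_mul (n := m) (show k - i ≤ k from Nat.sub_le _ _)
      rw [Nat.choose_symm hik] at h2
      rw [h2, show m - (k - i) = m - k + i by omega, show k - (k - i) = i by omega]
    have hnat : m.choose k * (m.choose (k - i) * k.choose i)
        = m.choose (k - i) * (m.choose (k - i) * (m - k + i).choose i) := by
      rw [show m.choose k * (m.choose (k-i) * k.choose i) = m.choose (k-i) * (m.choose k * k.choose i) by ring, key]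
    rw [hx, hz, hc1, hnat]


def imH : (Zsqrtd 3) →+ ℤ := { toFun := Zsqrtd.im, map_zero' := rfl, map_add' := fun _ _ => rfl }
def reH : (Zsqrtd 3) →+ ℤ := { toFun := Zsqrtd.re, map_zero' := rfl, map_add' := fun _ _ => rfl }

lemma omega_pow (S T : ℕ → ℤ) (hS0 : S 0 = 0) (hS1 : S 1 = 1)
    (hSrec : ∀ n : ℕ, 1 ≤ n → S (n + 1) = 4 * S n - S (n - 1))
    (hT0 : T 0 = 2) (hT1 : T 1 = 4)
    (hTrec : ∀ n : ℕ, 1 ≤ n → T (n + 1) = 4 * T n - T (n - 1)) :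
    ∀ k : ℕ, ((⟨2,1⟩ : Zsqrtd 3)^k).im = S k ∧ 2 * ((⟨2,1⟩ : Zsqrtd 3)^k).re = T k := by
  set ω : Zsqrtd 3 := ⟨2,1⟩ with hω
  intro k
  induction k using Nat.twoStepInduction with
  | zero => simp [hS0, hT0]
  | one => simp [hω, hS1, hT1, Zsqrtd.re_mul]
  | more n ih1 ih0 =>
    have hre : (ω^(n+2)).re = 4*(ω^(n+1)).re - (ω^n).re := by
      rw [pow_succ, pow_succ]
      simp [Zsqrtd.re_mul, Zsqrtd.im_mul, hω]
      ring
    have him : (ω^(n+2)).im = 4*(ω^(n+1)).im - (ω^n).im := by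
      rw [pow_succ, pow_succ]
      simp [Zsqrtd.re_mul, Zsqrtd.im_mul, hω]
      ring
    have hs : S (n+2) = 4 * S (n+1) - S n := by
      have := hSrec (n+1) (by omega); simpa using this
    have ht : T (n+2) = 4 * T (n+1) - T n := by
      have := hTrec (n+1) (by omega); simpa using this
    constructor
    · rw [him, hs, ih1.1, ih0.1]
    · rw [hre, ht, ← ih1.2, ← ih0.2]
      ring

lemma key_id (S T : ℕ → ℤ) (hS0 : S 0 = 0) (hS1 : S 1 = 1)
    (hSrec : ∀ n : ℕ, 1 ≤ n → S (n + 1) = 4 * S n - S (n - 1))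
    (hT0 : T 0 = 2) (hT1 : T 1 = 4)
    (hTrec : ∀ n : ℕ, 1 ≤ n → T (n + 1) = 4 * T n - T (n - 1)) (m : ℕ) :
    (m % 2 = 0 → ∑ k ∈ range (m+1),
        ((m.choose k * (m+k).choose k : ℕ) : ℤ) * ((-1)^k * 4^(m-k)) * S k = 0) ∧
    (m % 2 = 1 → ∑ k ∈ range (m+1),
        ((m.choose k * (m+k).choose k : ℕ) : ℤ) * ((-1)^k * 4^(m-k)) * T k = 0) := by
  have hpow := omega_pow S T hS0 hS1 hSrec hT0 hT1 hTrec
  set ω : Zsqrtd 3 := ⟨2,1⟩ with hω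
  set A : Zsqrtd 3 := ∑ k ∈ range (m+1),
      ((m.choose k * (m+k).choose k : ℕ) : Zsqrtd 3) * (-ω)^k * 4^(m-k) with hA
  have hsw : -ω + 4 = star ω := by
    ext <;> simp [hω]
  have hA' : A = ∑ k ∈ range (m+1),
      ((m.choose k * m.choose k : ℕ) : Zsqrtd 3) * (-ω)^(m-k) * (star ω)^k := by
    rw [hA, ringid m (-ω) 4, Finset.sum_congr rfl (fun k (hk : k ∈ range (m+1)) => by rw [hsw])]
  have hstar : star A = (-1)^m * A := by
    calc star A
        = ∑ k ∈ range (m+1), star (((m.choose k * m.choose k : ℕ) : Zsqrtd 3)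
            * (-ω)^(m-k) * (star ω)^k) := by rw [hA', star_sum]
      _ = ∑ k ∈ range (m+1), (-1)^m * (((m.choose k * m.choose k : ℕ) : Zsqrtd 3)
            * (-ω)^(m-k) * (star ω)^k) := by
          rw [← Finset.sum_range_reflect (fun k => star (((m.choose k * m.choose k : ℕ) : Zsqrtd 3)
            * (-ω)^(m-k) * (star ω)^k)) (m+1)]
          refine Finset.sum_congr rfl (fun k hk => ?_)
          simp only [Finset.mem_range] at hk
          have hkm : k ≤ m := by omega
          have h1 : m + 1 - 1 - k = m - k := by omega
          have h2 : m - (m - k) = k := by omega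
          have hcs : m.choose (m-k) = m.choose k := Nat.choose_symm hkm
          have hee : (-1 : Zsqrtd 3)^m * (-1)^(m-k) = (-1)^k := by
            rw [← pow_add, show m + (m-k) = k + 2*(m-k) by omega, pow_add, pow_mul,
              neg_one_sq, one_pow, mul_one]
          simp only [h1, h2, hcs, star_mul, star_pow, star_neg, star_star, star_natCast]
          rw [neg_pow ω, neg_pow (star ω)]
          linear_combination (-(((m.choose k * m.choose k : ℕ) : Zsqrtd 3)
            * (star ω)^k * ω^(m-k))) * hee
      _ = (-1)^m * A := by rw [hA', Finset.mul_sum]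
  have hAcomp : A = ∑ k ∈ range (m+1),
      (((((m.choose k * (m+k).choose k : ℕ) : ℤ) * ((-1)^k * 4^(m-k))) : ℤ) : Zsqrtd 3) * ω^k := by
    rw [hA]
    refine Finset.sum_congr rfl (fun k hk => ?_)
    push_cast
    ring
  have himA : A.im = ∑ k ∈ range (m+1),
      ((m.choose k * (m+k).choose k : ℕ) : ℤ) * ((-1)^k * 4^(m-k)) * S k := by
    calc A.im = imH A := rfl
      _ = ∑ k ∈ range (m+1), imH ((((((m.choose k * (m+k).choose k : ℕ) : ℤ)
            * ((-1)^k * 4^(m-k))) : ℤ) : Zsqrtd 3) * ω^k) := by rw [hAcomp, map_sum]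
      _ = _ := by
          refine Finset.sum_congr rfl (fun k hk => ?_)
          have : imH ((((((m.choose k * (m+k).choose k : ℕ) : ℤ)
              * ((-1)^k * 4^(m-k))) : ℤ) : Zsqrtd 3) * ω^k)
              = (((m.choose k * (m+k).choose k : ℕ) : ℤ) * ((-1)^k * 4^(m-k))) * (ω^k).im := by
            show ((_ : Zsqrtd 3) * ω^k).im = _
            rw [Zsqrtd.im_mul, Zsqrtd.re_intCast, Zsqrtd.im_intCast]
            ring
          rw [this, (hpow k).1]
  have hreA : 2 * A.re = ∑ k ∈ range (m+1),
      ((m.choose k * (m+k).choose k : ℕ) : ℤ) * ((-1)^k * 4^(m-k)) * T k := by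
    calc 2 * A.re = 2 * reH A := rfl
      _ = 2 * ∑ k ∈ range (m+1), reH ((((((m.choose k * (m+k).choose k : ℕ) : ℤ)
            * ((-1)^k * 4^(m-k))) : ℤ) : Zsqrtd 3) * ω^k) := by rw [hAcomp, map_sum]
      _ = _ := by
          rw [Finset.mul_sum]
          refine Finset.sum_congr rfl (fun k hk => ?_)
          have : reH ((((((m.choose k * (m+k).choose k : ℕ) : ℤ)
              * ((-1)^k * 4^(m-k))) : ℤ) : Zsqrtd 3) * ω^k)
              = (((m.choose k * (m+k).choose k : ℕ) : ℤ) * ((-1)^k * 4^(m-k))) * (ω^k).re := by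
            show ((_ : Zsqrtd 3) * ω^k).re = _
            rw [Zsqrtd.re_mul, Zsqrtd.re_intCast, Zsqrtd.im_intCast]
            ring
          rw [this, ← (hpow k).2]
          ring
  constructor
  · intro hme
    have h1 : (-1 : Zsqrtd 3)^m = 1 := Even.neg_one_pow (Nat.even_iff.mpr hme)
    rw [h1, one_mul] at hstar
    have := congrArg Zsqrtd.im hstar
    rw [Zsqrtd.im_star] at this
    rw [← himA]
    omega
  · intro hmo
    have h1 : (-1 : Zsqrtd 3)^m = -1 := Odd.neg_one_pow (Nat.odd_iff.mpr hmo)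
    rw [h1, neg_one_mul] at hstar
    have := congrArg Zsqrtd.re hstar
    rw [Zsqrtd.re_star, Zsqrtd.re_neg] at this
    rw [← hreA]
    omega


lemma stepB (p : ℕ) (hp : p.Prime) (hp3 : 3 < p) :
    ∀ k, k ≤ (p-1)/2 → (((2*k).choose k : ZMod (p^2)))^2
      = (-16)^k * ((((p-1)/2).choose k : ℕ) : ZMod (p^2))
          * (((((p-1)/2) + k).choose k : ℕ) : ZMod (p^2)) := by
  set R := ZMod (p^2)
  set m := (p-1)/2 with hmdef
  have hpodd : p % 2 = 1 := Nat.odd_iff.mp (hp.odd_of_ne_two (by omega))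
  have hm : 2*m+1 = p := by omega
  have hP2 : ((p : R))^2 = 0 := by rw [← Nat.cast_pow, ZMod.natCast_self]
  have h2m : 2 * ((m:ℕ) : R) = (p:R) - 1 := by
    have h := congrArg (Nat.cast : ℕ → R) (show 2*m = p - 1 by omega)
    rwa [Nat.cast_mul, Nat.cast_sub (show 1 ≤ p by omega), Nat.cast_ofNat, Nat.cast_one] at h
  intro k
  induction k with
  | zero => simp
  | succ k ih =>
    intro hk1
    have hkm : k ≤ m := by omega
    have ih' := ih hkm
    have hu : IsUnit (((k+1 : ℕ)) : R) := by
      rw [ZMod.isUnit_iff_coprime]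
      refine Nat.Coprime.pow_right 2 ?_
      have hnd : ¬ p ∣ (k+1) := Nat.not_dvd_of_pos_of_lt (by omega) (by omega)
      exact Nat.coprime_comm.mp ((hp.coprime_iff_not_dvd).mpr hnd)
    have e1 : (k+1) * ((2*(k+1)).choose (k+1)) = 2*(2*k+1) * ((2*k).choose k) := by
      have := Nat.succ_mul_centralBinom_succ k
      simpa [Nat.centralBinom] using this
    have e2 : m.choose (k+1) * (k+1) = m.choose k * (m - k) := Nat.choose_succ_right_eq m k
    have e3 : (m+k+1) * ((m+k).choose k) = (m+k+1).choose (k+1) * (k+1) := by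
      have := Nat.add_one_mul_choose_eq (m+k) k
      simpa using this
    have c1 : ((k+1 : ℕ) : R) * (((2*(k+1)).choose (k+1) : ℕ) : R)
        = 2*(2*(k:R)+1) * (((2*k).choose k : ℕ) : R) := by simp only [R]; exact_mod_cast congrArg (Nat.cast : ℕ → ZMod (p^2)) e1
    have c2 : ((m.choose (k+1) : ℕ) : R) * ((k+1 : ℕ) : R)
        = ((m.choose k : ℕ) : R) * (((m:ℕ):R) - (k:R)) := by
      have h : ((m.choose (k+1) * (k+1) : ℕ) : R) = ((m.choose k * (m-k) : ℕ) : R) := by rw [e2]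
      simp only [R] at h ⊢
      rw [Nat.cast_mul, Nat.cast_mul, Nat.cast_sub hkm] at h
      exact_mod_cast h
    have c3 : (((m:ℕ):R)+(k:R)+1) * (((m+k).choose k : ℕ) : R)
        = (((m+(k+1)).choose (k+1) : ℕ) : R) * ((k+1 : ℕ) : R) := by
      have h : (((m+k+1) * (m+k).choose k : ℕ) : R) = (((m+k+1).choose (k+1) * (k+1) : ℕ) : R) := by rw [e3]
      rw [show m+(k+1) = m+k+1 by omega]
      simp only [R] at h ⊢
      push_cast at h ⊢
      linear_combination h
    have hkey : 4*(((m:ℕ):R) - (k:R))*(((m:ℕ):R) + (k:R) + 1) = -((2*(k:R)+1)^2) := by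
      linear_combination (2*((m:ℕ):R) + 1 + (p:R)) * h2m + hP2
    refine (hu.pow 2).mul_left_cancel ?_
    calc ((k+1:ℕ):R)^2 * (((2*(k+1)).choose (k+1) : ℕ) : R)^2
        = (((k+1:ℕ):R) * (((2*(k+1)).choose (k+1) : ℕ) : R))^2 := by ring
      _ = (2*(2*(k:R)+1) * (((2*k).choose k : ℕ) : R))^2 := by rw [c1]
      _ = 4*(2*(k:R)+1)^2 * ((((2*k).choose k : ℕ) : R))^2 := by ring
      _ = 4*(2*(k:R)+1)^2 * ((-16)^k * ((m.choose k : ℕ) : R) * (((m+k).choose k : ℕ) : R)) := by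
          rw [ih']
      _ = (-16)^(k+1) * ((((m.choose k : ℕ) : R) * (((m:ℕ):R) - (k:R)))
            * ((((m:ℕ):R)+(k:R)+1) * (((m+k).choose k : ℕ) : R))) := by
          linear_combination (4*(-16:R)^k * ((m.choose k : ℕ) : R) * (((m+k).choose k : ℕ) : R)) * hkey
      _ = (-16)^(k+1) * ((((m.choose (k+1) : ℕ) : R) * ((k+1:ℕ):R))
            * ((((m+(k+1)).choose (k+1) : ℕ) : R) * ((k+1:ℕ):R))) := by rw [c2, ← c3]
      _ = ((k+1:ℕ):R)^2 * ((-16)^(k+1) * ((m.choose (k+1) : ℕ) : R)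
            * (((m+(k+1)).choose (k+1) : ℕ) : R)) := by ring


theorem stmt12 (p : ℕ) (hp : p.Prime) (hp3 : 3 < p)
    (S T : ℕ → ℤ) (hS0 : S 0 = 0) (hS1 : S 1 = 1)
    (hSrec : ∀ n : ℕ, 1 ≤ n → S (n + 1) = 4 * S n - S (n - 1))
    (hT0 : T 0 = 2) (hT1 : T 1 = 4)
    (hTrec : ∀ n : ℕ, 1 ≤ n → T (n + 1) = 4 * T n - T (n - 1)) :
    (p % 4 = 1 →
      (∑ k ∈ Finset.range p,
        (S k : ZMod (p ^ 2)) * (Nat.choose (2 * k) k : ZMod (p ^ 2)) ^ 2 *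
          ((64 : ZMod (p ^ 2)) ^ k)⁻¹) = 0) ∧
    (p % 4 = 3 →
      (∑ k ∈ Finset.range p,
        (T k : ZMod (p ^ 2)) * (Nat.choose (2 * k) k : ZMod (p ^ 2)) ^ 2 *
          ((64 : ZMod (p ^ 2)) ^ k)⁻¹) = 0) := by
  have hpodd : p % 2 = 1 := Nat.odd_iff.mp (hp.odd_of_ne_two (by omega))
  set m := (p-1)/2 with hmdef
  have hm : 2*m+1 = p := by omega
  have hP2 : ((p : ZMod (p^2)))^2 = 0 := by rw [← Nat.cast_pow, ZMod.natCast_self]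
  have hcop : Nat.Coprime 64 (p^2) := by
    have h2 : Nat.Coprime 2 p := (Nat.coprime_primes Nat.prime_two hp).mpr (by omega)
    have : Nat.Coprime (2^6) (p^2) := (h2.pow_right 2).pow_left 6
    simpa using this
  have hu64 : IsUnit ((64 : ZMod (p^2))) := by
    have h : ((64:ℕ) : ZMod (p^2)) = (64 : ZMod (p^2)) := by norm_cast
    rw [← h]
    exact (ZMod.isUnit_iff_coprime 64 (p^2)).mpr hcop
  have main : ∀ W : ℕ → ℤ,
      (∑ k ∈ Finset.range (m+1),
        ((m.choose k * (m+k).choose k : ℕ) : ℤ) * ((-1)^k * 4^(m-k)) * W k = 0) →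
      (∑ k ∈ Finset.range p,
        (W k : ZMod (p ^ 2)) * (Nat.choose (2 * k) k : ZMod (p ^ 2)) ^ 2 *
          ((64 : ZMod (p ^ 2)) ^ k)⁻¹) = 0 := by
    intro W hW
    rw [← Finset.sum_range_add_sum_Ico _ (show m+1 ≤ p by omega)]
    have hIco : ∑ k ∈ Finset.Ico (m+1) p,
        (W k : ZMod (p ^ 2)) * (Nat.choose (2 * k) k : ZMod (p ^ 2)) ^ 2 *
          ((64 : ZMod (p ^ 2)) ^ k)⁻¹ = 0 := by
      refine Finset.sum_eq_zero (fun k hk => ?_)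
      rw [Finset.mem_Ico] at hk
      have hdvd : p ∣ (2*k).choose k :=
        hp.dvd_choose (show k < p by omega) (show 2*k - k < p by omega) (by omega)
      obtain ⟨c, hc⟩ := hdvd
      have hzero : ((2*k).choose k : ZMod (p^2))^2 = 0 := by
        rw [hc, Nat.cast_mul, mul_pow, hP2, zero_mul]
      rw [hzero, mul_zero, zero_mul]
    rw [hIco, add_zero]
    have hmain2 : (64 : ZMod (p^2))^m * (∑ k ∈ Finset.range (m+1),
        (W k : ZMod (p ^ 2)) * (Nat.choose (2 * k) k : ZMod (p ^ 2)) ^ 2 *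
          ((64 : ZMod (p ^ 2)) ^ k)⁻¹) = (64 : ZMod (p^2))^m * 0 := by
      rw [mul_zero, Finset.mul_sum]
      have hterm : ∀ k ∈ Finset.range (m+1),
          (64 : ZMod (p^2))^m * ((W k : ZMod (p ^ 2)) * (Nat.choose (2 * k) k : ZMod (p ^ 2)) ^ 2 *
            ((64 : ZMod (p ^ 2)) ^ k)⁻¹)
          = (16 : ZMod (p^2))^m *
            ((((m.choose k * (m+k).choose k : ℕ) : ℤ) * ((-1)^k * 4^(m-k)) * W k : ℤ) : ZMod (p^2)) := by
        intro k hk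
        rw [Finset.mem_range] at hk
        have hkm : k ≤ m := by omega
        rw [stepB p hp hp3 k hkm]
        have hpow64 : (64 : ZMod (p^2))^m = (64 : ZMod (p^2))^(m-k) * (64 : ZMod (p^2))^k := by
          rw [← pow_add]
          congr 1
          omega
        have hinv : (64 : ZMod (p^2))^k * ((64 : ZMod (p^2))^k)⁻¹ = 1 :=
          ZMod.mul_inv_of_unit _ (hu64.pow k)
        calc (64 : ZMod (p^2))^m * ((W k : ZMod (p ^ 2)) *
              ((-16)^k * ((m.choose k : ℕ) : ZMod (p^2)) * (((m + k).choose k : ℕ) : ZMod (p^2))) *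
              ((64 : ZMod (p ^ 2)) ^ k)⁻¹)
            = ((64 : ZMod (p^2))^k * ((64 : ZMod (p ^ 2)) ^ k)⁻¹) * ((64 : ZMod (p^2))^(m-k) *
              ((W k : ZMod (p ^ 2)) *
              ((-16)^k * ((m.choose k : ℕ) : ZMod (p^2)) * (((m + k).choose k : ℕ) : ZMod (p^2))))) := by
              rw [hpow64]; ring
          _ = (64 : ZMod (p^2))^(m-k) * ((W k : ZMod (p ^ 2)) *
              ((-16)^k * ((m.choose k : ℕ) : ZMod (p^2)) * (((m + k).choose k : ℕ) : ZMod (p^2)))) := by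
              rw [hinv, one_mul]
          _ = (16 : ZMod (p^2))^m *
              ((((m.choose k * (m+k).choose k : ℕ) : ℤ) * ((-1)^k * 4^(m-k)) * W k : ℤ) : ZMod (p^2)) := by
              have h64 : (64 : ZMod (p^2))^(m-k) = 16^(m-k) * 4^(m-k) := by
                rw [← mul_pow]; norm_num
              have h16 : (16 : ZMod (p^2))^m = 16^(m-k) * 16^k := by
                rw [← pow_add]; congr 1; omega
              have hm16 : (-16 : ZMod (p^2))^k = (-1)^k * 16^k := by
                rw [← neg_one_mul, mul_pow]
              rw [h64, h16, hm16]
              push_cast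
              ring
      rw [Finset.sum_congr rfl hterm, ← Finset.mul_sum, ← Int.cast_sum, hW]
      simp
    exact (hu64.pow m).mul_left_cancel hmain2
  constructor
  · intro h4
    exact main S ((key_id S T hS0 hS1 hSrec hT0 hT1 hTrec m).1 (by omega))
  · intro h4
    exact main T ((key_id S T hS0 hS1 hSrec hT0 hT1 hTrec m).2 (by omega))
end

section
/- Let p be an odd prime. Then Σ_{k=0}^{p-1} (k/3) · C(2k,k) / (-4)^k ≡ ((-1/p) - (3/p))/2 (mod p), where (·/p) is the Legendre symbol and (k/3) is the Legendre symbol modulo 3. -/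
namespace Stmt13Aux

/-- the character mod 3, integer valued -/
def chi (k : ℕ) : ℤ := if k % 3 = 1 then 1 else if k % 3 = 2 then -1 else 0

/-- value table, period 6 in first arg, 3 in second -/
def T (a b : ℕ) : ℤ :=
  match a % 6, b % 3 with
  | 0, 0 => 0 | 0, 1 => 1 | 0, 2 => -1
  | 1, 0 => 1 | 1, 1 => 0 | 1, 2 => -1
  | 2, 0 => 1 | 2, 1 => -1 | 2, 2 => 0
  | 3, 0 => 0 | 3, 1 => -1 | 3, 2 => 1
  | 4, 0 => -1 | 4, 1 => 0 | 4, 2 => 1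
  | 5, 0 => -1 | 5, 1 => 1 | 5, 2 => 0
  | _, _ => 0

def f (j n : ℕ) : ℤ := ∑ k ∈ Finset.range (n + 1), chi (k + j) * (n.choose k : ℤ)

lemma f_succ (j n : ℕ) : f j (n + 1) = f j n + f (j + 1) n := by
  have A : ∑ k ∈ Finset.range (n + 2), chi (k + j) * (n.choose k : ℤ) = f j n := by
    rw [Finset.sum_range_succ, Nat.choose_succ_self]
    simp [f]
  have A' : ∑ k ∈ Finset.range (n + 2), chi (k + j) * (n.choose k : ℤ)
      = (∑ k ∈ Finset.range (n + 1), chi (k + 1 + j) * (n.choose (k + 1) : ℤ)) + chi j := by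
    rw [Finset.sum_range_succ']
    simp
  have B : f j (n + 1)
      = (∑ k ∈ Finset.range (n + 1), chi (k + 1 + j) * ((n + 1).choose (k + 1) : ℤ)) + chi j := by
    rw [f, Finset.sum_range_succ']
    simp
  rw [B]
  have : ∀ k, chi (k + 1 + j) * (((n + 1).choose (k + 1) : ℕ) : ℤ)
      = chi (k + 1 + j) * (n.choose k : ℤ) + chi (k + 1 + j) * (n.choose (k + 1) : ℤ) := by
    intro k
    rw [Nat.choose_succ_succ]
    push_cast
    ring
  rw [Finset.sum_congr rfl (fun k _ => this k), Finset.sum_add_distrib]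
  have C : ∑ k ∈ Finset.range (n + 1), chi (k + 1 + j) * (n.choose k : ℤ) = f (j + 1) n := by
    apply Finset.sum_congr rfl
    intro k _
    have : k + 1 + j = k + (j + 1) := by ring
    rw [this]
  rw [C]
  have D : ∑ k ∈ Finset.range (n + 1), chi (k + 1 + j) * (n.choose (k + 1) : ℤ)
      = f j n - chi j := by
    have := A'.symm.trans A
    linarith [this]
  rw [D]; ring

lemma T_step (n j : ℕ) : T n j + T n (j + 1) = T (n + 1) j := by
  have e6 : (n + 1) % 6 = (n % 6 + 1) % 6 := by omega
  have e3 : (j + 1) % 3 = (j % 3 + 1) % 3 := by omega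
  have h6 : n % 6 = 0 ∨ n % 6 = 1 ∨ n % 6 = 2 ∨ n % 6 = 3 ∨ n % 6 = 4 ∨ n % 6 = 5 := by omega
  have h3 : j % 3 = 0 ∨ j % 3 = 1 ∨ j % 3 = 2 := by omega
  rcases h6 with h | h | h | h | h | h <;> rcases h3 with g | g | g <;>
    simp [T, e6, e3, h, g]

lemma f_eq_T (n j : ℕ) : f j n = T n j := by
  induction n generalizing j with
  | zero =>
    have h3 : j % 3 = 0 ∨ j % 3 = 1 ∨ j % 3 = 2 := by omega
    rcases h3 with g | g | g <;> simp [f, chi, T, g]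
  | succ n ih =>
    rw [f_succ, ih j, ih (j + 1), T_step]

lemma notsq2 : ¬ IsSquare ((2 : ℤ) : ZMod 3) := by decide

end Stmt13Aux

open Stmt13Aux

theorem stmt13 (p : ℕ) (hp : p.Prime) (hodd : p ≠ 2) :
    (∑ k ∈ Finset.range p,
      (if k % 3 = 1 then (1 : ZMod p) else if k % 3 = 2 then -1 else 0) *
        (Nat.choose (2 * k) k : ZMod p) * (((-4 : ZMod p)) ^ k)⁻¹) =
      (((@legendreSym p ⟨hp⟩ (-1) : ℤ) : ZMod p) - ((@legendreSym p ⟨hp⟩ 3 : ℤ) : ZMod p)) *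
        (2 : ZMod p)⁻¹ := by
  haveI : Fact p.Prime := ⟨hp⟩
  set m := p / 2 with hm
  have hp2 : 2 * m + 1 = p := by
    have := hp.two_le
    have hop : p % 2 = 1 := Nat.odd_iff.mp (hp.odd_of_ne_two hodd)
    omega
  -- key binomial identity mod p
  have hne4 : (-4 : ZMod p) ≠ 0 := by
    intro h
    have h0 : ((4 : ℕ) : ZMod p) = 0 := by
      have := neg_eq_zero.mp h
      exact_mod_cast this
    rw [ZMod.natCast_eq_zero_iff] at h0
    have h4 : p ∣ 2 ^ 2 := by simpa using h0
    have h2 : p ∣ 2 := hp.dvd_of_dvd_pow h4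
    exact hodd ((Nat.prime_dvd_prime_iff_eq hp Nat.prime_two).mp h2)
  have hmain : ∀ k, k < p → ((Nat.choose (2 * k) k : ℕ) : ZMod p)
      = (-4 : ZMod p) ^ k * ((m.choose k : ℕ) : ZMod p) := by
    intro k hk
    induction k with
    | zero => simp
    | succ k ih =>
      have hk' : k < p := by omega
      have ih' := ih hk'
      have hk1 : ((k : ZMod p) + 1) ≠ 0 := by
        have : ((k + 1 : ℕ) : ZMod p) ≠ 0 := by
          rw [Ne, ZMod.natCast_eq_zero_iff]
          intro hdvd
          have := Nat.le_of_dvd (by omega) hdvd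
          omega
        push_cast at this
        exact this
      have hcb : ((k : ZMod p) + 1) * ((Nat.choose (2 * (k + 1)) (k + 1) : ℕ) : ZMod p)
          = 2 * (2 * (k : ZMod p) + 1) * ((Nat.choose (2 * k) k : ℕ) : ZMod p) := by
        have h := Nat.succ_mul_centralBinom_succ k
        have h2 : (k + 1) * Nat.choose (2 * (k + 1)) (k + 1)
            = 2 * (2 * k + 1) * Nat.choose (2 * k) k := by
          simpa [Nat.centralBinom] using h
        have := congrArg (fun n : ℕ => (n : ZMod p)) h2
        push_cast at this
        convert this using 2 <;> push_cast <;> ring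
      have hch : ((m.choose (k + 1) : ℕ) : ZMod p) * ((k : ZMod p) + 1)
          = ((m.choose k : ℕ) : ZMod p) * ((m - k : ℕ) : ZMod p) := by
        have h := Nat.choose_succ_right_eq m k
        have := congrArg (fun n : ℕ => (n : ZMod p)) h
        push_cast at this
        convert this using 2 <;> push_cast <;> ring
      -- reduce to multiplied equation
      have key : 2 * (2 * (k : ZMod p) + 1) * ((Nat.choose (2 * k) k : ℕ) : ZMod p)
          = (-4 : ZMod p) ^ (k + 1) * (((m.choose k : ℕ) : ZMod p) * ((m - k : ℕ) : ZMod p)) := by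
        rw [ih']
        rcases le_or_gt k m with hle | hlt
        · have hsum : ((2 * (2 * k + 1) + 4 * (m - k) : ℕ) : ZMod p) = 0 := by
            have : 2 * (2 * k + 1) + 4 * (m - k) = 2 * p := by omega
            rw [this]
            push_cast
            simp [ZMod.natCast_self]
          push_cast at hsum
          have h4 : (4 : ZMod p) * ((m - k : ℕ) : ZMod p)
              = - (2 * (2 * (k : ZMod p) + 1)) := by
            push_cast at hsum ⊢
            linear_combination hsum
          rw [pow_succ]
          calc 2 * (2 * (k : ZMod p) + 1) * ((-4 : ZMod p) ^ k * ((m.choose k : ℕ) : ZMod p))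
              = (-4 : ZMod p) ^ k * ((m.choose k : ℕ) : ZMod p) * (2 * (2 * (k : ZMod p) + 1)) := by ring
            _ = (-4 : ZMod p) ^ k * ((m.choose k : ℕ) : ZMod p) * (-((4 : ZMod p) * ((m - k : ℕ) : ZMod p))) := by rw [h4]; ring
            _ = (-4 : ZMod p) ^ k * -4 * (((m.choose k : ℕ) : ZMod p) * ((m - k : ℕ) : ZMod p)) := by ring
        · have e1 : m.choose k = 0 := Nat.choose_eq_zero_of_lt hlt
          rw [e1]
          simp
      have final : ((k : ZMod p) + 1) * ((Nat.choose (2 * (k + 1)) (k + 1) : ℕ) : ZMod p)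
          = ((k : ZMod p) + 1) * ((-4 : ZMod p) ^ (k + 1) * ((m.choose (k + 1) : ℕ) : ZMod p)) := by
        rw [hcb, key, ← hch]
        ring
      exact mul_left_cancel₀ hk1 final
  -- rewrite LHS
  have hLHS : (∑ k ∈ Finset.range p,
      (if k % 3 = 1 then (1 : ZMod p) else if k % 3 = 2 then -1 else 0) *
        (Nat.choose (2 * k) k : ZMod p) * (((-4 : ZMod p)) ^ k)⁻¹)
      = ((f 0 m : ℤ) : ZMod p) := by
    have step1 : ∀ k ∈ Finset.range p,
        (if k % 3 = 1 then (1 : ZMod p) else if k % 3 = 2 then -1 else 0) *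
          (Nat.choose (2 * k) k : ZMod p) * (((-4 : ZMod p)) ^ k)⁻¹
        = ((chi k : ℤ) : ZMod p) * ((m.choose k : ℕ) : ZMod p) := by
      intro k hk
      rw [Finset.mem_range] at hk
      rw [hmain k hk]
      have hinv : (-4 : ZMod p) ^ k * (((-4 : ZMod p)) ^ k)⁻¹ = 1 :=
        mul_inv_cancel₀ (pow_ne_zero k hne4)
      have hchi : (if k % 3 = 1 then (1 : ZMod p) else if k % 3 = 2 then -1 else 0)
          = ((chi k : ℤ) : ZMod p) := by
        unfold chi
        split_ifs <;> simp
      rw [hchi]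
      calc ((chi k : ℤ) : ZMod p) * ((-4:ZMod p)^k * ((m.choose k : ℕ) : ZMod p)) * (((-4 : ZMod p)) ^ k)⁻¹
          = ((chi k : ℤ) : ZMod p) * ((m.choose k : ℕ) : ZMod p) * ((-4:ZMod p)^k * (((-4 : ZMod p)) ^ k)⁻¹) := by ring
        _ = ((chi k : ℤ) : ZMod p) * ((m.choose k : ℕ) : ZMod p) := by rw [hinv, mul_one]
    rw [Finset.sum_congr rfl step1]
    have step2 : ∑ k ∈ Finset.range p, ((chi k : ℤ) : ZMod p) * ((m.choose k : ℕ) : ZMod p)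
        = ∑ k ∈ Finset.range (m + 1), ((chi k : ℤ) : ZMod p) * ((m.choose k : ℕ) : ZMod p) := by
      symm
      apply Finset.sum_subset
      · intro x hx
        rw [Finset.mem_range] at *
        omega
      · intro x _ hx
        rw [Finset.mem_range] at hx
        push_neg at hx
        have : m.choose x = 0 := Nat.choose_eq_zero_of_lt (by omega)
        rw [this]
        simp
    rw [step2, f]
    push_cast
    simp
  rw [hLHS, f_eq_T]
  -- now deal with the RHS
  by_cases hp3 : p = 3
  · subst hp3
    have : m = 1 := by omega
    rw [this]
    have hT : T 1 0 = 1 := rfl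
    have hl1 : legendreSym 3 (-1) = -1 := by
      rw [legendreSym.at_neg_one (by norm_num), ZMod.χ₄_nat_three_mod_four (by norm_num)]
    have hl3 : legendreSym 3 3 = 0 := by
      rw [legendreSym.eq_zero_iff]
      exact_mod_cast ZMod.natCast_self 3
    rw [hT, hl1, hl3]
    have h30 : ((3 : ℕ) : ZMod 3) = 0 := ZMod.natCast_self 3
    push_cast at h30
    have hinv2 : (2 : ZMod 3)⁻¹ = 2 := by
      apply inv_eq_of_mul_eq_one_right
      linear_combination h30
    rw [hinv2]
    push_cast
    linear_combination h30
  · -- p ≠ 3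
    have h3p : ¬ (3 ∣ p) := by
      intro h
      exact hp3 ((Nat.prime_dvd_prime_iff_eq (by norm_num) hp).mp h).symm
    haveI : Fact (Nat.Prime 3) := ⟨by norm_num⟩
    have hm3 : m % 3 ≠ 1 := by
      intro h
      apply h3p
      omega
    have hrec : legendreSym p 3 = (-1) ^ (p / 2) * legendreSym 3 p := by
      have := legendreSym.quadratic_reciprocity' (p := 3) (q := p) (by norm_num) hodd
      simpa using this
    have hl3 : legendreSym 3 (p : ℤ) = if p % 3 = 1 then 1 else -1 := by
      rw [legendreSym.mod]
      have hmod : ((p : ℤ) % ((3 : ℕ) : ℤ)) = ((p % 3 : ℕ) : ℤ) := by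
        push_cast
        omega
      rw [hmod]
      have hp3' : p % 3 = 1 ∨ p % 3 = 2 := by omega
      rcases hp3' with h | h
      · rw [h, if_pos rfl]
        simpa using legendreSym.at_one 3
      · rw [h, if_neg (by omega)]
        rw [legendreSym.eq_neg_one_iff]
        have h2 : ((2 : ℕ) : ℤ) = (2 : ℤ) := by norm_num
        rw [h2]
        exact notsq2
    have hneg1 : legendreSym p (-1) = (-1) ^ m := by
      rw [legendreSym.at_neg_one hodd, ZMod.χ₄_eq_neg_one_pow (by omega)]
    have h2ne : (2 : ZMod p) ≠ 0 := by
      have : ((2 : ℕ) : ZMod p) ≠ 0 := by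
        rw [Ne, ZMod.natCast_eq_zero_iff]
        intro h
        exact hodd ((Nat.prime_dvd_prime_iff_eq hp Nat.prime_two).mp h)
      exact_mod_cast this
    rw [eq_comm, mul_inv_eq_iff_eq_mul₀ h2ne, eq_comm]
    rw [hneg1]
    -- integer identity: T m 0 * 2 = (-1)^m - legendreSym p 3
    have hint : (T m 0) * 2 = (-1 : ℤ) ^ m - legendreSym p 3 := by
      rw [hrec, hl3]
      have hpm : p % 3 = (2 * (m % 3) + 1) % 3 := by omega
      have hpd : p / 2 = m := rfl
      rw [hpd]
      have h6 : m % 6 = 0 ∨ m % 6 = 2 ∨ m % 6 = 3 ∨ m % 6 = 5 := by omega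
      have hpow : (-1 : ℤ) ^ m = (-1) ^ (m % 2) := by
        conv_lhs => rw [← Nat.div_add_mod m 2, pow_add, pow_mul]
        simp
      have e3 : m % 3 = m % 6 % 3 := by omega
      have e2 : m % 2 = m % 6 % 2 := by omega
      rcases h6 with h | h | h | h <;>
        · rw [hpow, hpm, e2, e3, h]
          simp [T, h]
    have := congrArg (fun z : ℤ => (z : ZMod p)) hint
    push_cast at this ⊢
    linear_combination this
end

section
/- Let p be an odd prime. Then Σ_{k=0}^{p-1} F_k · C(2k,k) / (-4)^k ≡ (1 - (p/5))/2 (mod p) and Σ_{k=0}^{p-1} L_k · C(2k,k) / (-4)^k ≡ (5(p/5) - 1)/2 (mod p), where F and L are the Fibonacci and Lucas sequences and (p/5) is the Legendre symbol (taken to be 0 if p = 5). -/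
open Polynomial Finset

/-- Binomial sum identity for sequences satisfying the Fibonacci recurrence. -/
lemma aux_sum {p : ℕ} (G : ℕ → ZMod p) (hG : ∀ n, G (n+2) = G (n+1) + G n) :
    ∀ n m : ℕ, ∑ k ∈ Finset.range (n+1), (Nat.choose n k : ZMod p) * G (m+k) = G (m + 2*n) := by
  intro n
  induction n with
  | zero => intro m; simp
  | succ n ih =>
    intro m
    have key : ∀ k ∈ Finset.range (n+1),
        ((Nat.choose (n+1) (k+1) : ZMod p)) * G (m+(k+1)) =
        (Nat.choose n k : ZMod p) * G ((m+1)+k) + (Nat.choose n (k+1) : ZMod p) * G (m+(k+1)) := by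
      intro k _
      rw [Nat.choose_succ_succ]
      have h : m + (k+1) = (m+1)+k := by omega
      rw [h]; push_cast; ring
    rw [Finset.sum_range_succ', Finset.sum_congr rfl key, Finset.sum_add_distrib, ih (m+1)]
    have h2 : (∑ k ∈ Finset.range (n+1), (Nat.choose n (k+1) : ZMod p) * G (m+(k+1)))
        + ((Nat.choose (n+1) 0 : ZMod p)) * G (m+0)
        = G (m + 2*n) := by
      have e := Finset.sum_range_succ' (fun k => (Nat.choose n k : ZMod p) * G (m+k)) (n+1)
      rw [Finset.sum_range_succ] at e
      simp only [Nat.choose_succ_self, Nat.cast_zero, zero_mul, add_zero, Nat.choose_zero_right,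
        Nat.cast_one] at e ⊢
      rw [← e, ih m]
    rw [add_assoc, h2]
    have h3 : m + 2*(n+1) = (m + 2*n) + 2 := by omega
    have h4 : m + 1 + 2*n = (m+2*n) + 1 := by omega
    rw [h3, h4, hG]



lemma aux_central {p : ℕ} [Fact p.Prime] (hodd : p ≠ 2) :
    ∀ k, k < p → ((Nat.choose (2*k) k : ZMod p)) = (-4)^k * (Nat.choose (p/2) k : ZMod p) := by
  have hp := (Fact.out : p.Prime)
  have hmod : p % 2 = 1 := Nat.odd_iff.mp (hp.odd_of_ne_two hodd)
  have hm : 2 * (p/2) + 1 = p := by omega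
  intro k
  induction k with
  | zero => intro _; simp
  | succ k ih =>
    intro hk1
    have hk : k < p := by omega
    have ihk := ih hk
    have hkunit : ((k:ZMod p) + 1) ≠ 0 := by
      have : ((k+1 : ℕ) : ZMod p) ≠ 0 := by
        rw [Ne, ZMod.natCast_eq_zero_iff]
        intro hdvd
        have := Nat.le_of_dvd (by omega) hdvd
        omega
      push_cast at this; exact this
    apply mul_left_cancel₀ hkunit
    -- Nat identity for central binomials
    have hnat : ((k+1) * Nat.choose (2*(k+1)) (k+1) : ZMod p) = ((2 * (2*k+1) * Nat.choose (2*k) k : ℕ) : ZMod p) := by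
      exact_mod_cast congrArg (Nat.cast : ℕ → ZMod p) (Nat.succ_mul_centralBinom_succ k)
    push_cast at hnat
    have hL : ((k:ZMod p)+1) * (Nat.choose (2*(k+1)) (k+1) : ZMod p)
        = 2*(2*(k:ZMod p)+1) * (Nat.choose (2*k) k : ZMod p) := by
      linear_combination hnat
    rw [hL, ihk]
    -- now RHS: (k+1) * ((-4)^(k+1) * C(m, k+1)) = (-4)^(k+1) * (C(m,k+1)*(k+1))
    have hchoose : ((Nat.choose (p/2) (k+1) : ZMod p)) * ((k:ZMod p)+1)
        = (Nat.choose (p/2) k : ZMod p) * ((p/2 : ℕ) - (k:ZMod p)) := by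
      rcases le_or_gt k (p/2) with hle | hlt
      · have := congrArg (Nat.cast : ℕ → ZMod p) (Nat.choose_succ_right_eq (p/2) k)
        push_cast [Nat.cast_sub hle] at this
        linear_combination this
      · rw [Nat.choose_eq_zero_of_lt hlt, Nat.choose_eq_zero_of_lt (by omega)]
        simp
    have h2m : (2 : ZMod p) * ((p/2 : ℕ) : ZMod p) = -1 := by
      have : ((2 * (p/2) + 1 : ℕ) : ZMod p) = ((p:ℕ) : ZMod p) := by rw [hm]
      push_cast [ZMod.natCast_self] at this
      linear_combination this
    calc 2*(2*(k:ZMod p)+1) * ((-4)^k * (Nat.choose (p/2) k : ZMod p))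
        = (-4)^(k+1) * ((Nat.choose (p/2) k : ZMod p) * ((p/2 : ℕ) - (k:ZMod p))) := by
          rw [pow_succ]
          linear_combination 2 * ((-4:ZMod p))^k * (Nat.choose (p/2) k : ZMod p) * h2m
      _ = ((k:ZMod p)+1) * ((-4)^(k+1) * (Nat.choose (p/2) (k+1) : ZMod p)) := by
          rw [← hchoose]; ring


lemma fib_five : (Nat.fib 5 : ZMod 5) = 5 ^ (5/2) := by decide

lemma aux_fib {p : ℕ} [Fact p.Prime] (hodd : p ≠ 2) :
    (Nat.fib p : ZMod p) = 5 ^ (p/2) ∧ 2 * (Nat.fib (p+1) : ZMod p) - Nat.fib p = 1 := by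
  have hp := (Fact.out : p.Prime)
  set A := AdjoinRoot (X^2 - X - 1 : (ZMod p)[X]) with hA
  have hdeg : ((X^2 - X - 1 : (ZMod p)[X])).degree = 2 := by compute_degree!
  haveI : Nontrivial A := AdjoinRoot.nontrivial _ (by rw [hdeg]; norm_num)
  haveI : CharP A p := charP_of_injective_algebraMap' (A := A) (ZMod p) p
  have hinj : Function.Injective (algebraMap (ZMod p) A) := RingHom.injective _
  set α : A := AdjoinRoot.root _ with hα_def
  have hα : α^2 = α + 1 := by
    have h0 : (AdjoinRoot.mk (X^2 - X - 1 : (ZMod p)[X])) (X^2 - X - 1) = 0 := AdjoinRoot.mk_self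
    simp only [map_sub, map_pow, map_one, AdjoinRoot.mk_X] at h0
    linear_combination h0
  -- Binet-type identities
  have hfib : ∀ n : ℕ, (Nat.fib n : A) * (2*α - 1) = α^n - (1-α)^n := by
    intro n
    induction n using Nat.twoStepInduction with
    | zero => simp
    | one => simp [Nat.fib_one]; ring
    | more n ih1 ih2 =>
      rw [Nat.fib_add_two]
      push_cast
      linear_combination ih1 + ih2 + ((1-α)^n - α^n) * hα
  have hluc : ∀ n : ℕ, α^n + (1-α)^n = 2 * (Nat.fib (n+1) : A) - Nat.fib n := by
    intro n
    induction n using Nat.twoStepInduction with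
    | zero => norm_num
    | one => norm_num [Nat.fib_one, Nat.fib_two]
    | more n ih1 ih2 =>
      have h32' : Nat.fib (n+1+1) = Nat.fib n + Nat.fib (n+1) := Nat.fib_add_two
      have h33' : Nat.fib (n+2+1) = Nat.fib (n+1) + Nat.fib (n+1+1) := Nat.fib_add_two
      have h32 : (Nat.fib (n+1+1) : A) = (Nat.fib n : A) + (Nat.fib (n+1) : A) := by
        rw [h32']; push_cast; ring
      have h33 : (Nat.fib (n+2+1) : A) = (Nat.fib (n+1) : A) + (Nat.fib (n+1+1) : A) := by
        rw [h33']; push_cast; ring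
      have h34 : (Nat.fib (n+2) : A) = (Nat.fib n : A) + (Nat.fib (n+1) : A) := h32
      linear_combination ih1 + ih2 + (α^n + (1-α)^n) * hα - 2*h33 + h34
  -- Frobenius
  have hfrob1 : α^p + (1-α)^p = 1 := by
    have := add_pow_char (p := p) α (1-α)
    rw [show α + (1-α) = 1 from by ring, one_pow] at this
    exact this.symm
  have hfrob2 : (2*α-1)^p = α^p - (1-α)^p := by
    have := sub_pow_char (p := p) α (1-α)
    rw [show α - (1-α) = 2*α-1 from by ring] at this
    exact this
  have hsq : (2*α-1)^2 = 5 := by linear_combination 4 * hα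
  have hmod : p % 2 = 1 := Nat.odd_iff.mp (hp.odd_of_ne_two hodd)
  have hpow : (2*α-1)^p = (2*α-1) * 5^(p/2) := by
    have hd : (2*α-1)^p = ((2*α-1)^2)^(p/2) * (2*α-1) := by
      rw [← pow_mul, ← pow_succ]
      congr 1
      omega
    rw [hd, hsq]
    ring
  -- second conjunct
  have hconj2 : 2 * (Nat.fib (p+1) : ZMod p) - Nat.fib p = 1 := by
    apply hinj
    push_cast [map_sub, map_mul, map_one, map_ofNat, map_natCast]
    rw [← hluc p, hfrob1]
  refine ⟨?_, hconj2⟩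
  -- first conjunct
  by_cases hp5 : p = 5
  · subst hp5; exact fib_five
  · have key : ((Nat.fib p : ZMod p) - 5^(p/2)) * 5 = 0 := by
      apply hinj
      have h5 : (algebraMap (ZMod p) A) (((Nat.fib p : ZMod p) - 5^(p/2)) * 5)
          = ((Nat.fib p : A) - 5^(p/2)) * 5 := by
        push_cast [map_mul, map_sub, map_pow, map_ofNat, map_natCast]
        ring
      rw [h5, map_zero]
      have h1 : ((Nat.fib p : A) - 5^(p/2)) * (2*α-1) = 0 := by
        have := hfib p
        rw [← hfrob2, hpow] at this
        linear_combination this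
      have h2 := congrArg (· * (2*α-1)) h1
      simp only [zero_mul] at h2
      calc ((Nat.fib p : A) - 5^(p/2)) * 5 = ((Nat.fib p : A) - 5^(p/2)) * (2*α-1) * (2*α-1) := by
            rw [mul_assoc, ← hsq]; ring
        _ = 0 := by rw [h1, zero_mul]
    have h5ne : (5 : ZMod p) ≠ 0 := by
      have : ((5:ℕ) : ZMod p) ≠ 0 := by
        rw [Ne, ZMod.natCast_eq_zero_iff]
        intro hdvd
        exact hp5 ((Nat.prime_dvd_prime_iff_eq hp (by norm_num)).mp hdvd)
      exact_mod_cast this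
    have := mul_eq_zero.mp key
    rcases this with h | h
    · exact sub_eq_zero.mp h
    · exact absurd h h5ne

theorem stmt14 (p : ℕ) (hp : p.Prime) (hodd : p ≠ 2)
    (L : ℕ → ℤ) (hL0 : L 0 = 2) (hL1 : L 1 = 1)
    (hLrec : ∀ n : ℕ, 1 ≤ n → L (n + 1) = L n + L (n - 1)) :
    (∑ k ∈ Finset.range p,
      (Nat.fib k : ZMod p) * (Nat.choose (2 * k) k : ZMod p) *
        (((-4 : ZMod p)) ^ k)⁻¹) =
      (1 - ((@legendreSym 5 ⟨by norm_num⟩ p : ℤ) : ZMod p)) * (2 : ZMod p)⁻¹ ∧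
    (∑ k ∈ Finset.range p,
      (L k : ZMod p) * (Nat.choose (2 * k) k : ZMod p) *
        (((-4 : ZMod p)) ^ k)⁻¹) =
      (5 * ((@legendreSym 5 ⟨by norm_num⟩ p : ℤ) : ZMod p) - 1) * (2 : ZMod p)⁻¹ := by
  haveI : Fact p.Prime := ⟨hp⟩
  haveI : Fact (Nat.Prime 5) := ⟨by norm_num⟩
  have hmod : p % 2 = 1 := Nat.odd_iff.mp (hp.odd_of_ne_two hodd)
  have hm : 2 * (p/2) + 1 = p := by omega
  set ε : ZMod p := ((@legendreSym 5 ⟨by norm_num⟩ p : ℤ) : ZMod p) with hε_def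
  have hε : ε = (5 : ZMod p) ^ (p/2) := by
    have h2 : legendreSym p (5:ℤ) = legendreSym 5 (p:ℤ) := by
      exact_mod_cast legendreSym.quadratic_reciprocity_one_mod_four (p := 5) (q := p)
        (by norm_num) hodd
    have h1 := legendreSym.eq_pow p (5 : ℤ)
    rw [hε_def, ← h2, h1]
    norm_num
  obtain ⟨hf1, hf2⟩ := aux_fib (p := p) hodd
  rw [← hε] at hf1
  have hfibsplit : Nat.fib (p+1) = Nat.fib (p-1) + Nat.fib p := by
    have h := Nat.fib_add_two (n := p-1)
    rw [show p-1+2 = p+1 from by omega, show p-1+1 = p from by omega] at h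
    exact h
  set a : ZMod p := (Nat.fib (p-1) : ZMod p) with ha_def
  have ha2 : 2 * a = 1 - ε := by
    rw [hfibsplit] at hf2
    push_cast at hf2
    rw [hf1] at hf2
    linear_combination hf2
  have h2ne : (2 : ZMod p) ≠ 0 := by
    have : ((2:ℕ) : ZMod p) ≠ 0 := by
      rw [Ne, ZMod.natCast_eq_zero_iff]
      intro hdvd
      exact hodd ((Nat.prime_dvd_prime_iff_eq hp (by norm_num)).mp hdvd)
    exact_mod_cast this
  have hne4 : (-4 : ZMod p) ≠ 0 := by
    intro h
    apply h2ne
    have h4 : (4 : ZMod p) = 0 := by linear_combination -h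
    have : (2 : ZMod p) * 2 = 0 := by linear_combination h4
    rcases mul_eq_zero.mp this with h' | h' <;> exact h'
  have hterm : ∀ (c : ZMod p) (k : ℕ), k < p →
      c * (Nat.choose (2 * k) k : ZMod p) * ((-4:ZMod p)^k)⁻¹
      = (Nat.choose (p/2) k : ZMod p) * c := by
    intro c k hk
    rw [aux_central hodd k hk]
    have hpk : ((-4:ZMod p)^k) ≠ 0 := pow_ne_zero _ hne4
    field_simp
  have hsum : ∀ G : ℕ → ZMod p, (∀ n, G (n+2) = G (n+1) + G n) →
      ∑ k ∈ Finset.range p, (Nat.choose (p/2) k : ZMod p) * G k = G (p-1) := by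
    intro G hG
    rw [← Finset.sum_subset (Finset.range_subset_range.mpr (show p/2+1 ≤ p by omega))
      (fun k _ hk => by
        rw [Nat.choose_eq_zero_of_lt (by
          simp only [Finset.mem_range, not_lt] at hk; omega)]
        simp)]
    have h := aux_sum G hG (p/2) 0
    simp only [Nat.zero_add, zero_add] at h
    rw [h]
    congr 1
    omega
  have hLfib : ∀ n, L n = 2 * (Nat.fib (n+1) : ℤ) - Nat.fib n := by
    intro n
    induction n using Nat.twoStepInduction with
    | zero => simp [hL0]
    | one => simp [hL1, Nat.fib_one, Nat.fib_two]
    | more n ih1 ih2 =>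
      have hr := hLrec (n+1) (by omega)
      simp only [Nat.add_sub_cancel] at hr
      have h33' : Nat.fib (n+2+1) = Nat.fib (n+1) + Nat.fib (n+1+1) := Nat.fib_add_two
      have h32' : Nat.fib (n+1+1) = Nat.fib n + Nat.fib (n+1) := Nat.fib_add_two
      rw [hr, ih1, ih2, h33', h32']
      push_cast
      ring
  constructor
  · rw [Finset.sum_congr rfl (fun k hk => hterm _ k (Finset.mem_range.mp hk))]
    rw [hsum (fun k => (Nat.fib k : ZMod p)) (by
      intro n
      have h32' : Nat.fib (n+2) = Nat.fib n + Nat.fib (n+1) := Nat.fib_add_two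
      push_cast [h32']
      ring)]
    rw [eq_mul_inv_iff_mul_eq₀ h2ne]
    linear_combination ha2
  · rw [Finset.sum_congr rfl (fun k hk => hterm _ k (Finset.mem_range.mp hk))]
    rw [hsum (fun k => ((L k : ℤ) : ZMod p)) (by
      intro n
      have hr := hLrec (n+1) (by omega)
      simp only [Nat.add_sub_cancel] at hr
      have hr2 : L (n+2) = L (n+1) + L n := hr
      push_cast [hr2]
      ring)]
    have hL1' : ((L (p-1) : ℤ) : ZMod p) = 2 * ε - a := by
      have h := hLfib (p-1)
      rw [show p-1+1 = p from by omega] at h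
      rw [h]
      push_cast
      rw [hf1]
    rw [hL1', eq_mul_inv_iff_mul_eq₀ h2ne]
    linear_combination -ha2
end

section
/- Let p be an odd prime. Then Σ_{k=0}^{p-1} F_k · C(2k,k) / 8^k ≡ (2/p)·((p/5) - 1)/2 (mod p) and Σ_{k=0}^{p-1} L_k · C(2k,k) / 8^k ≡ (2/p)·(5(p/5) - 1)/2 (mod p). -/
open Finset Polynomial

instance : Fact (Nat.Prime 5) := ⟨by norm_num⟩


lemma cb_fact (k : ℕ) :
    Nat.choose (2*k) k * Nat.factorial k = 2^k * ∏ j ∈ Finset.range k, (2*j+1) := by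
  induction k with
  | zero => simp
  | succ k ih =>
    have h : (k+1) * ((2*(k+1)).choose (k+1)) = 2*(2*k+1) * ((2*k).choose k) := by
      have := Nat.succ_mul_centralBinom_succ k
      simpa [Nat.centralBinom] using this
    rw [Nat.factorial_succ, Finset.prod_range_succ]
    calc (2*(k+1)).choose (k+1) * ((k+1) * Nat.factorial k)
        = ((k+1) * ((2*(k+1)).choose (k+1))) * Nat.factorial k := by ring
      _ = (2*(2*k+1) * ((2*k).choose k)) * Nat.factorial k := by rw [h]
      _ = 2*(2*k+1) * ((2*k).choose k * Nat.factorial k) := by ring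
      _ = 2*(2*k+1) * (2^k * ∏ j ∈ Finset.range k, (2*j+1)) := by rw [ih]
      _ = 2^(k+1) * ((∏ j ∈ Finset.range k, (2*j+1)) * (2*k+1)) := by ring


lemma cb_eq (p : ℕ) (hp : p.Prime) (hodd : p ≠ 2) (k : ℕ) (hk : k ≤ p / 2) :
    ((Nat.choose (2*k) k : ℕ) : ZMod p) = (-4)^k * ((p/2).choose k : ZMod p) := by
  haveI : Fact p.Prime := ⟨hp⟩
  set m := p / 2 with hmdef
  have hm : 2*m + 1 = p := by
    have := hp.two_le
    have hpodd : p % 2 = 1 := Nat.odd_iff.mp (hp.odd_of_ne_two hodd)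
    omega
  have hkp : k < p := by omega
  have hfacne : ((Nat.factorial k : ℕ) : ZMod p) ≠ 0 := by
    rw [Ne, ZMod.natCast_eq_zero_iff]
    rw [Nat.Prime.dvd_factorial hp]
    omega
  have h2ne : ((2:ZMod p)) ≠ 0 := by
    have : ((2:ℕ) : ZMod p) ≠ 0 := by
      rw [Ne, ZMod.natCast_eq_zero_iff]
      intro h
      exact hodd ((Nat.prime_dvd_prime_iff_eq hp Nat.prime_two).mp h)
    simpa using this
  have h2kne : ((2:ZMod p))^k ≠ 0 := pow_ne_zero _ h2ne
  apply mul_right_cancel₀ hfacne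
  apply mul_right_cancel₀ h2kne
  have lhs_eq : ((Nat.choose (2*k) k : ℕ) : ZMod p) * (Nat.factorial k : ZMod p) * (2:ZMod p)^k
      = 4^k * ∏ j ∈ Finset.range k, ((2*j+1 : ℕ) : ZMod p) := by
    calc ((Nat.choose (2*k) k : ℕ) : ZMod p) * (Nat.factorial k : ZMod p) * (2:ZMod p)^k
        = ((Nat.choose (2*k) k * Nat.factorial k : ℕ) : ZMod p) * (2:ZMod p)^k := by push_cast; ring
      _ = ((2^k * ∏ j ∈ Finset.range k, (2*j+1) : ℕ) : ZMod p) * (2:ZMod p)^k := by rw [cb_fact]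
      _ = 4^k * ∏ j ∈ Finset.range k, ((2*j+1 : ℕ) : ZMod p) := by
          rw [Nat.cast_mul, Nat.cast_pow, Nat.cast_prod, Nat.cast_ofNat,
            show (4:ZMod p) = 2*2 by norm_num, mul_pow]
          ring
  have key' : ∏ j ∈ Finset.range k, ((2:ZMod p) * ((m : ZMod p) - (j:ZMod p)))
      = ∏ j ∈ Finset.range k, ((-1 : ZMod p) * ((2*j+1 : ℕ) : ZMod p)) := by
    apply Finset.prod_congr rfl
    intro j hj
    have h2m : ((2*m : ℕ) : ZMod p) = -1 := by
      have : ((2*m+1 : ℕ) : ZMod p) = ((p:ℕ) : ZMod p) := by rw [hm]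
      rw [ZMod.natCast_self] at this
      push_cast at this ⊢
      linear_combination this
    push_cast at h2m ⊢
    linear_combination h2m
  rw [Finset.prod_mul_distrib, Finset.prod_mul_distrib, Finset.prod_const, Finset.prod_const,
    Finset.card_range] at key'
  have rhs_eq : (-4:ZMod p)^k * ((m.choose k : ℕ) : ZMod p) * (Nat.factorial k : ZMod p) * (2:ZMod p)^k
      = 4^k * ∏ j ∈ Finset.range k, ((2*j+1 : ℕ) : ZMod p) := by
    have hdesc : ((m.descFactorial k : ℕ) : ZMod p)
        = ∏ j ∈ Finset.range k, ((m : ZMod p) - (j:ZMod p)) := by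
      rw [Nat.descFactorial_eq_prod_range]
      push_cast
      apply Finset.prod_congr rfl
      intro j hj
      have hj' : j < k := Finset.mem_range.mp hj
      rw [Nat.cast_sub (by omega)]
    have hcf : ((m.choose k : ℕ) : ZMod p) * (Nat.factorial k : ZMod p)
        = ∏ j ∈ Finset.range k, ((m : ZMod p) - (j:ZMod p)) := by
      rw [← hdesc, Nat.descFactorial_eq_factorial_mul_choose]
      push_cast
      ring
    calc (-4:ZMod p)^k * ((m.choose k : ℕ) : ZMod p) * (Nat.factorial k : ZMod p) * (2:ZMod p)^k
        = (-4:ZMod p)^k * ((2:ZMod p)^k * (((m.choose k : ℕ) : ZMod p) * (Nat.factorial k : ZMod p))) := by ring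
      _ = (-4:ZMod p)^k * ((2:ZMod p)^k * ∏ j ∈ Finset.range k, ((m : ZMod p) - (j:ZMod p))) := by rw [hcf]
      _ = (-4:ZMod p)^k * ((-1)^k * ∏ j ∈ Finset.range k, ((2*j+1 : ℕ) : ZMod p)) := by rw [key']
      _ = 4^k * ∏ j ∈ Finset.range k, ((2*j+1 : ℕ) : ZMod p) := by
          rw [← mul_assoc, ← mul_pow, show ((-4:ZMod p) * -1) = 4 by norm_num]
  rw [lhs_eq, rhs_eq]


lemma cb_zero (p : ℕ) (hp : p.Prime) (k : ℕ) (hk1 : p / 2 < k) (hk2 : k < p) :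
    ((Nat.choose (2*k) k : ℕ) : ZMod p) = 0 := by
  rw [ZMod.natCast_eq_zero_iff]
  have h1 : p ∣ Nat.factorial (2*k) := Nat.dvd_factorial hp.pos (by omega)
  have h2 : ¬ p ∣ Nat.factorial k := by
    rw [Nat.Prime.dvd_factorial hp]; omega
  have h3 := Nat.choose_mul_factorial_mul_factorial (show k ≤ 2*k by omega)
  rw [show 2*k - k = k by omega] at h3
  rw [← h3] at h1
  rcases (Nat.Prime.dvd_mul hp).mp h1 with h | h
  · rcases (Nat.Prime.dvd_mul hp).mp h with h' | h'
    · exact h'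
    · exact absurd h' h2
  · exact absurd h h2

lemma cb_sum (p : ℕ) (hp : p.Prime) (hodd : p ≠ 2)
    (R : Type) [CommRing R] [Algebra (ZMod p) R] (t : R) :
    ∑ k ∈ Finset.range p, ((Nat.choose (2*k) k : ℕ) : R) * t^k = (1 - 4*t)^(p/2) := by
  set m := p / 2 with hmdef
  have hmp : m + 1 ≤ p := by
    have := hp.two_le
    omega
  have hcast : ∀ n : ℕ, ((n : ℕ) : R) = algebraMap (ZMod p) R ((n : ℕ) : ZMod p) := by
    intro n; rw [map_natCast]
  have hsplit : ∑ k ∈ Finset.range p, ((Nat.choose (2*k) k : ℕ) : R) * t^k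
      = ∑ k ∈ Finset.range (m+1), ((Nat.choose (2*k) k : ℕ) : R) * t^k := by
    symm
    apply Finset.sum_subset (Finset.range_subset_range.mpr hmp)
    intro k hk hk'
    have h1 : m < k := by simpa using hk'
    have h2 : k < p := by simpa using hk
    rw [hcast, cb_zero p hp k h1 h2, map_zero, zero_mul]
  rw [hsplit]
  have hterm : ∀ k ∈ Finset.range (m+1),
      ((Nat.choose (2*k) k : ℕ) : R) * t^k = (-4*t)^k * 1^(m-k) * (m.choose k : R) := by
    intro k hk
    have hk' : k ≤ m := by simpa using Nat.lt_succ_iff.mp (Finset.mem_range.mp hk)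
    rw [hcast, cb_eq p hp hodd k hk', map_mul, map_pow, map_natCast, map_neg, map_ofNat,
      mul_pow, one_pow]
    ring
  rw [Finset.sum_congr rfl hterm, ← add_pow]
  ring_nf


lemma main_ne5 (p : ℕ) (hp : p.Prime) (hodd : p ≠ 2) (h5 : p ≠ 5)
    (L : ℕ → ℤ) (hL0 : L 0 = 2) (hL1 : L 1 = 1)
    (hLrec : ∀ n : ℕ, 1 ≤ n → L (n + 1) = L n + L (n - 1)) :
    (∑ k ∈ Finset.range p,
      (Nat.fib k : ZMod p) * (Nat.choose (2 * k) k : ZMod p) * ((8 : ZMod p) ^ k)⁻¹) =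
      ((@legendreSym p ⟨hp⟩ 2 : ℤ) : ZMod p) *
        ((((@legendreSym p ⟨hp⟩ 5 : ℤ) : ZMod p) - 1) * (2 : ZMod p)⁻¹) ∧
    (∑ k ∈ Finset.range p,
      (L k : ZMod p) * (Nat.choose (2 * k) k : ZMod p) * ((8 : ZMod p) ^ k)⁻¹) =
      ((@legendreSym p ⟨hp⟩ 2 : ℤ) : ZMod p) *
        ((5 * ((@legendreSym p ⟨hp⟩ 5 : ℤ) : ZMod p) - 1) * (2 : ZMod p)⁻¹) := by
  haveI : Fact p.Prime := ⟨hp⟩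
  set m := p / 2 with hmdef
  have hm : 2*m + 1 = p := by
    have := hp.two_le
    have hpodd : p % 2 = 1 := Nat.odd_iff.mp (hp.odd_of_ne_two hodd)
    omega
  -- basic nonvanishing
  have h2ne : ((2:ZMod p)) ≠ 0 := by
    have : ((2:ℤ) : ZMod p) ≠ 0 := by
      rw [Ne, ZMod.intCast_zmod_eq_zero_iff_dvd]
      intro h
      have h2 : p ∣ 2 := by exact_mod_cast h
      have := Nat.le_of_dvd (by norm_num) h2
      have := hp.two_le
      exact hodd (by omega)
    simpa using this
  have h5ne : ((5:ZMod p)) ≠ 0 := by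
    have : ((5:ℤ) : ZMod p) ≠ 0 := by
      rw [Ne, ZMod.intCast_zmod_eq_zero_iff_dvd]
      intro h
      have h2 : p ∣ 5 := by exact_mod_cast h
      exact h5 ((Nat.prime_dvd_prime_iff_eq hp (by norm_num)).mp h2)
    simpa using this
  -- legendre constants
  set eK : ZMod p := ((@legendreSym p ⟨hp⟩ 2 : ℤ) : ZMod p) with heKdef
  set dK : ZMod p := ((@legendreSym p ⟨hp⟩ 5 : ℤ) : ZMod p) with hdKdef
  have he : eK = 2 ^ m := by
    rw [heKdef, legendreSym.eq_pow]
    push_cast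
    rfl
  have hd : dK = 5 ^ m := by
    rw [hdKdef, legendreSym.eq_pow]
    push_cast
    rfl
  have he2 : eK * eK = 1 := by
    have := legendreSym.sq_one p (a := 2) (by push_cast; exact h2ne)
    have h2 : ((legendreSym p 2 ^ 2 : ℤ) : ZMod p) = ((1:ℤ) : ZMod p) := by rw [this]
    push_cast at h2
    rw [heKdef]
    linear_combination h2
  -- the quadratic extension
  set f : (ZMod p)[X] := X^2 - C 5 with hfdef
  have hdegf : f.degree = 2 := by
    rw [hfdef]
    compute_degree!
  haveI : Nontrivial (AdjoinRoot f) := AdjoinRoot.nontrivial f (by rw [hdegf]; norm_num)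
  set R := AdjoinRoot f with hRdef
  set σ : ZMod p →+* R := algebraMap (ZMod p) R with hσdef
  have hinj : Function.Injective σ := σ.injective
  haveI : CharP R p := charP_of_injective_algebraMap hinj p
  set s : R := AdjoinRoot.root f with hsdef
  have hs : s^2 = 5 := by
    have h0 := AdjoinRoot.eval₂_root f
    rw [hfdef] at h0
    simp only [eval₂_sub, eval₂_pow, eval₂_X, eval₂_C] at h0
    have : (AdjoinRoot.of f) 5 = (5 : R) := by
      rw [map_ofNat]
    rw [this] at h0
    rw [hsdef]
    linear_combination h0
  -- inverse of two
  set i2 : ZMod p := (2:ZMod p)⁻¹ with hi2def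
  have h2i2 : (2:ZMod p) * i2 = 1 := mul_inv_cancel₀ h2ne
  set w : R := σ i2 with hwdef
  have hw : (2:R) * w = 1 := by
    have := congrArg σ h2i2
    rw [map_mul, map_one, map_ofNat] at this
    exact this
  set u : R := 1 + s with hudef
  set v : R := 1 - s with hvdef
  have hu2 : u^2 = 2*u + 4 := by rw [hudef]; linear_combination hs
  have hv2 : v^2 = 2*v + 4 := by rw [hvdef]; linear_combination hs
  -- Binet-type identities
  have hbinet : ∀ k : ℕ, (u^k + v^k = 2^k * ((L k : ℤ) : R))
      ∧ (u^k - v^k = 2^k * ((Nat.fib k : ℕ) : R) * s) := by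
    intro k
    induction k using Nat.twoStepInduction with
    | zero =>
      constructor
      · rw [hL0]; push_cast; ring
      · simp
    | one =>
      constructor
      · rw [hL1]; push_cast; rw [hudef, hvdef]; ring
      · rw [Nat.fib_one]; push_cast; rw [hudef, hvdef]; ring
    | more k ih1 ih2 =>
      obtain ⟨ihL0, ihF0⟩ := ih1
      obtain ⟨ihL1, ihF1⟩ := ih2
      have e1 : u^(k+2) = 2*u^(k+1) + 4*u^k := by
        rw [show u^(k+2) = u^2*u^k by ring, hu2]; ring
      have e2 : v^(k+2) = 2*v^(k+1) + 4*v^k := by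
        rw [show v^(k+2) = v^2*v^k by ring, hv2]; ring
      have hLk : L (k+2) = L (k+1) + L k := by
        have := hLrec (k+1) (by omega)
        simpa using this
      have hFk : Nat.fib (k+2) = Nat.fib k + Nat.fib (k+1) := Nat.fib_add_two
      constructor
      · rw [e1, e2, hLk]
        push_cast
        linear_combination 2*ihL1 + 4*ihL0
      · rw [e1, e2, hFk]
        push_cast
        linear_combination 2*ihF1 + 4*ihF0
  -- rewrite the inverses in the goal
  have h8invK : i2^3 = ((8:ZMod p))⁻¹ := by
    rw [hi2def, inv_pow]
    norm_num
  have h8inv : ∀ k : ℕ, ((8:ZMod p)^k)⁻¹ = (i2^3)^k := by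
    intro k
    rw [← inv_pow, h8invK]
  -- per-term identities
  have hLterm : ∀ k : ℕ, ((L k : ℤ) : R) = (u^k + v^k) * w^k := by
    intro k
    have h1 := (hbinet k).1
    have h2 : ((2:R)*w)^k = 1 := by rw [hw, one_pow]
    calc ((L k : ℤ) : R) = ((2:R)*w)^k * ((L k : ℤ) : R) := by rw [h2, one_mul]
      _ = w^k * ((2:R)^k * ((L k : ℤ) : R)) := by rw [mul_pow]; ring
      _ = w^k * (u^k + v^k) := by rw [← h1]
      _ = (u^k + v^k) * w^k := by ring
  have hFterm : ∀ k : ℕ, ((Nat.fib k : ℕ) : R) * s = (u^k - v^k) * w^k := by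
    intro k
    have h1 := (hbinet k).2
    have h2 : ((2:R)*w)^k = 1 := by rw [hw, one_pow]
    calc ((Nat.fib k : ℕ) : R) * s = ((2:R)*w)^k * (((Nat.fib k : ℕ) : R) * s) := by
          rw [h2, one_mul]
      _ = w^k * ((2:R)^k * ((Nat.fib k : ℕ) : R) * s) := by rw [mul_pow]; ring
      _ = w^k * (u^k - v^k) := by rw [← h1]
      _ = (u^k - v^k) * w^k := by ring
  set t1 : R := u * w^4 with ht1def
  set t2 : R := v * w^4 with ht2def
  set SLK : ZMod p := ∑ k ∈ Finset.range p,
      (L k : ZMod p) * (Nat.choose (2*k) k : ZMod p) * (i2^3)^k with hSLKdef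
  set SFK : ZMod p := ∑ k ∈ Finset.range p,
      (Nat.fib k : ZMod p) * (Nat.choose (2*k) k : ZMod p) * (i2^3)^k with hSFKdef
  have hσSL : σ SLK = (1 - 4*t1)^m + (1 - 4*t2)^m := by
    rw [hSLKdef, map_sum]
    have hterm : ∀ k ∈ Finset.range p,
        σ ((L k : ZMod p) * (Nat.choose (2*k) k : ZMod p) * (i2^3)^k)
        = ((Nat.choose (2*k) k : ℕ) : R) * t1^k + ((Nat.choose (2*k) k : ℕ) : R) * t2^k := by
      intro k _
      simp only [map_mul, map_pow, map_intCast, map_natCast]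
      rw [← hwdef, hLterm k]
      simp only [ht1def, ht2def, mul_pow, ← pow_mul]
      ring
    rw [Finset.sum_congr rfl hterm, Finset.sum_add_distrib,
      cb_sum p hp hodd R t1, cb_sum p hp hodd R t2]
  have hσSF : s * σ SFK = (1 - 4*t1)^m - (1 - 4*t2)^m := by
    rw [hSFKdef, map_sum, Finset.mul_sum]
    have hterm : ∀ k ∈ Finset.range p,
        s * σ ((Nat.fib k : ZMod p) * (Nat.choose (2*k) k : ZMod p) * (i2^3)^k)
        = ((Nat.choose (2*k) k : ℕ) : R) * t1^k - ((Nat.choose (2*k) k : ℕ) : R) * t2^k := by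
      intro k _
      simp only [map_mul, map_pow, map_natCast]
      rw [← hwdef]
      rw [show s * (((Nat.fib k : ℕ) : R) * ((Nat.choose (2*k) k : ℕ) : R) * (w^3)^k)
          = (((Nat.fib k : ℕ) : R) * s) * (((Nat.choose (2*k) k : ℕ) : R) * (w^3)^k) from by ring,
        hFterm k]
      simp only [ht1def, ht2def, mul_pow, ← pow_mul]
      ring
    rw [Finset.sum_congr rfl hterm, Finset.sum_sub_distrib,
      cb_sum p hp hodd R t1, cb_sum p hp hodd R t2]
  -- identify the bases
  have h16w : (16:R) * w^4 = 1 := by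
    rw [show (16:R) = 2^4 by norm_num, ← mul_pow, hw, one_pow]
  have h8w : (8:R) * w^3 = 1 := by
    rw [show (8:R) = 2^3 by norm_num, ← mul_pow, hw, one_pow]
  have hcancel16 : ∀ a b : R, (16:R)*a = 16*b → a = b := by
    intro a b h
    calc a = ((16:R)*w^4)*a := by rw [h16w, one_mul]
      _ = w^4*((16:R)*a) := by ring
      _ = w^4*((16:R)*b) := by rw [h]
      _ = ((16:R)*w^4)*b := by ring
      _ = b := by rw [h16w, one_mul]
  have hbase1 : 1 - 4*t1 = v^2 * w^3 := by
    apply hcancel16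
    calc (16:R)*(1 - 4*t1) = 16 - 4*u*((16:R)*w^4) := by rw [ht1def]; ring
      _ = 16 - 4*u := by rw [h16w]; ring
      _ = 2*v^2 := by rw [hudef, hvdef]; linear_combination (-2:R)*hs
      _ = ((8:R)*w^3)*(2*v^2) := by rw [h8w, one_mul]
      _ = 16*(v^2*w^3) := by ring
  have hbase2 : 1 - 4*t2 = u^2 * w^3 := by
    apply hcancel16
    calc (16:R)*(1 - 4*t2) = 16 - 4*v*((16:R)*w^4) := by rw [ht2def]; ring
      _ = 16 - 4*v := by rw [h16w]; ring
      _ = 2*u^2 := by rw [hudef, hvdef]; linear_combination (-2:R)*hs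
      _ = ((8:R)*w^3)*(2*u^2) := by rw [h8w, one_mul]
      _ = 16*(u^2*w^3) := by ring
  -- powers of w
  have heKne : eK ≠ 0 := by
    intro h
    rw [h, zero_mul] at he2
    exact zero_ne_one he2
  have hiK : i2^(3*m) = eK := by
    have h2m : (2:ZMod p)^(3*m) = eK := by
      rw [show 3*m = m*3 by ring, pow_mul, ← he, show eK^3 = eK*(eK*eK) by ring, he2, mul_one]
    have hprod : eK * i2^(3*m) = 1 := by
      rw [← h2m, ← mul_pow, h2i2, one_pow]
    apply mul_left_cancel₀ heKne
    rw [hprod, he2]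
  have hwm : w^(3*m) = σ eK := by
    rw [hwdef, ← map_pow, hiK]
  have hT1 : (1 - 4*t1)^m = v^(2*m) * σ eK := by
    rw [hbase1, mul_pow, ← pow_mul, ← pow_mul, hwm]
  have hT2 : (1 - 4*t2)^m = u^(2*m) * σ eK := by
    rw [hbase2, mul_pow, ← pow_mul, ← pow_mul, hwm]
  -- Frobenius
  have h5R : (5:R) = σ (5:ZMod p) := by rw [map_ofNat]
  have hsp : s^p = σ dK * s := by
    have h1 : s^(2*m+1) = σ dK * s := by
      rw [pow_succ, pow_mul, hs, h5R, ← map_pow, ← hd]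
    rw [← congrArg (s ^ ·) hm]
    exact h1
  have hup : u^p = 1 + σ dK * s := by
    rw [hudef, add_pow_char, one_pow, hsp]
  have hvp : v^p = 1 - σ dK * s := by
    have hoddp : Odd p := hp.odd_of_ne_two hodd
    rw [hvdef, sub_eq_add_neg, add_pow_char, one_pow, hoddp.neg_pow, hsp]
    ring
  have huv : u * v = -4 := by
    rw [hudef, hvdef]
    linear_combination -hs
  have hA : (-4:R) * u^(2*m) = v * (1 + σ dK * s) := by
    calc (-4:R) * u^(2*m) = (u*v) * u^(2*m) := by rw [huv]
      _ = v * (u^(2*m) * u) := by ring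
      _ = v * u^(2*m+1) := by rw [pow_succ]
      _ = v * u^p := by rw [congrArg (u ^ ·) hm]
      _ = v * (1 + σ dK * s) := by rw [hup]
  have hB : (-4:R) * v^(2*m) = u * (1 - σ dK * s) := by
    calc (-4:R) * v^(2*m) = (u*v) * v^(2*m) := by rw [huv]
      _ = u * (v^(2*m) * v) := by ring
      _ = u * v^(2*m+1) := by rw [pow_succ]
      _ = u * v^p := by rw [congrArg (v ^ ·) hm]
      _ = u * (1 - σ dK * s) := by rw [hvp]
  -- final assembly
  have hm8 : σ (-8 : ZMod p) = (-8 : R) := by rw [map_neg, map_ofNat]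
  have hm20 : σ (-20 : ZMod p) = (-20 : R) := by rw [map_neg, map_ofNat]
  have h8Kne : (-8 : ZMod p) ≠ 0 := by
    have h8 : (8:ZMod p) ≠ 0 := by
      rw [show (8:ZMod p) = 2^3 by norm_num]
      exact pow_ne_zero _ h2ne
    exact neg_ne_zero.mpr h8
  have h20Kne : (-20 : ZMod p) ≠ 0 := by
    have h20 : (20:ZMod p) ≠ 0 := by
      rw [show (20:ZMod p) = 2^2*5 by norm_num]
      exact mul_ne_zero (pow_ne_zero _ h2ne) h5ne
    exact neg_ne_zero.mpr h20
  have hσtargetL : σ (eK*((5*dK - 1)*i2)) = σ eK * ((5*σ dK - 1)*w) := by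
    rw [map_mul, map_mul, map_sub, map_mul, map_one, map_ofNat, hwdef]
  have hσtargetF : σ (eK*((dK - 1)*i2)) = σ eK * ((σ dK - 1)*w) := by
    rw [map_mul, map_mul, map_sub, map_one, hwdef]
  have hs0 : s^2 - 5 = (0:R) := by rw [hs, sub_self]
  have hcalcL : (-8:R) * σ SLK = (-8:R) * (σ eK * ((5*σ dK - 1)*w)) := by
    calc (-8:R)*σ SLK
        = (-8:R)*((v^(2*m))*σ eK + (u^(2*m))*σ eK) := by rw [hσSL, hT1, hT2]
      _ = σ eK * (2*((-4:R)*v^(2*m)) + 2*((-4:R)*u^(2*m))) := by ring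
      _ = σ eK * (2*(u*(1 - σ dK*s)) + 2*(v*(1 + σ dK*s))) := by rw [hB, hA]
      _ = (-8:R)*(σ eK * ((5*σ dK - 1)*w)) := by
          rw [hudef, hvdef]
          linear_combination (-4*σ eK*σ dK)*hs + (4*σ eK*(5*σ dK - 1))*hw
  have hcalcF : (-20:R) * σ SFK = (-20:R) * (σ eK * ((σ dK - 1)*w)) := by
    calc (-20:R)*σ SFK
        = (-4:R)*(s*(s*σ SFK)) + (4*(σ SFK))*(s^2-5) := by ring
      _ = (-4:R)*(s*((v^(2*m))*σ eK - (u^(2*m))*σ eK)) + (4*(σ SFK))*(s^2-5) := by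
          rw [hσSF, hT1, hT2]
      _ = (-4:R)*(s*((v^(2*m))*σ eK - (u^(2*m))*σ eK)) := by rw [hs0]; ring
      _ = σ eK * (s*((-4:R)*v^(2*m)) - s*((-4:R)*u^(2*m))) := by ring
      _ = σ eK * (s*(u*(1 - σ dK*s)) - s*(v*(1 + σ dK*s))) := by rw [hB, hA]
      _ = (-20:R)*(σ eK * ((σ dK - 1)*w)) := by
          rw [hudef, hvdef]
          linear_combination (σ eK*(2 - 2*σ dK))*hs + (10*σ eK*(σ dK - 1))*hw
  have hLK : SLK = eK*((5*dK - 1)*i2) := by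
    apply mul_left_cancel₀ h8Kne
    apply hinj
    rw [map_mul, map_mul, hm8, hσtargetL]
    exact hcalcL
  have hFK : SFK = eK*((dK - 1)*i2) := by
    apply mul_left_cancel₀ h20Kne
    apply hinj
    rw [map_mul, map_mul, hm20, hσtargetF]
    exact hcalcF
  constructor
  · rw [Finset.sum_congr rfl (fun k _ => by rw [h8inv k] :
      ∀ k ∈ Finset.range p, (Nat.fib k : ZMod p) * (Nat.choose (2*k) k : ZMod p) * ((8:ZMod p)^k)⁻¹
        = (Nat.fib k : ZMod p) * (Nat.choose (2*k) k : ZMod p) * (i2^3)^k)]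
    exact hFK
  · rw [Finset.sum_congr rfl (fun k _ => by rw [h8inv k] :
      ∀ k ∈ Finset.range p, (L k : ZMod p) * (Nat.choose (2*k) k : ZMod p) * ((8:ZMod p)^k)⁻¹
        = (L k : ZMod p) * (Nat.choose (2*k) k : ZMod p) * (i2^3)^k)]
    exact hLK

theorem stmt15 (p : ℕ) (hp : p.Prime) (hodd : p ≠ 2)
    (L : ℕ → ℤ) (hL0 : L 0 = 2) (hL1 : L 1 = 1)
    (hLrec : ∀ n : ℕ, 1 ≤ n → L (n + 1) = L n + L (n - 1)) :
    (∑ k ∈ Finset.range p,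
      (Nat.fib k : ZMod p) * (Nat.choose (2 * k) k : ZMod p) *
        ((8 : ZMod p) ^ k)⁻¹) =
      ((@legendreSym p ⟨hp⟩ 2 : ℤ) : ZMod p) *
        ((((@legendreSym 5 ⟨by norm_num⟩ p : ℤ) : ZMod p) - 1) * (2 : ZMod p)⁻¹) ∧
    (∑ k ∈ Finset.range p,
      (L k : ZMod p) * (Nat.choose (2 * k) k : ZMod p) *
        ((8 : ZMod p) ^ k)⁻¹) =
      ((@legendreSym p ⟨hp⟩ 2 : ℤ) : ZMod p) *
        ((5 * ((@legendreSym 5 ⟨by norm_num⟩ p : ℤ) : ZMod p) - 1) * (2 : ZMod p)⁻¹) := by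
  haveI instp : Fact p.Prime := ⟨hp⟩
  rcases eq_or_ne p 5 with h5 | h5
  · subst h5
    have hL2 : L 2 = 3 := by have h := hLrec 1 (by norm_num); rw [hL1, hL0] at h; simpa using h
    have hL3 : L 3 = 4 := by have h := hLrec 2 (by norm_num); rw [hL2] at h; simpa [hL1] using h
    have hL4 : L 4 = 7 := by have h := hLrec 3 (by norm_num); rw [hL3] at h; simpa [hL2] using h
    have h52 : legendreSym 5 2 = -1 := by norm_num
    have h55 : legendreSym 5 ((5:ℕ):ℤ) = 0 := by norm_num
    have h5z : (5:ZMod 5) = 0 := by exact_mod_cast ZMod.natCast_self 5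
    have h8i : ∀ k : ℕ, ((8:ZMod 5)^k)⁻¹ = 2^k := by
      intro k
      rw [← inv_pow, ZMod.inv_eq_of_mul_eq_one 5 8 2 (by linear_combination 3*h5z)]
    have h2i : (2:ZMod 5)⁻¹ = 3 := ZMod.inv_eq_of_mul_eq_one 5 2 3 (by linear_combination h5z)
    simp only [Finset.sum_range_succ, Finset.sum_range_zero, h8i, hL0, hL1, hL2, hL3, hL4,
      h52, h55, h2i, show Nat.fib 0 = 0 from rfl, show Nat.fib 1 = 1 from rfl,
      show Nat.fib 2 = 1 from rfl, show Nat.fib 3 = 2 from rfl, show Nat.fib 4 = 3 from rfl,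
      show Nat.choose (2*0) 0 = 1 from rfl, show Nat.choose (2*1) 1 = 2 from rfl,
      show Nat.choose (2*2) 2 = 6 from rfl, show Nat.choose (2*3) 3 = 20 from rfl,
      show Nat.choose (2*4) 4 = 70 from rfl]
    constructor
    · push_cast
      linear_combination (741:ZMod 5)*h5z
    · push_cast
      linear_combination (1711:ZMod 5)*h5z
  · have hrec : legendreSym p 5 = legendreSym 5 p :=
      legendreSym.quadratic_reciprocity_one_mod_four (by norm_num) hodd
    have hmain := main_ne5 p hp hodd h5 L hL0 hL1 hLrec
    rw [hrec] at hmain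
    exact hmain
end

section
/- Let p be an odd prime. Then Σ_{k=0}^{p-1} P_k · C(2k,k) / (-2)^k ≡ 1 - (2/p) (mod p) and Σ_{k=0}^{p-1} Q_k · C(2k,k) / (-2)^k ≡ 4(2/p) - 2 (mod p), where P, Q are the Pell sequences. -/
open Polynomial

lemma aux_nat16 (k : ℕ) : (k+1) * Nat.choose (2*(k+1)) (k+1) = 2*(2*k+1) * Nat.choose (2*k) k := by
  have h1 := Nat.add_one_mul_choose_eq (2*k) k
  have h2 : (2*(k+1)).choose (k+1) = Nat.choose (2*k+1) k + Nat.choose (2*k+1) (k+1) := by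
    rw [show 2*(k+1) = (2*k+1)+1 by ring]
    exact Nat.choose_succ_succ _ _
  have h3 : Nat.choose (2*k+1) (k+1) = Nat.choose (2*k+1) k := by
    rw [show k+1 = (2*k+1) - k by omega]
    exact Nat.choose_symm (by omega)
  nlinarith [h1, h2, h3]

lemma aux_cb16 (p : ℕ) (hp : p.Prime) (hodd : p ≠ 2) :
    ∀ k, k < p → ((Nat.choose (2*k) k : ZMod p)) = (-4)^k * (Nat.choose (p/2) k : ZMod p) := by
  haveI : Fact p.Prime := ⟨hp⟩
  set m := p/2 with hm
  have hpm : p = 2*m+1 := by have := hp.two_le; have := hp.eq_one_or_self_of_dvd 2; omega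
  have hp0 : ((p:ℕ) : ZMod p) = 0 := ZMod.natCast_self p
  have hm4 : (2*(m:ZMod p)+1) = 0 := by
    have : ((2*m+1 : ℕ) : ZMod p) = 0 := by rw [← hpm]; exact hp0
    push_cast at this; exact this
  intro k
  induction k with
  | zero => intro _; simp
  | succ k ih =>
    intro hk1
    have hk : k < p := by omega
    have ihk := ih hk
    have hne : ((k:ZMod p)+1) ≠ 0 := by
      have : (((k+1:ℕ)) : ZMod p) ≠ 0 := by
        rw [Ne, ZMod.natCast_eq_zero_iff]
        intro h; have := Nat.le_of_dvd (by omega) h; omega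
      push_cast at this; exact this
    apply mul_left_cancel₀ hne
    have hnat := aux_nat16 k
    have hcast : ((k:ZMod p)+1) * (Nat.choose (2*(k+1)) (k+1) : ZMod p)
        = 2*(2*(k:ZMod p)+1) * (Nat.choose (2*k) k : ZMod p) := by
      have := congrArg (fun n : ℕ => (n : ZMod p)) hnat
      push_cast at this; linear_combination this
    rw [hcast, ihk]
    symm
    have hrt : (Nat.choose m (k+1) : ZMod p) * ((k:ZMod p)+1) = (Nat.choose m k : ZMod p) * ((m - k : ℕ) : ZMod p) := by
      have := congrArg (fun n : ℕ => (n : ZMod p)) (Nat.choose_succ_right_eq m k)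
      push_cast at this; linear_combination this
    have key : (2*(2*(k:ZMod p)+1)) * (Nat.choose m k : ZMod p) = (-4) * ((m-k : ℕ) : ZMod p) * (Nat.choose m k : ZMod p) := by
      rcases lt_trichotomy k m with h | h | h
      · have : ((m - k : ℕ) : ZMod p) = (m:ZMod p) - k := by
          push_cast [Nat.cast_sub h.le]; ring
        rw [this]; ring_nf; linear_combination (2 * (Nat.choose m k : ZMod p)) * hm4
      · rw [h, Nat.sub_self]
        simp only [Nat.cast_zero]
        linear_combination (2 * (Nat.choose m m : ZMod p)) * hm4
      · rw [Nat.choose_eq_zero_of_lt h]; simp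
    calc ((k:ZMod p)+1) * ((-4)^(k+1) * (Nat.choose m (k+1) : ZMod p))
        = (-4)^k * (-4) * ((Nat.choose m (k+1) : ZMod p) * ((k:ZMod p)+1)) := by ring
      _ = (-4)^k * (-4) * ((Nat.choose m k : ZMod p) * ((m-k:ℕ) : ZMod p)) := by rw [hrt]
      _ = (-4)^k * ((-4) * ((m-k:ℕ):ZMod p) * (Nat.choose m k : ZMod p)) := by ring
      _ = (-4)^k * ((2*(2*(k:ZMod p)+1)) * (Nat.choose m k : ZMod p)) := by rw [key]
      _ = 2*(2*(k:ZMod p)+1) * ((-4)^k * (Nat.choose m k:ZMod p)) := by ring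

theorem stmt16 (p : ℕ) (hp : p.Prime) (hodd : p ≠ 2)
    (P Q : ℕ → ℤ) (hP0 : P 0 = 0) (hP1 : P 1 = 1)
    (hPrec : ∀ n : ℕ, 1 ≤ n → P (n + 1) = 2 * P n + P (n - 1))
    (hQ0 : Q 0 = 2) (hQ1 : Q 1 = 2)
    (hQrec : ∀ n : ℕ, 1 ≤ n → Q (n + 1) = 2 * Q n + Q (n - 1)) :
    (∑ k ∈ Finset.range p,
      (P k : ZMod p) * (Nat.choose (2 * k) k : ZMod p) * (((-2 : ZMod p)) ^ k)⁻¹) =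
      1 - ((@legendreSym p ⟨hp⟩ 2 : ℤ) : ZMod p) ∧
    (∑ k ∈ Finset.range p,
      (Q k : ZMod p) * (Nat.choose (2 * k) k : ZMod p) * (((-2 : ZMod p)) ^ k)⁻¹) =
      4 * ((@legendreSym p ⟨hp⟩ 2 : ℤ) : ZMod p) - 2 := by
  haveI : Fact p.Prime := ⟨hp⟩
  have hcb := aux_cb16 p hp hodd
  set m := p/2 with hm
  have hpm : p = 2*m+1 := by have := hp.two_le; have := hp.eq_one_or_self_of_dvd 2; omega
  set R := AdjoinRoot (X^2 - C (2:ZMod p)) with hR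
  haveI : Nontrivial R := by
    apply AdjoinRoot.nontrivial
    rw [Polynomial.degree_X_pow_sub_C (by norm_num)]
    norm_num
  set φ : ZMod p →+* R := algebraMap (ZMod p) R with hφ
  have hinj : Function.Injective φ := φ.injective
  haveI : CharP R p := charP_of_injective_algebraMap hinj p
  set s : R := AdjoinRoot.root _ with hs
  have hs2 : s^2 = 2 := by
    have := AdjoinRoot.eval₂_root (X^2 - C (2:ZMod p))
    have h2 : s^2 - 2 = 0 := by
      have h := this; simp only [eval₂_sub, eval₂_X_pow, eval₂_C] at h
      rw [← h]; congr 1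
    linear_combination h2
  have hφint : ∀ n : ℤ, φ ((n : ZMod p)) = (n : R) := fun n => map_intCast φ n
  -- the universal sum identity
  have hsum : ∀ x : R, ∑ k ∈ Finset.range p, (Nat.choose (2*k) k : R) * x^k = (1 - 4*x)^m := by
    intro x
    have h1 : ∀ k ∈ Finset.range p, (Nat.choose (2*k) k : R) * x^k
        = (Nat.choose m k : R) * ((-4)*x)^k := by
      intro k hk
      rw [Finset.mem_range] at hk
      have h0 : (Nat.choose (2*k) k : R) = φ ((Nat.choose (2*k) k : ZMod p)) := by
        rw [map_natCast]
      rw [h0, hcb k hk]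
      rw [map_mul, map_pow, map_natCast]
      have h4 : φ (-4) = (-4 : R) := by
        rw [show ((-4 : ZMod p)) = ((-4 : ℤ) : ZMod p) by norm_num, hφint]; norm_num
      rw [h4, mul_pow]; ring
    rw [Finset.sum_congr rfl h1]
    have h2 : ∑ k ∈ Finset.range p, (Nat.choose m k : R) * ((-4)*x)^k
        = ∑ k ∈ Finset.range (m+1), (Nat.choose m k : R) * ((-4)*x)^k := by
      symm
      apply Finset.sum_subset
      · intro i hi; rw [Finset.mem_range] at *; omega
      · intro i _ hi
        rw [Finset.mem_range, not_lt] at hi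
        rw [Nat.choose_eq_zero_of_lt (by omega)]
        simp
    rw [h2]
    have h3 := add_pow ((-4)*x) 1 m
    simp only [one_pow, mul_one] at h3
    rw [show (1 : R) - 4*x = (-4)*x + 1 by ring, h3]
    apply Finset.sum_congr rfl
    intro k _; ring
  -- Pell representation
  set a : R := 1 + s with ha
  set b : R := 1 - s with hb
  have ha2 : a^2 = 2*a+1 := by rw [ha]; linear_combination hs2
  have hb2 : b^2 = 2*b+1 := by rw [hb]; linear_combination hs2
  have hPQ : ∀ k, ((P k : R) * (2*s) = a^k - b^k) ∧ ((Q k : R) = a^k + b^k) := by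
    have key : ∀ k, (((P k : R) * (2*s) = a^k - b^k) ∧ ((Q k : R) = a^k + b^k)) ∧
        (((P (k+1) : R) * (2*s) = a^(k+1) - b^(k+1)) ∧ ((Q (k+1) : R) = a^(k+1) + b^(k+1))) := by
      intro k
      induction k with
      | zero =>
        refine ⟨⟨?_, ?_⟩, ?_, ?_⟩
        · rw [hP0]; simp
        · rw [hQ0]; push_cast; norm_num
        · rw [hP1]; rw [ha, hb]; push_cast; ring
        · rw [hQ1]; rw [ha, hb]; push_cast; ring
      | succ k ih =>
        obtain ⟨⟨ih1, ih2⟩, ih3, ih4⟩ := ih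
        have haa : a^(k+2) = 2*a^(k+1) + a^k := by
          calc a^(k+2) = a^2 * a^k := by ring
          _ = (2*a+1) * a^k := by rw [ha2]
          _ = 2*a^(k+1)+a^k := by ring
        have hbb : b^(k+2) = 2*b^(k+1) + b^k := by
          calc b^(k+2) = b^2 * b^k := by ring
          _ = (2*b+1) * b^k := by rw [hb2]
          _ = 2*b^(k+1)+b^k := by ring
        refine ⟨⟨ih3, ih4⟩, ?_, ?_⟩
        · have hr := hPrec (k+1) (by omega)
          simp only [Nat.add_sub_cancel] at hr
          rw [show k+1+1 = k+2 by ring, hr]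
          push_cast
          rw [haa, hbb]
          have hc2 : ((2 * P (k+1) : ℤ) : R) = 2 * (P (k+1) : R) :=
            (Int.cast_mul (α := R) 2 (P (k+1))).trans
              (congrArg (fun y : R => y * (P (k+1) : R)) (Int.cast_two (R := R)))
          rw [hc2]
          linear_combination 2*ih3 + ih1
        · have hr := hQrec (k+1) (by omega)
          simp only [Nat.add_sub_cancel] at hr
          rw [show k+1+1 = k+2 by ring, hr]
          push_cast
          rw [haa, hbb]
          have hc2 : ((2 * Q (k+1) : ℤ) : R) = 2 * (Q (k+1) : R) :=
            (Int.cast_mul (α := R) 2 (Q (k+1))).trans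
              (congrArg (fun y : R => y * (Q (k+1) : R)) (Int.cast_two (R := R)))
          rw [hc2]
          linear_combination 2*ih4 + ih2
    exact fun k => (key k).1
  -- nonzero constants
  have h2ne : (2 : ZMod p) ≠ 0 := by
    have : ((2:ℕ) : ZMod p) ≠ 0 := by
      rw [Ne, ZMod.natCast_eq_zero_iff]
      intro h
      exact hodd ((Nat.prime_dvd_prime_iff_eq hp Nat.prime_two).mp h)
    simpa using this
  have h4ne : (4 : ZMod p) ≠ 0 := by
    have : (4 : ZMod p) = 2 * 2 := by norm_num
    rw [this]; exact mul_ne_zero h2ne h2ne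
  have hneg2ne : (-2 : ZMod p) ≠ 0 := neg_ne_zero.mpr h2ne
  have hφ2 : φ 2 = (2:R) := by have := hφint 2; push_cast at this; exact this
  have hφ4 : φ 4 = (4:R) := by have := hφint 4; push_cast at this; exact this
  -- cancellation of (2*s)
  have hcancel : ∀ x y : R, x * (2*s) = y * (2*s) → x = y := by
    intro x y hxy
    have h1 : x * (2*s) * s = y * (2*s) * s := by rw [hxy]
    have h2 : x * φ 4 = y * φ 4 := by
      rw [hφ4]
      linear_combination h1 - (2*x - 2*y) * hs2
    have h3 := congrArg (· * φ (4⁻¹)) h2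
    rwa [mul_assoc, mul_assoc, ← map_mul, mul_inv_cancel₀ h4ne, map_one, mul_one, mul_one] at h3
  -- Frobenius
  have hsp : s^p = φ ((2:ZMod p)^m) * s := by
    have h0 : s^p = s^(2*m+1) := congrArg (fun n => s^n) hpm
    rw [h0, pow_succ, pow_mul, hs2, map_pow, hφ2]
  have hap : a^p = 1 + s^p := by rw [ha, add_pow_char, one_pow]
  have hbp : b^p = 1 - s^p := by rw [hb, sub_pow_char, one_pow]
  -- inverses of a and b
  have hainv : a * (s - 1) = 1 := by rw [ha]; linear_combination hs2
  have hbinv : b * (-(1+s)) = 1 := by rw [hb]; linear_combination hs2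
  have hp1 : p - 1 + 1 = p := by have := hp.two_le; omega
  have hapm1 : ∀ z : R, a^p = z → a^(p-1) = z * (s-1) := by
    intro z hz
    have e : a^(p-1+1) = a^p := congrArg (fun n => a^n) hp1
    calc a^(p-1) = a^(p-1) * (a * (s-1)) := by rw [hainv, mul_one]
    _ = a^(p-1+1) * (s-1) := by rw [pow_succ a (p-1)]; ring
    _ = a^p * (s-1) := by rw [e]
    _ = z * (s-1) := by rw [hz]
  have hbpm1 : ∀ z : R, b^p = z → b^(p-1) = z * (-(1+s)) := by
    intro z hz
    have e : b^(p-1+1) = b^p := congrArg (fun n => b^n) hp1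
    calc b^(p-1) = b^(p-1) * (b * (-(1+s))) := by rw [hbinv, mul_one]
    _ = b^(p-1+1) * (-(1+s)) := by rw [pow_succ b (p-1)]; ring
    _ = b^p * (-(1+s)) := by rw [e]
    _ = z * (-(1+s)) := by rw [hz]
  -- legendre
  have heuler : ((legendreSym p 2 : ℤ) : ZMod p) = (2:ZMod p)^m := by
    rw [legendreSym.eq_pow, hm]; norm_num
  have hεcases : legendreSym p 2 = 1 ∨ legendreSym p 2 = -1 := by
    apply legendreSym.eq_one_or_neg_one
    push_cast; exact h2ne
  -- rewrite sums
  set c : ZMod p := (-2 : ZMod p)⁻¹ with hc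
  have hc1 : (-2 : ZMod p) * c = 1 := mul_inv_cancel₀ hneg2ne
  set c' : R := φ c with hc'def
  have hc'1 : (-2 : R) * c' = 1 := by
    have := congrArg φ hc1
    rw [map_mul, map_one] at this
    rw [show ((-2:ZMod p)) = ((-2:ℤ):ZMod p) by norm_num, hφint] at this
    push_cast at this
    exact this
  have h1a : (1 : R) - 4*(a*c') = a^2 := by linear_combination (2*a)*hc'1 - ha2
  have h1b : (1 : R) - 4*(b*c') = b^2 := by linear_combination (2*b)*hc'1 - hb2
  have hSP : φ (∑ k ∈ Finset.range p,
      (P k : ZMod p) * (Nat.choose (2 * k) k : ZMod p) * c^k) * (2*s)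
      = a^(p-1) - b^(p-1) := by
    rw [map_sum, Finset.sum_mul]
    have hterm : ∀ k ∈ Finset.range p,
        φ ((P k : ZMod p) * (Nat.choose (2 * k) k : ZMod p) * c^k) * (2*s)
        = (Nat.choose (2*k) k : R) * (a*c')^k - (Nat.choose (2*k) k : R) * (b*c')^k := by
      intro k _
      rw [map_mul, map_mul, map_pow, hφint, map_natCast, ← hc'def]
      have := (hPQ k).1
      calc (P k : R) * (Nat.choose (2*k) k : R) * c'^k * (2*s)
          = ((P k : R) * (2*s)) * (Nat.choose (2*k) k : R) * c'^k := by ring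
        _ = (a^k - b^k) * (Nat.choose (2*k) k : R) * c'^k := by rw [this]
        _ = (Nat.choose (2*k) k : R) * (a*c')^k - (Nat.choose (2*k) k : R) * (b*c')^k := by
            rw [mul_pow, mul_pow]; ring
    rw [Finset.sum_congr rfl hterm, Finset.sum_sub_distrib, hsum (a*c'), hsum (b*c'),
      h1a, h1b, ← pow_mul, ← pow_mul]
    congr 2 <;> omega
  have hSQ : φ (∑ k ∈ Finset.range p,
      (Q k : ZMod p) * (Nat.choose (2 * k) k : ZMod p) * c^k)
      = a^(p-1) + b^(p-1) := by
    rw [map_sum]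
    have hterm : ∀ k ∈ Finset.range p,
        φ ((Q k : ZMod p) * (Nat.choose (2 * k) k : ZMod p) * c^k)
        = (Nat.choose (2*k) k : R) * (a*c')^k + (Nat.choose (2*k) k : R) * (b*c')^k := by
      intro k _
      rw [map_mul, map_mul, map_pow, hφint, map_natCast, ← hc'def]
      have := (hPQ k).2
      rw [this, mul_pow, mul_pow]; ring
    rw [Finset.sum_congr rfl hterm, Finset.sum_add_distrib, hsum (a*c'), hsum (b*c'),
      h1a, h1b, ← pow_mul, ← pow_mul]
    congr 2 <;> omega
  -- rewrite the goal's inverse powers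
  have hgoal : ∀ k : ℕ, (((-2 : ZMod p)) ^ k)⁻¹ = c^k := by
    intro k; rw [hc, inv_pow]
  simp only [hgoal]
  -- case split
  rcases hεcases with hε | hε
  · -- legendre = 1
    have h2m : φ ((2:ZMod p)^m) = 1 := by
      rw [← heuler, hε]; push_cast; exact map_one φ
    have hsps : s^p = s := by rw [hsp, h2m, one_mul]
    have ha' : a^(p-1) = 1 := by
      rw [hapm1 a (by rw [hap, hsps, ha])]
      exact hainv
    have hb' : b^(p-1) = 1 := by
      rw [hbpm1 b (by rw [hbp, hsps, hb])]
      exact hbinv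
    rw [ha', hb'] at hSP hSQ
    have h0 : (1 : ZMod p) - ((legendreSym p 2 : ℤ) : ZMod p) = 0 := by
      rw [hε]; norm_num
    have h0' : 4 * ((legendreSym p 2 : ℤ) : ZMod p) - 2 = 2 := by
      rw [hε]; norm_num
    constructor
    · rw [h0]
      apply hinj
      apply hcancel
      rw [hSP, map_zero]
      ring
    · rw [h0']
      apply hinj
      rw [hSQ, hφ2]
      ring
  · -- legendre = -1
    have h2m : φ ((2:ZMod p)^m) = -1 := by
      rw [← heuler, hε, hφint]
      norm_num
    have hsps : s^p = -s := by rw [hsp, h2m]; ring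
    have ha' : a^(p-1) = 2*s - 3 := by
      rw [hapm1 b (by rw [hap, hsps, hb]; ring)]
      rw [hb]; linear_combination -hs2
    have hb' : b^(p-1) = -3 - 2*s := by
      rw [hbpm1 a (by rw [hbp, hsps, ha]; ring)]
      rw [ha]; linear_combination -hs2
    rw [ha', hb'] at hSP hSQ
    have h0 : (1 : ZMod p) - ((legendreSym p 2 : ℤ) : ZMod p) = 2 := by
      rw [hε]; push_cast; ring
    have h0' : 4 * ((legendreSym p 2 : ℤ) : ZMod p) - 2 = -6 := by
      rw [hε]; push_cast; ring
    have hφn6 : φ (-6) = (-6 : R) := by have := hφint (-6); push_cast at this; exact this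
    constructor
    · rw [h0]
      apply hinj
      apply hcancel
      rw [hSP, hφ2]
      ring
    · rw [h0']
      apply hinj
      rw [hSQ, hφn6]
      ring
end

section
/- Let p > 3 be a prime. Then Σ_{k=0}^{p-1} S_k · C(2k,k) ≡ 2((p/3) - (-1/p)) (mod p) and Σ_{k=0}^{p-1} T_k · C(2k,k) ≡ 8(-1/p) - 6(p/3) (mod p), where S_n = u_n(4,1), T_n = v_n(4,1). -/
open Polynomial Finset

/-- Closed form for the linear recurrence `x_{n+1} = 4 x_n - x_{n-1}`. -/
lemma closed_form17 {R : Type*} [CommRing R] (a b c d : R)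
    (ha : a * a = 4 * a - 1) (hb : b * b = 4 * b - 1)
    (g : ℕ → R) (h0 : g 0 = c + d) (h1 : g 1 = c * a + d * b)
    (hrec : ∀ n : ℕ, 1 ≤ n → g (n + 1) = 4 * g n - g (n - 1)) :
    ∀ k, g k = c * a ^ k + d * b ^ k := by
  intro k
  induction k using Nat.strong_induction_on with
  | _ k ih =>
    match k with
    | 0 => simpa using h0
    | 1 => simpa using h1
    | (m + 2) =>
      have e1 := ih (m + 1) (by omega)
      have e2 := ih m (by omega)
      have hr := hrec (m + 1) (by omega)
      simp only [Nat.add_sub_cancel] at hr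
      rw [hr, e1, e2]
      have p1 : a ^ (m + 2) = 4 * a ^ (m + 1) - a ^ m := by
        have h : a ^ (m + 2) = a ^ m * (a * a) := by ring
        rw [h, ha]; ring
      have p2 : b ^ (m + 2) = 4 * b ^ (m + 1) - b ^ m := by
        have h : b ^ (m + 2) = b ^ m * (b * b) := by ring
        rw [h, hb]; ring
      rw [p1, p2]; ring

lemma aux_choose_eq17 {p : ℕ} [hp : Fact p.Prime] (hodd : p % 2 = 1) :
    ∀ k ≤ p / 2, ((2 * k).choose k : ZMod p) = (-4) ^ k * ((p / 2).choose k : ZMod p) := by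
  intro k
  induction k with
  | zero => simp
  | succ k ih =>
    intro hk
    set n := p / 2 with hn
    have hp2n : p = 2 * n + 1 := by omega
    have hkp : ((k : ZMod p) + 1) ≠ 0 := by
      intro h
      have h' : (((k + 1 : ℕ)) : ZMod p) = 0 := by push_cast; exact h
      rw [ZMod.natCast_eq_zero_iff] at h'
      have := Nat.le_of_dvd (Nat.succ_pos k) h'
      omega
    have ih' := ih (by omega)
    have c1 : ((2 * k + 2).choose (k + 1) : ZMod p) * ((k : ZMod p) + 1)
        = (2 * (k : ZMod p) + 2) * ((2 * k + 1).choose k : ZMod p) := by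
      have := congrArg (Nat.cast (R := ZMod p)) (Nat.add_one_mul_choose_eq (2 * k + 1) k)
      push_cast [Nat.succ_eq_add_one] at this
      linear_combination -this
    have c2 : ((2 * k + 1).choose (k + 1) : ZMod p) * ((k : ZMod p) + 1)
        = (2 * (k : ZMod p) + 1) * ((2 * k).choose k : ZMod p) := by
      have := congrArg (Nat.cast (R := ZMod p)) (Nat.add_one_mul_choose_eq (2 * k) k)
      push_cast [Nat.succ_eq_add_one] at this
      linear_combination -this
    have c3 : ((2 * k + 1).choose (k + 1) : ZMod p) = ((2 * k + 1).choose k : ZMod p) := by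
      have h := Nat.choose_symm (show k + 1 ≤ 2 * k + 1 by omega)
      rw [show 2 * k + 1 - (k + 1) = k by omega] at h
      exact_mod_cast congrArg (Nat.cast (R := ZMod p)) h.symm
    have cB : ((n.choose (k + 1) : ZMod p)) * ((k : ZMod p) + 1)
        = (n.choose k : ZMod p) * ((n : ZMod p) - (k : ZMod p)) := by
      have := congrArg (Nat.cast (R := ZMod p)) (Nat.choose_succ_right_eq n k)
      push_cast [Nat.cast_sub (show k ≤ n by omega)] at this
      linear_combination this
    have hz : 2 * (n : ZMod p) + 1 = 0 := by
      have h : ((2 * n + 1 : ℕ) : ZMod p) = 0 := by rw [← hp2n]; exact ZMod.natCast_self p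
      push_cast at h
      linear_combination h
    have d1 : ((2 * k + 2).choose (k + 1) : ZMod p) * (((k : ZMod p) + 1) * ((k : ZMod p) + 1))
        = (2 * (k : ZMod p) + 2) * (2 * (k : ZMod p) + 1) * ((2 * k).choose k : ZMod p) := by
      linear_combination ((k : ZMod p) + 1) * c1
        - (2 * (k : ZMod p) + 2) * ((k : ZMod p) + 1) * c3 + (2 * (k : ZMod p) + 2) * c2
    rw [show 2 * (k + 1) = 2 * k + 2 by ring]
    apply mul_right_cancel₀ (b := ((k : ZMod p) + 1) * ((k : ZMod p) + 1))
      (mul_ne_zero hkp hkp)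
    linear_combination d1 + (2 * (k : ZMod p) + 2) * (2 * (k : ZMod p) + 1) * ih'
      - (-4 : ZMod p) ^ (k + 1) * ((k : ZMod p) + 1) * cB
      + 2 * (-4 : ZMod p) ^ k * ((n.choose k : ZMod p)) * ((k : ZMod p) + 1) * hz

lemma aux_choose_zero17 {p : ℕ} [hp : Fact p.Prime] (hodd : p % 2 = 1) {k : ℕ}
    (hk1 : p / 2 < k) (hk2 : k < p) : (((2 * k).choose k : ℕ) : ZMod p) = 0 := by
  rw [ZMod.natCast_eq_zero_iff]
  have hfac : (2 * k).choose k * (k.factorial * k.factorial) = (2 * k).factorial := by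
    have := Nat.choose_mul_factorial_mul_factorial (show k ≤ 2 * k by omega)
    rw [show 2 * k - k = k by omega] at this
    linarith [this]
  have hdvd : p ∣ (2 * k).factorial := (Nat.Prime.dvd_factorial hp.out).mpr (by omega)
  rw [← hfac] at hdvd
  rcases (Nat.Prime.dvd_mul hp.out).mp hdvd with h | h
  · exact h
  · exfalso
    rcases (Nat.Prime.dvd_mul hp.out).mp h with h' | h' <;>
    · have := (Nat.Prime.dvd_factorial hp.out).mp h'
      omega

lemma aux_sum17 {p : ℕ} [hp : Fact p.Prime] (hodd : p % 2 = 1) {R : Type*} [CommRing R]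
    [Algebra (ZMod p) R] (x : R) :
    ∑ k ∈ Finset.range p, ((2 * k).choose k : R) * x ^ k = (1 - 4 * x) ^ (p / 2) := by
  set n := p / 2 with hn
  have hsub : Finset.range (n + 1) ⊆ Finset.range p := by
    apply Finset.range_subset_range.mpr
    have := hp.out.two_le
    omega
  have hstep : ∑ k ∈ Finset.range p, ((2 * k).choose k : R) * x ^ k
      = ∑ k ∈ Finset.range (n + 1), ((2 * k).choose k : R) * x ^ k := by
    refine (Finset.sum_subset hsub ?_).symm
    intro k hkp hkn
    have hk1 : n < k := by simpa using hkn
    have hk2 : k < p := by simpa using hkp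
    have h0 : (((2 * k).choose k : ℕ) : ZMod p) = 0 := aux_choose_zero17 hodd hk1 hk2
    have : (((2 * k).choose k : ℕ) : R) = 0 := by
      rw [← map_natCast (algebraMap (ZMod p) R), h0, map_zero]
    rw [this, zero_mul]
  rw [hstep]
  have hterm : ∀ k ∈ Finset.range (n + 1),
      ((2 * k).choose k : R) * x ^ k = (-4 * x) ^ k * 1 ^ (n - k) * (n.choose k : R) := by
    intro k hk
    have hkn : k ≤ n := by simpa [Nat.lt_succ_iff] using hk
    have h1 := aux_choose_eq17 hodd k hkn
    have h2 : (((2 * k).choose k : ℕ) : R) = (-4) ^ k * ((n.choose k : ℕ) : R) := by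
      rw [← map_natCast (algebraMap (ZMod p) R), h1, map_mul, map_pow, map_neg, map_ofNat,
        map_natCast]
    rw [h2]
    ring
  rw [Finset.sum_congr rfl hterm, ← add_pow]
  ring_nf

theorem stmt17 (p : ℕ) (hp : p.Prime) (hp3 : 3 < p)
    (S T : ℕ → ℤ) (hS0 : S 0 = 0) (hS1 : S 1 = 1)
    (hSrec : ∀ n : ℕ, 1 ≤ n → S (n + 1) = 4 * S n - S (n - 1))
    (hT0 : T 0 = 2) (hT1 : T 1 = 4)
    (hTrec : ∀ n : ℕ, 1 ≤ n → T (n + 1) = 4 * T n - T (n - 1)) :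
    (∑ k ∈ Finset.range p,
      (S k : ZMod p) * (Nat.choose (2 * k) k : ZMod p)) =
      2 * (((@legendreSym 3 ⟨by norm_num⟩ p : ℤ) : ZMod p) -
        ((@legendreSym p ⟨hp⟩ (-1) : ℤ) : ZMod p)) ∧
    (∑ k ∈ Finset.range p,
      (T k : ZMod p) * (Nat.choose (2 * k) k : ZMod p)) =
      8 * ((@legendreSym p ⟨hp⟩ (-1) : ℤ) : ZMod p) -
        6 * ((@legendreSym 3 ⟨by norm_num⟩ p : ℤ) : ZMod p) := by
  haveI hpf : Fact p.Prime := ⟨hp⟩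
  haveI h3f : Fact (Nat.Prime 3) := ⟨by norm_num⟩
  have hodd : p % 2 = 1 := (Nat.Prime.eq_two_or_odd hp).resolve_left (by omega)
  set n : ℕ := p / 2 with hn
  have hp2n : p = 2 * n + 1 := by omega
  classical
  set f : (ZMod p)[X] := X ^ 2 - C 3 with hf
  have hdeg : f.degree ≠ 0 := by
    rw [hf, Polynomial.degree_X_pow_sub_C (by norm_num : 0 < 2)]
    norm_num
  haveI : Nontrivial (AdjoinRoot f) := AdjoinRoot.nontrivial f hdeg
  set R := AdjoinRoot f with hR
  have hinj : Function.Injective (algebraMap (ZMod p) R) := (algebraMap (ZMod p) R).injective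
  haveI : CharP R p := charP_of_injective_algebraMap hinj p
  set s : R := AdjoinRoot.root f with hs
  have hs2 : s * s = 3 := by
    have h := AdjoinRoot.eval₂_root f
    rw [hf] at h
    simp only [eval₂_sub, eval₂_pow, eval₂_X, eval₂_C] at h
    have h3 : (AdjoinRoot.of f) 3 = 3 := map_ofNat _ 3
    rw [h3] at h
    have h' : s ^ 2 - 3 = 0 := h
    linear_combination h'
  set α : R := 2 + s with hα
  set β : R := 2 - s with hβ
  have hab : α * β = 1 := by rw [hα, hβ]; linear_combination -hs2
  have haa : α * α = 4 * α - 1 := by rw [hα]; linear_combination hs2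
  have hbb : β * β = 4 * β - 1 := by rw [hβ]; linear_combination hs2
  have hSc : ∀ k, ((S k : R)) * (α - β) = α ^ k - β ^ k := by
    have hcf := closed_form17 α β 1 (-1) haa hbb (fun k => ((S k : R)) * (α - β))
      (by simp only [hS0]; push_cast; ring) (by simp only [hS1]; push_cast; ring) ?_
    · intro k
      linear_combination hcf k
    · intro m hm
      simp only [hSrec m hm]
      push_cast
      ring
  have hTc : ∀ k, ((T k : R)) = α ^ k + β ^ k := by
    have hcf := closed_form17 α β 1 1 haa hbb (fun k => ((T k : R)))
      (by simp only [hT0]; push_cast; ring)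
      (by simp only [hT1, hα, hβ]; push_cast; ring) ?_
    · intro k
      linear_combination hcf k
    · intro m hm
      simp only [hTrec m hm]
      push_cast
      ring
  -- Frobenius facts
  have h2p : (2 : R) ^ p = 2 := by
    calc (2 : R) ^ p = algebraMap (ZMod p) R ((2 : ZMod p) ^ p) := by rw [map_pow, map_ofNat]
      _ = algebraMap (ZMod p) R (2 : ZMod p) := by rw [ZMod.pow_card]
      _ = 2 := map_ofNat _ 2
  have hsp : s ^ p = algebraMap (ZMod p) R ((3 : ZMod p) ^ n) * s := by
    have h := congrArg (fun m : ℕ => s ^ m) hp2n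
    rw [h, pow_succ, pow_mul, pow_two, hs2, map_pow, map_ofNat]
  set E : ZMod p := ((legendreSym p 3 : ℤ) : ZMod p) with hE
  have hE3 : E = (3 : ZMod p) ^ n := by
    rw [hE, legendreSym.eq_pow, hn]
    norm_num
  set ER : R := algebraMap (ZMod p) R E with hER
  have hsp' : s ^ p = ER * s := by rw [hsp, hER, hE3]
  have hap : α ^ p = 2 + ER * s := by rw [hα, add_pow_char, h2p, hsp']
  have hbp : β ^ p = 2 - ER * s := by
    rw [hβ, sub_eq_add_neg, add_pow_char, h2p, (Nat.odd_iff.mpr hodd).neg_pow, hsp']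
    ring
  -- power reductions
  have hppow_a : α ^ p = α ^ (2 * n) * α := by
    have h := congrArg (fun m : ℕ => α ^ m) hp2n
    rw [h, pow_succ]
  have hppow_b : β ^ p = β ^ (2 * n) * β := by
    have h := congrArg (fun m : ℕ => β ^ m) hp2n
    rw [h, pow_succ]
  have ha2n : α ^ (2 * n) = α ^ p * β := by
    rw [hppow_a, mul_assoc, hab, mul_one]
  have hb2n : β ^ (2 * n) = β ^ p * α := by
    rw [hppow_b, mul_assoc, mul_comm β α, hab, mul_one]
  -- sums
  have hsa := aux_sum17 hodd (R := R) α
  have hsb := aux_sum17 hodd (R := R) β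
  rw [← hn] at hsa hsb
  have h1a : (1 : R) - 4 * α = -(α * α) := by rw [hα]; linear_combination hs2
  have h1b : (1 : R) - 4 * β = -(β * β) := by rw [hβ]; linear_combination hs2
  have key_a : ∑ k ∈ Finset.range p, (((2 * k).choose k : ℕ) : R) * α ^ k
      = (-1) ^ n * ((2 + ER * s) * β) := by
    calc ∑ k ∈ Finset.range p, (((2 * k).choose k : ℕ) : R) * α ^ k
        = (1 - 4 * α) ^ n := hsa
      _ = (-(α * α)) ^ n := by rw [h1a]
      _ = (-1) ^ n * (α * α) ^ n := by rw [neg_pow]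
      _ = (-1) ^ n * α ^ (2 * n) := by rw [← pow_two, ← pow_mul]
      _ = (-1) ^ n * (α ^ p * β) := by rw [ha2n]
      _ = (-1) ^ n * ((2 + ER * s) * β) := by rw [hap]
  have key_b : ∑ k ∈ Finset.range p, (((2 * k).choose k : ℕ) : R) * β ^ k
      = (-1) ^ n * ((2 - ER * s) * α) := by
    calc ∑ k ∈ Finset.range p, (((2 * k).choose k : ℕ) : R) * β ^ k
        = (1 - 4 * β) ^ n := hsb
      _ = (-(β * β)) ^ n := by rw [h1b]
      _ = (-1) ^ n * (β * β) ^ n := by rw [neg_pow]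
      _ = (-1) ^ n * β ^ (2 * n) := by rw [← pow_two, ← pow_mul]
      _ = (-1) ^ n * (β ^ p * α) := by rw [hb2n]
      _ = (-1) ^ n * ((2 - ER * s) * α) := by rw [hbp]
  have hmap : ∀ g : ℕ → ℤ,
      algebraMap (ZMod p) R (∑ k ∈ Finset.range p, ((g k : ZMod p)) * (((2 * k).choose k : ℕ) : ZMod p))
        = ∑ k ∈ Finset.range p, ((g k : R)) * (((2 * k).choose k : ℕ) : R) := by
    intro g
    rw [map_sum]
    refine Finset.sum_congr rfl fun k _ => ?_
    rw [map_mul, map_intCast, map_natCast]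
  -- the S identity in R
  have hS_R : algebraMap (ZMod p) R
        (∑ k ∈ Finset.range p, ((S k : ZMod p)) * (((2 * k).choose k : ℕ) : ZMod p)) * (α - β)
      = (-1) ^ n * ((2 + ER * s) * β) - (-1) ^ n * ((2 - ER * s) * α) := by
    rw [hmap S, Finset.sum_mul, ← key_a, ← key_b, ← Finset.sum_sub_distrib]
    refine Finset.sum_congr rfl fun k _ => ?_
    linear_combination (((2 * k).choose k : ℕ) : R) * hSc k
  have hαβs : α - β = 2 * s := by rw [hα, hβ]; ring
  have hcollapse : (-1 : R) ^ n * ((2 + ER * s) * β) - (-1) ^ n * ((2 - ER * s) * α)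
      = ((-1) ^ n * (4 * ER - 4)) * s := by
    rw [hα, hβ]; ring
  rw [hαβs, hcollapse] at hS_R
  have hsinv : s * (algebraMap (ZMod p) R 3⁻¹ * s) = 1 := by
    have h3ne : (3 : ZMod p) ≠ 0 := by
      intro h
      have h' : ((3 : ℕ) : ZMod p) = 0 := by exact_mod_cast h
      rw [ZMod.natCast_eq_zero_iff] at h'
      have := Nat.le_of_dvd (by norm_num) h'
      omega
    calc s * (algebraMap (ZMod p) R 3⁻¹ * s)
        = algebraMap (ZMod p) R 3⁻¹ * (s * s) := by ring
      _ = algebraMap (ZMod p) R 3⁻¹ * 3 := by rw [hs2]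
      _ = algebraMap (ZMod p) R 3⁻¹ * algebraMap (ZMod p) R 3 := by rw [map_ofNat]
      _ = algebraMap (ZMod p) R (3⁻¹ * 3) := by rw [map_mul]
      _ = 1 := by rw [inv_mul_cancel₀ h3ne, map_one]
  have hfin : (algebraMap (ZMod p) R
        (∑ k ∈ Finset.range p, ((S k : ZMod p)) * (((2 * k).choose k : ℕ) : ZMod p)) * 2
      - (-1 : R) ^ n * (4 * ER - 4)) * s = 0 := by
    linear_combination hS_R
  have hzeroS : algebraMap (ZMod p) R
        (∑ k ∈ Finset.range p, ((S k : ZMod p)) * (((2 * k).choose k : ℕ) : ZMod p)) * 2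
      - (-1 : R) ^ n * (4 * ER - 4) = 0 := by
    set X : R := algebraMap (ZMod p) R
        (∑ k ∈ Finset.range p, ((S k : ZMod p)) * (((2 * k).choose k : ℕ) : ZMod p)) * 2
      - (-1 : R) ^ n * (4 * ER - 4) with hX
    calc X = X * (s * (algebraMap (ZMod p) R 3⁻¹ * s)) := by rw [hsinv, mul_one]
      _ = (X * s) * (algebraMap (ZMod p) R 3⁻¹ * s) := by ring
      _ = 0 := by rw [hfin, zero_mul]
  have hKS : (∑ k ∈ Finset.range p, ((S k : ZMod p)) * (((2 * k).choose k : ℕ) : ZMod p)) * 2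
      - (-1 : ZMod p) ^ n * (4 * E - 4) = 0 := by
    apply hinj
    simp only [map_zero, map_sub, map_mul, map_pow, map_neg, map_one, map_ofNat, ← hER]
    linear_combination hzeroS
  -- the T identity in R
  have hT_R : algebraMap (ZMod p) R
        (∑ k ∈ Finset.range p, ((T k : ZMod p)) * (((2 * k).choose k : ℕ) : ZMod p))
      = (-1) ^ n * ((2 + ER * s) * β) + (-1) ^ n * ((2 - ER * s) * α) := by
    rw [hmap T, ← key_a, ← key_b, ← Finset.sum_add_distrib]
    refine Finset.sum_congr rfl fun k _ => ?_
    linear_combination (((2 * k).choose k : ℕ) : R) * hTc k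
  have hTcollapse : (-1 : R) ^ n * ((2 + ER * s) * β) + (-1) ^ n * ((2 - ER * s) * α)
      = (-1) ^ n * (8 - 6 * ER) := by
    rw [hα, hβ]; linear_combination (-2 * (-1 : R) ^ n * ER) * hs2
  rw [hTcollapse] at hT_R
  have hKT : (∑ k ∈ Finset.range p, ((T k : ZMod p)) * (((2 * k).choose k : ℕ) : ZMod p))
      = (-1 : ZMod p) ^ n * (8 - 6 * E) := by
    apply hinj
    rw [hT_R]
    simp only [map_mul, map_pow, map_neg, map_one, map_sub, map_ofNat, ← hER]
  -- Legendre symbol facts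
  have hL1 : ((legendreSym p (-1) : ℤ) : ZMod p) = (-1 : ZMod p) ^ n := by
    rw [legendreSym.eq_pow, hn]
    push_cast
    ring
  have h3neZ : ((3 : ℤ) : ZMod p) ≠ 0 := by
    intro h
    have h' : ((3 : ℕ) : ZMod p) = 0 := by exact_mod_cast h
    rw [ZMod.natCast_eq_zero_iff] at h'
    have := Nat.le_of_dvd (by norm_num) h'
    omega
  have hL3int : legendreSym 3 (p : ℤ) = (-1 : ℤ) ^ n * legendreSym p 3 := by
    have hrec := legendreSym.quadratic_reciprocity (p := p) (q := 3)
      (by omega) (by norm_num) (by omega)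
    norm_num [hn] at hrec
    have hsq := legendreSym.sq_one (p := p) (a := 3) h3neZ
    rw [← hn] at hrec
    linear_combination (legendreSym p 3) * hrec - (legendreSym 3 (p : ℤ)) * hsq
  have hL3cast : ((legendreSym 3 (p : ℤ) : ℤ) : ZMod p) = (-1 : ZMod p) ^ n * E := by
    rw [hL3int, hE]
    push_cast
    ring
  have h2ne : (2 : ZMod p) ≠ 0 := by
    intro h
    have h' : ((2 : ℕ) : ZMod p) = 0 := by exact_mod_cast h
    rw [ZMod.natCast_eq_zero_iff] at h'
    have := Nat.le_of_dvd (by norm_num) h'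
    omega
  constructor
  · apply mul_right_cancel₀ h2ne
    linear_combination hKS - 4 * hL3cast + 4 * hL1
  · linear_combination hKT - 8 * hL1 + 6 * hL3cast
end

section
/- Let A, B be integers with Δ = A² - 4B, and let p be an odd prime not dividing AB with (Δ/p) = 1. Then Σ_{k=0}^{p-1} A^k · v_k(A,B) · C(2k,k) / (4B)^k ≡ 2(-B/p) (mod p²), where v is the companion Lucas sequence and (·/p) the Legendre symbol. -/
open Finset Polynomial

namespace St18

/-- `M = (p-1)/2`. -/
def Mh (p : ℕ) : ℕ := (p - 1) / 2

/-- coefficients of `(1+X)^M log(1+X)` mod `p`. -/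
def cc (p : ℕ) (n : ℕ) : ZMod p :=
  ∑ i ∈ Finset.range n, (-1)^i * ((i+1 : ℕ) : ZMod p)⁻¹ * ((Mh p).choose (n-1-i) : ZMod p)

variable {p : ℕ} [Fact p.Prime]

lemma hMp (hodd : p ≠ 2) : 2 * Mh p + 1 = p := by
  have h1 := (Fact.out : p.Prime).two_le
  have h2 : p % 2 = 1 := Nat.odd_iff.mp ((Fact.out : p.Prime).odd_of_ne_two hodd)
  unfold Mh; omega

lemma natCast_ne_zero_of_lt {n : ℕ} (h0 : 0 < n) (h : n < p) : (n : ZMod p) ≠ 0 := by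
  intro h'
  rw [ZMod.natCast_eq_zero_iff] at h'
  exact absurd (Nat.le_of_dvd h0 h') (by omega)

lemma isUnit_natCast_of_lt {n : ℕ} (h0 : 0 < n) (h : n < p) : IsUnit (n : ZMod p) :=
  (ZMod.isUnit_iff_coprime n p).mpr
    (Nat.coprime_comm.mp (((Fact.out : p.Prime).coprime_iff_not_dvd).mpr
      (fun hd => absurd (Nat.le_of_dvd h0 hd) (by omega))))

lemma inv_mul_self_of_lt {n : ℕ} (h0 : 0 < n) (h : n < p) :
    ((n : ZMod p))⁻¹ * (n : ZMod p) = 1 := by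
  rw [mul_comm]; exact ZMod.mul_inv_of_unit _ (isUnit_natCast_of_lt h0 h)

lemma cc_zero : cc p 0 = 0 := by simp [cc]

/-- `(j+1)·C(M,j+1) = (M-j)·C(M,j)` in `ZMod p`. -/
lemma choose_step (j : ℕ) :
    ((j+1 : ℕ) : ZMod p) * ((Mh p).choose (j+1) : ZMod p)
      = ((Mh p : ZMod p) - j) * ((Mh p).choose j : ZMod p) := by
  have hnat := Nat.choose_succ_right_eq (Mh p) j
  by_cases hj : j ≤ Mh p
  · have hc : (((Mh p) - j : ℕ) : ZMod p) = (Mh p : ZMod p) - (j : ZMod p) := Nat.cast_sub hj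
    calc ((j+1 : ℕ) : ZMod p) * ((Mh p).choose (j+1) : ZMod p)
        = (((Mh p).choose (j+1) * (j+1) : ℕ) : ZMod p) := by push_cast; ring
      _ = (((Mh p).choose j * (Mh p - j) : ℕ) : ZMod p) := by rw [hnat]
      _ = ((Mh p : ZMod p) - j) * ((Mh p).choose j : ZMod p) := by push_cast [hc]; ring
  · have h1 : (Mh p).choose (j+1) = 0 := Nat.choose_eq_zero_of_lt (by omega)
    have h2 : (Mh p).choose j = 0 := Nat.choose_eq_zero_of_lt (by omega)
    simp [h1, h2]

/-- The key recurrence: `(n+1) c_{n+1} = (M-n) c_n + C(M,n)`. -/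
lemma cc_rec {n : ℕ} (hn : n + 1 < p) :
    ((n+1 : ℕ) : ZMod p) * cc p (n+1)
      = ((Mh p : ZMod p) - n) * cc p n + ((Mh p).choose n : ZMod p) := by
  have hinv : ∀ i, i < n + 1 → ((i+1 : ℕ) : ZMod p)⁻¹ * ((i+1 : ℕ) : ZMod p) = 1 := by
    intro i hi; exact inv_mul_self_of_lt (by omega) (by omega)
  have stepA : ((n+1 : ℕ) : ZMod p) * cc p (n+1)
      = (∑ i ∈ Finset.range (n+1),
          (-1)^i * ((i+1 : ℕ) : ZMod p)⁻¹ * (((n-i : ℕ) : ZMod p) * ((Mh p).choose (n-i) : ZMod p)))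
        + ∑ i ∈ Finset.range (n+1), (-1)^i * ((Mh p).choose (n-i) : ZMod p) := by
    rw [cc, Finset.mul_sum, ← Finset.sum_add_distrib]
    refine Finset.sum_congr rfl (fun i hi => ?_)
    have hi' : i < n + 1 := Finset.mem_range.mp hi
    have h1 : n + 1 - 1 - i = n - i := by omega
    have hsplit : ((n+1 : ℕ) : ZMod p) = ((n-i : ℕ) : ZMod p) + ((i+1 : ℕ) : ZMod p) := by
      rw [← Nat.cast_add]; congr 1; omega
    rw [h1, hsplit]
    have hu := hinv i hi'
    linear_combination ((-1:ZMod p)^i * ((Mh p).choose (n-i) : ZMod p)) * hu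
  have stepB : (∑ i ∈ Finset.range (n+1),
          (-1)^i * ((i+1 : ℕ) : ZMod p)⁻¹ * (((n-i : ℕ) : ZMod p) * ((Mh p).choose (n-i) : ZMod p)))
      = ∑ i ∈ Finset.range n,
          (-1)^i * ((i+1 : ℕ) : ZMod p)⁻¹ *
            (((Mh p : ZMod p) - ((n-1-i : ℕ) : ZMod p)) * ((Mh p).choose (n-1-i) : ZMod p)) := by
    rw [Finset.sum_range_succ]
    have hlast : ((n - n : ℕ) : ZMod p) = 0 := by simp
    rw [Nat.sub_self] at hlast ⊢
    simp only [Nat.cast_zero, zero_mul, mul_zero, add_zero]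
    refine Finset.sum_congr rfl (fun i hi => ?_)
    have hi' : i < n := Finset.mem_range.mp hi
    have h2 : n - i = (n-1-i)+1 := by omega
    rw [h2, choose_step (n-1-i)]
  have stepC : (∑ i ∈ Finset.range n,
          (-1)^i * ((i+1 : ℕ) : ZMod p)⁻¹ *
            (((Mh p : ZMod p) - ((n-1-i : ℕ) : ZMod p)) * ((Mh p).choose (n-1-i) : ZMod p)))
      = ((Mh p : ZMod p) - n) * cc p n
        + ∑ i ∈ Finset.range n, (-1)^i * ((Mh p).choose (n-1-i) : ZMod p) := by
    rw [cc, Finset.mul_sum, ← Finset.sum_add_distrib]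
    refine Finset.sum_congr rfl (fun i hi => ?_)
    have hi' : i < n := Finset.mem_range.mp hi
    have hsplit : ((Mh p : ZMod p) - ((n-1-i : ℕ) : ZMod p))
        = ((Mh p : ZMod p) - (n : ZMod p)) + ((i+1 : ℕ) : ZMod p) := by
      have : ((n-1-i : ℕ) : ZMod p) + ((i+1 : ℕ) : ZMod p) = (n : ZMod p) := by
        rw [← Nat.cast_add]; congr 1; omega
      linear_combination -this
    rw [hsplit]
    have hu := hinv i (by omega)
    linear_combination ((-1:ZMod p)^i * ((Mh p).choose (n-1-i) : ZMod p)) * hu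
  have stepD : (∑ i ∈ Finset.range (n+1), (-1)^i * ((Mh p).choose (n-i) : ZMod p))
      = ((Mh p).choose n : ZMod p)
        - ∑ i ∈ Finset.range n, (-1)^i * ((Mh p).choose (n-1-i) : ZMod p) := by
    rw [Finset.sum_range_succ']
    have : ∀ i ∈ Finset.range n, (-1:ZMod p)^(i+1) * ((Mh p).choose (n-(i+1)) : ZMod p)
        = -((-1)^i * ((Mh p).choose (n-1-i) : ZMod p)) := by
      intro i hi
      have : n - (i+1) = n - 1 - i := by omega
      rw [this, pow_succ]
      ring
    rw [Finset.sum_congr rfl this, Finset.sum_neg_distrib]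
    simp
    ring
  rw [stepA, stepB, stepC, stepD]
  ring

section Poly

variable (p : ℕ) [Fact p.Prime]

/-- the polynomial `G = ∑ c_n X^n`. -/
noncomputable def Gp : Polynomial (ZMod p) := ∑ n ∈ Finset.range p, C (cc p n) * X^n

/-- the companion polynomial `H = ∑ c_n (-X)^n (1+X)^(p-1-n)`. -/
noncomputable def Hp : Polynomial (ZMod p) :=
  ∑ n ∈ Finset.range p, C (cc p n) * ((-X)^n * (1+X)^(p-1-n))

variable {p}

lemma coeff_Gp (m : ℕ) : (Gp p).coeff m = if m < p then cc p m else 0 := by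
  rw [Gp, Polynomial.finset_sum_coeff]
  have h1 : ∀ n ∈ Finset.range p, (C (cc p n) * X^n).coeff m = if m = n then cc p n else 0 := by
    intro n _
    rw [Polynomial.coeff_C_mul, Polynomial.coeff_X_pow]
    by_cases h : m = n <;> simp [h]
  rw [Finset.sum_congr rfl h1, Finset.sum_ite_eq (Finset.range p) m (fun n => cc p n)]
  simp [Finset.mem_range]

lemma pow_pred_mul (m : ℕ) :
    C ((m : ℕ) : ZMod p) * ((1+X) * (1+X)^(m-1)) = C ((m : ℕ) : ZMod p) * (1+X)^m := by
  cases m with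
  | zero => simp
  | succ k => rw [← pow_succ']; simp

end Poly

lemma PB (hodd : p ≠ 2) :
    ∑ m ∈ Finset.range (p-1),
        C (((Mh p).choose m : ZMod p)) * ((-X)^m * (1+X)^(p-1-m))
      = (1+X)^(Mh p) := by
  have hM := hMp (p := p) hodd
  set M := Mh p with hMdef
  set K := p - 1 with hKdef
  have hK2 : K = 2*M := by omega
  have hMK : M < K := by
    have := (Fact.out : p.Prime).two_le
    omega
  have hext : ∑ m ∈ Finset.range K,
        C (((M).choose m : ZMod p)) * ((-X)^m * (1+X)^(K-m))
      = ∑ m ∈ Finset.range (K+1),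
        C (((M).choose m : ZMod p)) * ((-X)^m * (1+X)^(K-m)) := by
    rw [Finset.sum_range_succ, Nat.choose_eq_zero_of_lt hMK]
    simp
  rw [hext]
  have hsub : ∑ m ∈ Finset.range (M+1),
        C (((M).choose m : ZMod p)) * ((-X)^m * (1+X)^(K-m))
      = ∑ m ∈ Finset.range (K+1),
        C (((M).choose m : ZMod p)) * ((-X)^m * (1+X)^(K-m)) := by
    apply Finset.sum_subset
    · exact Finset.range_subset_range.mpr (by omega)
    · intro x _ hx
      rw [Finset.mem_range, Nat.not_lt] at hx
      rw [Nat.choose_eq_zero_of_lt (by omega)]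
      simp
  rw [← hsub]
  have hterm : ∀ m ∈ Finset.range (M+1),
      C (((M).choose m : ZMod p)) * ((-X)^m * (1+X)^(K-m))
        = ((-X)^m * (1+X)^(M-m) * ((M).choose m : Polynomial (ZMod p))) * (1+X)^M := by
    intro m hm
    have hm' : m ≤ M := by rw [Finset.mem_range] at hm; omega
    have : K - m = (M - m) + M := by omega
    rw [this, pow_add, Polynomial.C_eq_natCast]
    ring
  rw [Finset.sum_congr rfl hterm, ← Finset.sum_mul, ← add_pow (-X) (1+X) M]
  have : (-X) + (1+X) = (1 : Polynomial (ZMod p)) := by ring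
  rw [this, one_pow, one_mul]

lemma Hode (hodd : p ≠ 2) :
    (1+X) * derivative (Hp p) - C ((Mh p : ZMod p)) * Hp p
      = -(1+X)^(Mh p) + C (-(Mh p : ZMod p) * cc p (p-1)) * X^(p-1) := by
  have hM := hMp (p := p) hodd
  set M := Mh p with hMdef
  set K := p - 1 with hKdef
  have hKp : K + 1 = p := by omega
  have hK2 : K = 2*M := by omega
  -- pointwise computation
  have hterm : ∀ n : ℕ,
      (1+X) * derivative ((-X)^n * (1+X)^(K-n)) - C ((M : ZMod p)) * ((-X)^n * (1+X)^(K-n))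
        = -(C ((n : ZMod p)) * ((-X)^(n-1) * (1+X)^(K-n+1)))
          + C (((K-n : ℕ) : ZMod p) - (M : ZMod p)) * ((-X)^n * (1+X)^(K-n)) := by
    intro n
    rw [derivative_mul, Polynomial.derivative_pow, Polynomial.derivative_pow]
    have d1 : derivative (-X : Polynomial (ZMod p)) = -1 := by
      simp
    have d2 : derivative (1+X : Polynomial (ZMod p)) = 1 := by
      simp
    rw [d1, d2]
    have e1 : (1+X) * ((C ((n:ℕ) : ZMod p) * (-X)^(n-1) * (-1)) * (1+X)^(K-n)
        + (-X)^n * (C (((K-n):ℕ) : ZMod p) * (1+X)^(K-n-1) * 1))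
        = -(C ((n : ZMod p)) * ((-X)^(n-1) * ((1+X) * (1+X)^(K-n))))
          + ((-X)^n * (C (((K-n):ℕ) : ZMod p) * ((1+X) * (1+X)^(K-n-1)))) := by
      ring
    rw [e1, pow_pred_mul (K-n)]
    rw [← pow_succ', C_sub]
    ring
  rw [Hp]
  rw [derivative_sum]
  have hrw : (1+X) * (∑ n ∈ Finset.range p, derivative (C (cc p n) * ((-X)^n * (1+X)^(K-n))))
      - C ((M : ZMod p)) * (∑ n ∈ Finset.range p, C (cc p n) * ((-X)^n * (1+X)^(K-n)))
      = ∑ n ∈ Finset.range p, C (cc p n) *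
          ((1+X) * derivative ((-X)^n * (1+X)^(K-n))
            - C ((M : ZMod p)) * ((-X)^n * (1+X)^(K-n))) := by
    rw [Finset.mul_sum, Finset.mul_sum, ← Finset.sum_sub_distrib]
    refine Finset.sum_congr rfl (fun n _ => ?_)
    rw [Polynomial.derivative_C_mul]
    ring
  rw [hrw]
  rw [Finset.sum_congr rfl (fun n _ => by rw [hterm n, mul_add])]
  -- split into two sums
  rw [Finset.sum_add_distrib]
  -- first sum: reindex
  have hA : ∑ n ∈ Finset.range p,
        C (cc p n) * (-(C ((n : ZMod p)) * ((-X)^(n-1) * (1+X)^(K-n+1))))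
      = ∑ m ∈ Finset.range K,
          (-(C (((m+1 : ℕ) : ZMod p) * cc p (m+1)))) * ((-X)^m * (1+X)^(K-m)) := by
    have hrange : Finset.range p = Finset.range (K+1) := by rw [hKp]
    rw [hrange, Finset.sum_range_succ']
    have h0 : C (cc p 0) * (-(C ((Nat.cast 0 : ZMod p)) * ((-X)^(0-1) * (1+X)^(K-0+1)))) = 0 := by
      rw [cc_zero]; simp
    rw [h0, add_zero]
    refine Finset.sum_congr rfl (fun m hm => ?_)
    have hm' : m < K := Finset.mem_range.mp hm
    have e2 : K - (m+1) + 1 = K - m := by omega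
    have e3 : (m+1) - 1 = m := by omega
    rw [e2, e3, C_mul]
    ring
  rw [hA]
  -- second sum: peel off the last term
  have hB : ∑ n ∈ Finset.range p,
        C (cc p n) * (C (((K-n : ℕ) : ZMod p) - (M : ZMod p)) * ((-X)^n * (1+X)^(K-n)))
      = (∑ m ∈ Finset.range K,
          (C (((M : ZMod p) - m) * cc p m)) * ((-X)^m * (1+X)^(K-m)))
        + C (-(M : ZMod p) * cc p K) * X^K := by
    have hrange : Finset.range p = Finset.range (K+1) := by rw [hKp]
    rw [hrange, Finset.sum_range_succ]
    congr 1
    · refine Finset.sum_congr rfl (fun m hm => ?_)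
      have hm' : m < K := Finset.mem_range.mp hm
      have e4 : ((K-m : ℕ) : ZMod p) - (M : ZMod p) = (M : ZMod p) - m := by
        have : ((K-m : ℕ) : ZMod p) = ((K : ℕ) : ZMod p) - m := by
          rw [Nat.cast_sub (by omega)]
        rw [this]
        have : ((K : ℕ) : ZMod p) = 2 * (M : ZMod p) := by
          rw [hK2]; push_cast; ring
        rw [this]; ring
      rw [e4, C_mul]; ring
    · have e5 : K - K = 0 := by omega
      rw [e5]
      have e6 : ((-X)^K : Polynomial (ZMod p)) = X^K := Even.neg_pow ⟨M, by omega⟩ X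
      rw [e6]
      simp only [Nat.cast_zero, pow_zero, mul_one, zero_sub, map_neg, map_mul]
      ring
  rw [hB]
  -- combine the two range-K sums using the recurrence
  have hC : (∑ m ∈ Finset.range K,
        (-(C (((m+1 : ℕ) : ZMod p) * cc p (m+1)))) * ((-X)^m * (1+X)^(K-m)))
      + ((∑ m ∈ Finset.range K,
          (C (((M : ZMod p) - m) * cc p m)) * ((-X)^m * (1+X)^(K-m)))
        + C (-(M : ZMod p) * cc p K) * X^K)
      = -(∑ m ∈ Finset.range K,
          C (((M).choose m : ZMod p)) * ((-X)^m * (1+X)^(K-m)))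
        + C (-(M : ZMod p) * cc p K) * X^K := by
    rw [← add_assoc, ← Finset.sum_add_distrib]
    congr 1
    rw [← Finset.sum_neg_distrib]
    refine Finset.sum_congr rfl (fun m hm => ?_)
    have hm' : m < K := Finset.mem_range.mp hm
    have hrec := cc_rec (p := p) (n := m) (by omega)
    rw [← hMdef] at hrec
    have hC2 : (C (((m+1 : ℕ) : ZMod p) * cc p (m+1)) : Polynomial (ZMod p))
        = C (((M : ZMod p) - m) * cc p m) + C (((M).choose m : ZMod p)) := by
      rw [← C_add]
      exact congrArg C hrec
    linear_combination (-((-X)^m * (1+X)^(K-m))) * hC2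
  rw [hC, PB hodd]

lemma Gode (hodd : p ≠ 2) :
    (1+X) * derivative (Gp p) - C ((Mh p : ZMod p)) * Gp p
      = (1+X)^(Mh p) + C ((Mh p : ZMod p) * cc p (p-1)) * X^(p-1) := by
  have hM := hMp (p := p) hodd
  have hp2 := (Fact.out : p.Prime).two_le
  apply Polynomial.ext
  intro n
  have hsplit : ((1+X) * derivative (Gp p)).coeff n
      = (derivative (Gp p)).coeff n + (X * derivative (Gp p)).coeff n := by
    have : (1+X) * derivative (Gp p) = derivative (Gp p) + X * derivative (Gp p) := by ring
    rw [this, Polynomial.coeff_add]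
  rw [Polynomial.coeff_sub, hsplit, Polynomial.coeff_derivative, Polynomial.coeff_C_mul,
    Polynomial.coeff_add, Polynomial.coeff_C_mul, Polynomial.coeff_X_pow]
  have hXd : (X * derivative (Gp p)).coeff n
      = (n : ZMod p) * (Gp p).coeff n := by
    cases n with
    | zero => rw [Polynomial.mul_coeff_zero]; simp
    | succ m =>
        rw [Polynomial.coeff_X_mul, Polynomial.coeff_derivative]
        push_cast; ring
  rw [hXd]
  have hcoeffpow : (((1:Polynomial (ZMod p))+X)^(Mh p)).coeff n = ((Mh p).choose n : ZMod p) := by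
    rw [add_comm, Polynomial.coeff_X_add_one_pow]
  rw [hcoeffpow, coeff_Gp, coeff_Gp]
  rcases lt_trichotomy n (p-1) with hn | hn | hn
  · have h1 : n + 1 < p := by omega
    have h2 : n < p := by omega
    rw [if_pos h1, if_pos h2, if_neg (by omega)]
    have hrec := cc_rec (p := p) (n := n) h1
    push_cast at hrec ⊢
    linear_combination hrec
  · have h1 : ¬ (n + 1 < p) := by omega
    have h2 : n < p := by omega
    rw [if_neg h1, if_pos h2, if_pos hn]
    have hch : (Mh p).choose n = 0 := Nat.choose_eq_zero_of_lt (by omega)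
    have hKcast : ((n : ZMod p)) = 2 * (Mh p : ZMod p) := by
      have : n = 2 * Mh p := by omega
      rw [this]; push_cast; ring
    rw [hch, hKcast, hn]
    push_cast
    ring
  · have h1 : ¬ (n + 1 < p) := by omega
    have h2 : ¬ (n < p) := by omega
    rw [if_neg h1, if_neg h2, if_neg (by omega)]
    have hch : (Mh p).choose n = 0 := Nat.choose_eq_zero_of_lt (by omega)
    rw [hch]
    simp

lemma Zode (hodd : p ≠ 2) :
    (1+X) * derivative (Gp p + Hp p) - C ((Mh p : ZMod p)) * (Gp p + Hp p) = 0 := by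
  rw [derivative_add]
  have : (1+X) * (derivative (Gp p) + derivative (Hp p))
      - C ((Mh p : ZMod p)) * (Gp p + Hp p)
      = ((1+X) * derivative (Gp p) - C ((Mh p : ZMod p)) * Gp p)
        + ((1+X) * derivative (Hp p) - C ((Mh p : ZMod p)) * Hp p) := by ring
  rw [this, Gode hodd, Hode hodd]
  rw [C_mul, C_mul, C_neg]
  ring

lemma Z_natDegree (hodd : p ≠ 2) : (Gp p + Hp p).natDegree ≤ p - 1 := by
  have hp2 := (Fact.out : p.Prime).two_le
  apply le_trans (Polynomial.natDegree_add_le _ _)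
  apply max_le
  · apply Polynomial.natDegree_sum_le_of_forall_le
    intro n hn
    apply le_trans (Polynomial.natDegree_C_mul_le _ _)
    rw [Polynomial.natDegree_X_pow]
    have := Finset.mem_range.mp hn
    omega
  · apply Polynomial.natDegree_sum_le_of_forall_le
    intro n hn
    have hn' : n ≤ p - 1 := by have := Finset.mem_range.mp hn; omega
    apply le_trans (Polynomial.natDegree_C_mul_le _ _)
    apply le_trans (Polynomial.natDegree_mul_le)
    have d1 : ((-X : Polynomial (ZMod p))^n).natDegree ≤ n := by
      apply le_trans (Polynomial.natDegree_pow_le)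
      rw [Polynomial.natDegree_neg, Polynomial.natDegree_X]
      omega
    have d2 : ((1 + X : Polynomial (ZMod p))^(p-1-n)).natDegree ≤ p-1-n := by
      apply le_trans (Polynomial.natDegree_pow_le)
      have : (1 + X : Polynomial (ZMod p)).natDegree ≤ 1 := by
        apply le_trans (Polynomial.natDegree_add_le _ _)
        simp
      calc (p-1-n) * (1 + X : Polynomial (ZMod p)).natDegree ≤ (p-1-n) * 1 :=
            Nat.mul_le_mul_left _ this
        _ = p-1-n := by omega
    omega

lemma Z_coeff_zero : (Gp p + Hp p).coeff 0 = 0 := by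
  have hp0 : 0 < p := (Fact.out : p.Prime).pos
  rw [Polynomial.coeff_add, coeff_Gp, if_pos hp0, cc_zero]
  rw [Hp, Polynomial.finset_sum_coeff]
  have : ∀ n ∈ Finset.range p, (C (cc p n) * ((-X)^n * (1+X)^(p-1-n))).coeff 0 = 0 := by
    intro n _
    cases n with
    | zero => rw [cc_zero]; simp
    | succ m =>
        rw [Polynomial.mul_coeff_zero, Polynomial.mul_coeff_zero]
        have : ((-X : Polynomial (ZMod p))^(m+1)).coeff 0 = 0 := by
          rw [pow_succ, Polynomial.mul_coeff_zero]
          simp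
        rw [this]
        ring
  rw [Finset.sum_congr rfl this]
  simp

lemma Z_eq_zero (hodd : p ≠ 2) : Gp p + Hp p = 0 := by
  set ZZ := Gp p + Hp p with hZZ
  have hode := Zode (p := p) hodd
  rw [← hZZ] at hode
  have key : ∀ n, n ≤ p - 1 → ZZ.coeff n = 0 := by
    intro n
    induction n with
    | zero => intro _; exact Z_coeff_zero
    | succ m ih =>
        intro hm
        have hcm : ZZ.coeff m = 0 := ih (by omega)
        have h0 : ((1+X) * derivative ZZ - C ((Mh p : ZMod p)) * ZZ).coeff m = 0 := by
          rw [hode]; simp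
        have hsplit : ((1+X) * derivative ZZ).coeff m
            = (derivative ZZ).coeff m + (X * derivative ZZ).coeff m := by
          have : (1+X) * derivative ZZ = derivative ZZ + X * derivative ZZ := by ring
          rw [this, Polynomial.coeff_add]
        rw [Polynomial.coeff_sub, hsplit, Polynomial.coeff_derivative,
          Polynomial.coeff_C_mul, hcm, mul_zero, sub_zero] at h0
        have hXd : (X * derivative ZZ).coeff m = 0 := by
          cases m with
          | zero => rw [Polynomial.mul_coeff_zero]; simp
          | succ k =>
              rw [Polynomial.coeff_X_mul, Polynomial.coeff_derivative]
              have : ZZ.coeff (k+1) = 0 := ih (by omega)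
              rw [this]; ring
        rw [hXd, add_zero] at h0
        have hunit : ((m : ZMod p) + 1) ≠ 0 := by
          have : (((m+1 : ℕ)) : ZMod p) ≠ 0 := natCast_ne_zero_of_lt (by omega) (by omega)
          push_cast at this; exact this
        exact (mul_eq_zero.mp h0).resolve_right hunit
  apply Polynomial.ext
  intro n
  rw [Polynomial.coeff_zero]
  by_cases hn : n ≤ p - 1
  · exact key n hn
  · exact Polynomial.coeff_eq_zero_of_natDegree_lt
      (lt_of_le_of_lt (Z_natDegree hodd) (by omega))

/-- The crux congruence mod `p`. -/
theorem crux (hodd : p ≠ 2) (a b : ZMod p) (hab : (1+a)*(1+b) = 1) :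
    (∑ n ∈ Finset.range p, cc p n * a^n) + (∑ n ∈ Finset.range p, cc p n * b^n) = 0 := by
  have h1a : (1+a) ≠ 0 := by
    intro h
    rw [h, zero_mul] at hab
    exact zero_ne_one hab
  have hev := congrArg (Polynomial.eval a) (Z_eq_zero (p := p) hodd)
  rw [Polynomial.eval_add, Polynomial.eval_zero] at hev
  have hG : (Gp p).eval a = ∑ n ∈ Finset.range p, cc p n * a^n := by
    rw [Gp, Polynomial.eval_finset_sum]
    refine Finset.sum_congr rfl (fun n _ => ?_)
    simp
  have hB : ∀ n : ℕ, b^n * (1+a)^n = (-a)^n := by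
    intro n
    rw [← mul_pow]
    congr 1
    linear_combination hab
  have hH : (Hp p).eval a = ∑ n ∈ Finset.range p, cc p n * b^n := by
    rw [Hp, Polynomial.eval_finset_sum]
    refine Finset.sum_congr rfl (fun n hn => ?_)
    have hn' : n ≤ p - 1 := by have := Finset.mem_range.mp hn; omega
    have hfer : (1+a)^(p-1) = 1 := ZMod.pow_card_sub_one_eq_one h1a
    have : (-a)^n * (1+a)^(p-1-n) = b^n := by
      rw [← hB n]
      have : b^n * (1+a)^n * (1+a)^(p-1-n) = b^n * (1+a)^(p-1) := by
        rw [mul_assoc, ← pow_add]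
        congr 2
        omega
      rw [this, hfer, mul_one]
    simp only [Polynomial.eval_mul, Polynomial.eval_C, Polynomial.eval_pow,
      Polynomial.eval_neg, Polynomial.eval_X, Polynomial.eval_add, Polynomial.eval_one]
    rw [this]
  rw [hG, hH] at hev
  exact hev

section Rside

variable {p : ℕ} [Fact p.Prime]

/-- reduction map `ZMod p² → ZMod p`. -/
def phi (p : ℕ) : ZMod (p^2) →+* ZMod p :=
  ZMod.castHom (dvd_pow_self p two_ne_zero) (ZMod p)

lemma neZeroPsq : NeZero (p^2) := ⟨pow_ne_zero 2 (Fact.out : p.Prime).ne_zero⟩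

lemma self_cast_eq {x : ZMod (p^2)} : ((x.val : ℕ) : ZMod (p^2)) = x := by
  haveI := neZeroPsq (p := p)
  rw [ZMod.natCast_val, ZMod.cast_id]

lemma phi_eq_val (x : ZMod (p^2)) : phi p x = ((x.val : ℕ) : ZMod p) := by
  conv_lhs => rw [← self_cast_eq (x := x)]
  rw [map_natCast]

lemma dvd_val_of_phi {x : ZMod (p^2)} (h : phi p x = 0) : p ∣ x.val := by
  rw [phi_eq_val] at h
  exact (ZMod.natCast_eq_zero_iff _ _).mp h

lemma pmul_eq_zero {x : ZMod (p^2)} (h : phi p x = 0) : (p : ZMod (p^2)) * x = 0 := by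
  obtain ⟨c, hc⟩ := dvd_val_of_phi h
  have : x = ((p * c : ℕ) : ZMod (p^2)) := by rw [← hc, self_cast_eq]
  rw [this, ← Nat.cast_mul, show p * (p * c) = p^2 * c by ring, Nat.cast_mul,
    ZMod.natCast_self, zero_mul]

lemma mul_eq_zero_of_phi {x y : ZMod (p^2)} (hx : phi p x = 0) (hy : phi p y = 0) :
    x * y = 0 := by
  obtain ⟨c, hc⟩ := dvd_val_of_phi hx
  obtain ⟨d, hd⟩ := dvd_val_of_phi hy
  have hx' : x = ((p * c : ℕ) : ZMod (p^2)) := by rw [← hc, self_cast_eq]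
  have hy' : y = ((p * d : ℕ) : ZMod (p^2)) := by rw [← hd, self_cast_eq]
  rw [hx', hy', ← Nat.cast_mul, show (p*c) * (p*d) = p^2 * (c*d) by ring, Nat.cast_mul,
    ZMod.natCast_self, zero_mul]

lemma isUnit_of_phi {x : ZMod (p^2)} (h : phi p x ≠ 0) : IsUnit x := by
  haveI := neZeroPsq (p := p)
  have hnd : ¬ p ∣ x.val := fun hd => h (by
    rw [phi_eq_val]
    exact (ZMod.natCast_eq_zero_iff _ _).mpr hd)
  have hco : Nat.Coprime (x.val) (p^2) := by
    apply Nat.Coprime.pow_right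
    exact Nat.coprime_comm.mp (((Fact.out : p.Prime).coprime_iff_not_dvd).mpr hnd)
  have := (ZMod.isUnit_iff_coprime (x.val) (p^2)).mpr hco
  rwa [self_cast_eq] at this

lemma phi_ne_zero_of_unit {x : ZMod (p^2)} (h : IsUnit x) : phi p x ≠ 0 := by
  intro h0
  obtain ⟨y, hy⟩ := h.exists_right_inv
  have := congrArg (phi p) hy
  rw [map_mul, map_one, h0, zero_mul] at this
  exact zero_ne_one this

lemma phi_inv {x : ZMod (p^2)} (h : IsUnit x) : phi p (x⁻¹) = (phi p x)⁻¹ := by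
  have h1 : phi p x * phi p (x⁻¹) = 1 := by
    rw [← map_mul, ZMod.mul_inv_of_unit x h, map_one]
  have h2 : IsUnit (phi p x) := IsUnit.of_mul_eq_one _ h1
  have h3 : phi p x * (phi p x)⁻¹ = 1 := ZMod.mul_inv_of_unit _ h2
  exact h2.mul_left_cancel (h1.trans h3.symm)

lemma isUnit_natCast_sq {n : ℕ} (h : ¬ p ∣ n) : IsUnit ((n : ℕ) : ZMod (p^2)) := by
  apply isUnit_of_phi
  rw [map_natCast]
  exact fun h0 => h ((ZMod.natCast_eq_zero_iff _ _).mp h0)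

lemma isUnit_intCast_sq {m : ℤ} (h : ¬ (p:ℤ) ∣ m) : IsUnit ((m : ℤ) : ZMod (p^2)) := by
  apply isUnit_of_phi
  rw [map_intCast]
  exact fun h0 => h ((ZMod.intCast_zmod_eq_zero_iff_dvd _ _).mp h0)

lemma exists_sqrt (hodd : p ≠ 2) {Δ : ℤ} (hΔ : legendreSym p Δ = 1) :
    ∃ z : ZMod (p^2), z * z = ((Δ : ℤ) : ZMod (p^2)) ∧ IsUnit z := by
  have hne : ((Δ : ℤ) : ZMod p) ≠ 0 := by
    intro h0
    have := (legendreSym.eq_zero_iff p Δ).mpr h0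
    omega
  obtain ⟨y, hy⟩ := (legendreSym.eq_one_iff p hne).mp hΔ
  have hyne : y ≠ 0 := by
    intro h0
    rw [h0, mul_zero] at hy
    exact hne hy
  set w : ZMod (p^2) := ((y.val : ℕ) : ZMod (p^2)) with hw
  have hφw : phi p w = y := by
    rw [hw, map_natCast, ZMod.natCast_val, ZMod.cast_id]
  have hwu : IsUnit w := isUnit_of_phi (by rw [hφw]; exact hyne)
  have h2u : IsUnit ((2:ℕ) : ZMod (p^2)) := by
    apply isUnit_natCast_sq
    intro hd
    have h2 := (Fact.out : p.Prime).two_le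
    have h3 := Nat.le_of_dvd (by norm_num) hd
    omega
  have h2wu : IsUnit (((2:ℕ) : ZMod (p^2)) * w) := h2u.mul hwu
  set d : ZMod (p^2) := ((Δ : ℤ) : ZMod (p^2)) - w * w with hd
  have hφd : phi p d = 0 := by
    rw [hd, map_sub, map_mul, map_intCast, hφw, hy]
    ring
  set t : ZMod (p^2) := d * (((2:ℕ) : ZMod (p^2)) * w)⁻¹ with ht
  have hφt : phi p t = 0 := by
    rw [ht, map_mul, hφd, zero_mul]
  have htt : t * t = 0 := mul_eq_zero_of_phi hφt hφt
  have h2wt : ((2:ℕ) : ZMod (p^2)) * w * t = d := by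
    rw [ht, ← mul_assoc, mul_comm (((2:ℕ) : ZMod (p^2)) * w) d, mul_assoc,
      ZMod.mul_inv_of_unit _ h2wu, mul_one]
  refine ⟨w + t, ?_, ?_⟩
  · have : (w + t) * (w + t) = w * w + ((2:ℕ) : ZMod (p^2)) * w * t + t * t := by
      push_cast
      ring
    rw [this, h2wt, htt, add_zero, hd]
    ring
  · apply isUnit_of_phi
    rw [map_add, hφw, hφt, add_zero]
    exact hyne
  
/-- `N = M(p+1)`, representing `(p²-1)/2`. -/
def Nn (p : ℕ) : ℕ := Mh p * p + Mh p

/-- lift of the `cc` coefficients to `ZMod p²`. -/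
def chat (p : ℕ) (n : ℕ) : ZMod (p^2) :=
  ∑ i ∈ Finset.range n, (-1)^i * ((i+1 : ℕ) : ZMod (p^2))⁻¹ * ((Mh p).choose (n-1-i) : ZMod (p^2))

lemma two_Nn (hodd : p ≠ 2) : 2 * Nn p + 1 = p^2 := by
  have h := hMp (p := p) hodd
  have : p^2 = (2 * Mh p + 1) * (2 * Mh p + 1) := by rw [h]; ring
  rw [this, Nn]
  nlinarith [h]

lemma Nn_cast (hodd : p ≠ 2) : (2 : ZMod (p^2)) * ((Nn p : ℕ) : ZMod (p^2)) = -1 := by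
  have h := two_Nn (p := p) hodd
  have : ((2 * Nn p + 1 : ℕ) : ZMod (p^2)) = ((p^2 : ℕ) : ZMod (p^2)) := by rw [h]
  rw [ZMod.natCast_self] at this
  push_cast at this
  linear_combination this

lemma isUnit_natCast_of_lt_sq {n : ℕ} (h0 : 0 < n) (h : n < p) :
    IsUnit ((n : ℕ) : ZMod (p^2)) := by
  apply isUnit_natCast_sq
  intro hd
  exact absurd (Nat.le_of_dvd h0 hd) (by omega)

lemma isUnit_factorial_sq {k : ℕ} (h : k < p) :
    IsUnit ((k.factorial : ℕ) : ZMod (p^2)) := by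
  apply isUnit_natCast_sq
  intro hd
  have := ((Fact.out : p.Prime).dvd_factorial).mp hd
  omega

/-- `(2k)! = (-4)^k (k!)² C(N,k)` in `ZMod p²`. -/
lemma CN (hodd : p ≠ 2) : ∀ k, k < p →
    (((2*k).factorial : ℕ) : ZMod (p^2))
      = (-4 : ZMod (p^2))^k * ((k.factorial : ℕ) : ZMod (p^2))^2
          * (((Nn p).choose k : ℕ) : ZMod (p^2)) := by
  have hM := hMp (p := p) hodd
  intro k
  induction k with
  | zero => intro _; simp
  | succ k ih =>
      intro hk1
      have hk : k < p := by omega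
      have IH := ih hk
      have hkN : k ≤ Nn p := by
        have : p ≤ Nn p := by unfold Nn Mh at *; nlinarith [hM]
        omega
      have hrecN := Nat.choose_succ_right_eq (Nn p) k
      have hrecR : (((Nn p).choose (k+1) : ℕ) : ZMod (p^2)) * ((k+1 : ℕ) : ZMod (p^2))
          = (((Nn p).choose k : ℕ) : ZMod (p^2))
            * (((Nn p : ℕ) : ZMod (p^2)) - (k : ZMod (p^2))) := by
        have hsub : ((Nn p - k : ℕ) : ZMod (p^2))
            = ((Nn p : ℕ) : ZMod (p^2)) - (k : ZMod (p^2)) := Nat.cast_sub hkN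
        calc (((Nn p).choose (k+1) : ℕ) : ZMod (p^2)) * ((k+1 : ℕ) : ZMod (p^2))
            = (((Nn p).choose (k+1) * (k+1) : ℕ) : ZMod (p^2)) := by push_cast; ring
          _ = (((Nn p).choose k * (Nn p - k) : ℕ) : ZMod (p^2)) := by rw [hrecN]
          _ = _ := by rw [Nat.cast_mul, hsub]
      have hNk : (2 : ZMod (p^2)) * (((Nn p : ℕ) : ZMod (p^2)) - (k : ZMod (p^2)))
          = -(2 * (k : ZMod (p^2)) + 1) := by
        have := Nn_cast (p := p) hodd
        linear_combination this
      have hfac2 : ((2*(k+1)).factorial : ℕ)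
          = (2*k+2) * ((2*k+1) * (2*k).factorial) := by
        have : 2*(k+1) = (2*k+1)+1 := by ring
        rw [this, Nat.factorial_succ, Nat.factorial_succ]
      have hfac1 : (((k+1).factorial : ℕ) : ZMod (p^2))
          = ((k+1 : ℕ) : ZMod (p^2)) * ((k.factorial : ℕ) : ZMod (p^2)) := by
        rw [Nat.factorial_succ]; push_cast; ring
      rw [hfac2, hfac1]
      have hN2 := Nn_cast (p := p) hodd
      push_cast at hrecR ⊢
      linear_combination (norm := (push_cast; ring1))
        (4*(-4:ZMod (p^2))^k*((k.factorial : ℕ) : ZMod (p^2))^2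
            * (((Nn p).choose k : ℕ) : ZMod (p^2))*((k:ZMod (p^2))+1)) * hN2
        + 
        ((2*(k:ZMod (p^2))+2)*(2*(k:ZMod (p^2))+1)) * IH
        + (-(-4:ZMod (p^2))^(k+1)*((k:ZMod (p^2))+1)*((k.factorial : ℕ) : ZMod (p^2))^2) * hrecR
        + (-2*((k:ZMod (p^2))+1)*(-4:ZMod (p^2))^k*((k.factorial : ℕ) : ZMod (p^2))^2
            * (((Nn p).choose k : ℕ) : ZMod (p^2))) * hNk

/-- `C(2k,k) = (-4)^k C(N,k)` in `ZMod p²`. -/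
lemma CC (hodd : p ≠ 2) {k : ℕ} (hk : k < p) :
    (((2*k).choose k : ℕ) : ZMod (p^2))
      = (-4 : ZMod (p^2))^k * (((Nn p).choose k : ℕ) : ZMod (p^2)) := by
  have h1 : (2*k).choose k * k.factorial * k.factorial = (2*k).factorial := by
    have := Nat.choose_mul_factorial_mul_factorial (show k ≤ 2*k by omega)
    rwa [show 2*k - k = k by omega] at this
  have h2 : (((2*k).choose k : ℕ) : ZMod (p^2)) * ((k.factorial : ℕ) : ZMod (p^2))
        * ((k.factorial : ℕ) : ZMod (p^2))
      = ((-4 : ZMod (p^2))^k * (((Nn p).choose k : ℕ) : ZMod (p^2)))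
        * ((k.factorial : ℕ) : ZMod (p^2)) * ((k.factorial : ℕ) : ZMod (p^2)) := by
    calc (((2*k).choose k : ℕ) : ZMod (p^2)) * ((k.factorial : ℕ) : ZMod (p^2))
        * ((k.factorial : ℕ) : ZMod (p^2))
        = (((2*k).choose k * k.factorial * k.factorial : ℕ) : ZMod (p^2)) := by push_cast; ring
      _ = (((2*k).factorial : ℕ) : ZMod (p^2)) := by rw [h1]
      _ = _ := by rw [CN hodd k hk]; ring
  have hu := isUnit_factorial_sq (p := p) hk
  exact hu.mul_right_cancel (hu.mul_right_cancel h2)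

/-- `C(Mp, j) * j = p M (-1)^(j-1)` in `ZMod p²` for `1 ≤ j < p`. -/
lemma CMpMul (hodd : p ≠ 2) : ∀ j, j < p → 1 ≤ j →
    (((Mh p * p).choose j : ℕ) : ZMod (p^2)) * ((j : ℕ) : ZMod (p^2))
      = (p : ZMod (p^2)) * ((Mh p : ℕ) : ZMod (p^2)) * (-1)^(j-1) := by
  have hM := hMp (p := p) hodd
  intro j
  induction j with
  | zero => omega
  | succ j ih =>
      intro hj1 _
      by_cases hj0 : j = 0
      · subst hj0
        rw [Nat.choose_one_right]
        push_cast
        ring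
      · have hj : 1 ≤ j := by omega
        have hjp : j < p := by omega
        have IH := ih hjp hj
        have hjMp : j ≤ Mh p * p := by nlinarith [hM]
        have hrecN := Nat.choose_succ_right_eq (Mh p * p) j
        have hrecR : (((Mh p * p).choose (j+1) : ℕ) : ZMod (p^2)) * ((j+1 : ℕ) : ZMod (p^2))
            = (((Mh p * p).choose j : ℕ) : ZMod (p^2))
              * ((p : ZMod (p^2)) * ((Mh p : ℕ) : ZMod (p^2)) - ((j:ℕ) : ZMod (p^2))) := by
          calc (((Mh p * p).choose (j+1) : ℕ) : ZMod (p^2)) * ((j+1 : ℕ) : ZMod (p^2))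
              = (((Mh p * p).choose (j+1) * (j+1) : ℕ) : ZMod (p^2)) := by push_cast; ring
            _ = (((Mh p * p).choose j * (Mh p * p - j) : ℕ) : ZMod (p^2)) := by rw [hrecN]
            _ = _ := by
                rw [Nat.cast_mul, Nat.cast_sub hjMp]
                push_cast
                ring
        -- multiply by j and use p² = 0
        have hp2 : ((p : ZMod (p^2)))^2 = 0 := by
          have : ((p^2 : ℕ) : ZMod (p^2)) = 0 := ZMod.natCast_self _
          push_cast at this
          linear_combination this
        have hgoal_mul : ((((Mh p * p).choose (j+1) : ℕ) : ZMod (p^2)) * ((j+1 : ℕ) : ZMod (p^2)))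
              * ((j : ℕ) : ZMod (p^2))
            = ((p : ZMod (p^2)) * ((Mh p : ℕ) : ZMod (p^2)) * (-1)^j) * ((j : ℕ) : ZMod (p^2)) := by
          rw [hrecR]
          have hsign : ((-1 : ZMod (p^2)))^j = -(-1 : ZMod (p^2))^(j-1) := by
            conv_lhs => rw [show j = (j-1) + 1 by omega]
            rw [pow_succ]
            ring
          rw [hsign]
          linear_combination (norm := (push_cast; ring1))
            ((p : ZMod (p^2)) * ((Mh p : ℕ) : ZMod (p^2)) - ((j:ℕ) : ZMod (p^2))) * IH
            + (((Mh p : ℕ) : ZMod (p^2))^2 * (-1)^(j-1)) * hp2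
        have hju := isUnit_natCast_of_lt_sq (p := p) (n := j) (by omega) hjp
        exact hju.mul_right_cancel hgoal_mul

/-- Vandermonde-type decomposition of `C(N,k)` in `ZMod p²`. -/
lemma Ndecomp (hodd : p ≠ 2) {k : ℕ} (hk : k < p) :
    (((Nn p).choose k : ℕ) : ZMod (p^2))
      = (((Mh p).choose k : ℕ) : ZMod (p^2))
        + (p : ZMod (p^2)) * ((Mh p : ℕ) : ZMod (p^2)) * chat p k := by
  have hvdm := Nat.add_choose_eq (Mh p * p) (Mh p) k
  rw [Nat.sum_antidiagonal_eq_sum_range_succ_mk] at hvdm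
  have hcast : (((Nn p).choose k : ℕ) : ZMod (p^2))
      = ∑ j ∈ Finset.range (k+1),
          (((Mh p * p).choose j : ℕ) : ZMod (p^2)) * (((Mh p).choose (k-j) : ℕ) : ZMod (p^2)) := by
    rw [Nn, hvdm]
    push_cast
    rfl
  rw [hcast, Finset.sum_range_succ']
  have h0 : (((Mh p * p).choose 0 : ℕ) : ZMod (p^2)) * (((Mh p).choose (k-0) : ℕ) : ZMod (p^2))
      = (((Mh p).choose k : ℕ) : ZMod (p^2)) := by simp
  rw [h0, add_comm]
  congr 1
  rw [chat, Finset.mul_sum]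
  refine Finset.sum_congr rfl (fun i hi => ?_)
  have hi' : i < k := Finset.mem_range.mp hi
  have hiu := isUnit_natCast_of_lt_sq (p := p) (n := i+1) (by omega) (by omega)
  have hCMp := CMpMul (p := p) hodd (i+1) (by omega) (by omega)
  have hinv : (((Mh p * p).choose (i+1) : ℕ) : ZMod (p^2))
      = (p : ZMod (p^2)) * ((Mh p : ℕ) : ZMod (p^2)) * (-1)^i * (((i+1 : ℕ)) : ZMod (p^2))⁻¹ := by
    have hmulinv : (((i+1 : ℕ)) : ZMod (p^2)) * (((i+1 : ℕ)) : ZMod (p^2))⁻¹ = 1 :=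
      ZMod.mul_inv_of_unit _ hiu
    calc (((Mh p * p).choose (i+1) : ℕ) : ZMod (p^2))
        = (((Mh p * p).choose (i+1) : ℕ) : ZMod (p^2))
          * ((((i+1 : ℕ)) : ZMod (p^2)) * (((i+1 : ℕ)) : ZMod (p^2))⁻¹) := by rw [hmulinv, mul_one]
      _ = ((((Mh p * p).choose (i+1) : ℕ) : ZMod (p^2)) * (((i+1 : ℕ)) : ZMod (p^2)))
            * (((i+1 : ℕ)) : ZMod (p^2))⁻¹ := by ring
      _ = _ := by rw [hCMp, show (i+1) - 1 = i by omega]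
  rw [show k - (i+1) = k - 1 - i by omega, hinv]
  ring

/-- binomial sums over `range p`. -/
lemma binomsum (hodd : p ≠ 2) (t : ZMod (p^2)) :
    ∑ k ∈ Finset.range p, (((Mh p).choose k : ℕ) : ZMod (p^2)) * t^k
      = (1 + t)^(Mh p) := by
  have hM := hMp (p := p) hodd
  have hsub : ∑ k ∈ Finset.range (Mh p + 1), (((Mh p).choose k : ℕ) : ZMod (p^2)) * t^k
      = ∑ k ∈ Finset.range p, (((Mh p).choose k : ℕ) : ZMod (p^2)) * t^k := by
    apply Finset.sum_subset
    · exact Finset.range_subset_range.mpr (by omega)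
    · intro x _ hx
      rw [Finset.mem_range, Nat.not_lt] at hx
      rw [Nat.choose_eq_zero_of_lt (by omega)]
      simp
  rw [← hsub]
  rw [add_comm (1 : ZMod (p^2)) t, add_pow]
  refine Finset.sum_congr rfl (fun k _ => ?_)
  rw [one_pow]
  ring

end Rside

end St18

open St18 Finset in
theorem stmt18 (A B : ℤ) (p : ℕ) (hp : p.Prime) (hodd : p ≠ 2)
    (hAB : ¬ (p : ℤ) ∣ A * B)
    (hΔ : @legendreSym p ⟨hp⟩ (A ^ 2 - 4 * B) = 1)
    (v : ℕ → ℤ) (hv0 : v 0 = 2) (hv1 : v 1 = A)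
    (hvrec : ∀ n : ℕ, 1 ≤ n → v (n + 1) = A * v n - B * v (n - 1)) :
    (∑ k ∈ Finset.range p,
      (A : ZMod (p ^ 2)) ^ k * (v k : ZMod (p ^ 2)) * (Nat.choose (2 * k) k : ZMod (p ^ 2)) *
        (((4 * B : ℤ) : ZMod (p ^ 2)) ^ k)⁻¹) =
      2 * ((@legendreSym p ⟨hp⟩ (-B) : ℤ) : ZMod (p ^ 2)) := by
  haveI : Fact p.Prime := ⟨hp⟩
  have hp2 : 2 < p := by
    have := hp.two_le
    omega
  have hA : ¬ (p:ℤ) ∣ A := fun h => hAB (h.mul_right B)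
  have hB : ¬ (p:ℤ) ∣ B := fun h => hAB (h.mul_left A)
  have h4B : ¬ (p:ℤ) ∣ 4*B := by
    intro h
    rw [← ZMod.intCast_zmod_eq_zero_iff_dvd] at h
    push_cast at h
    have h2ne : (2 : ZMod p) ≠ 0 := by
      have := natCast_ne_zero_of_lt (p := p) (n := 2) (by norm_num) hp2
      push_cast at this
      exact this
    have h4ne : (4 : ZMod p) ≠ 0 := by
      have : (4 : ZMod p) = 2 * 2 := by norm_num
      rw [this]
      exact mul_ne_zero h2ne h2ne
    have hBz : ((B : ℤ) : ZMod p) = 0 := by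
      rcases mul_eq_zero.mp h with h' | h'
      · exact absurd h' h4ne
      · exact h'
    rw [ZMod.intCast_zmod_eq_zero_iff_dvd] at hBz
    exact hB hBz
  have h4Bu : IsUnit ((4*B : ℤ) : ZMod (p^2)) := isUnit_intCast_sq h4B
  have hBu : IsUnit ((B : ℤ) : ZMod (p^2)) := isUnit_intCast_sq hB
  obtain ⟨z, hz2, hzu⟩ := exists_sqrt (p := p) hodd hΔ
  have h2u : IsUnit ((2:ℕ) : ZMod (p^2)) := isUnit_natCast_of_lt_sq (by norm_num) hp2
  set ι := (((4*B : ℤ) : ZMod (p^2)))⁻¹ with hιdef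
  have hι1 : ((4*B : ℤ) : ZMod (p^2)) * ι = 1 := ZMod.mul_inv_of_unit _ h4Bu
  set i2 := (((2:ℕ) : ZMod (p^2)))⁻¹ with hi2def
  have h21 : ((2:ℕ) : ZMod (p^2)) * i2 = 1 := ZMod.mul_inv_of_unit _ h2u
  have h21' : (2 : ZMod (p^2)) * i2 = 1 := by push_cast at h21; exact h21
  set α := (((A:ℤ) : ZMod (p^2)) + z) * i2 with hαdef
  set β := (((A:ℤ) : ZMod (p^2)) - z) * i2 with hβdef
  have hz2' : z * z = ((A:ℤ) : ZMod (p^2))^2 - 4*((B:ℤ) : ZMod (p^2)) := by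
    rw [hz2]; push_cast; ring
  have hsum : α + β = ((A:ℤ) : ZMod (p^2)) := by
    rw [hαdef, hβdef]
    linear_combination ((A:ℤ) : ZMod (p^2)) * h21'
  have hprod : α * β = ((B:ℤ) : ZMod (p^2)) := by
    rw [hαdef, hβdef]
    linear_combination (-(i2^2)) * hz2' + (((B:ℤ) : ZMod (p^2)) * (2*i2+1)) * h21'
  have hαu : IsUnit α := isUnit_of_mul_isUnit_left (hprod ▸ hBu)
  have hβu : IsUnit β := isUnit_of_mul_isUnit_right (hprod ▸ hBu)
  have hα2 : α * α = ((A:ℤ) : ZMod (p^2)) * α - ((B:ℤ) : ZMod (p^2)) := by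
    rw [← hsum, ← hprod]; ring
  have hβ2 : β * β = ((A:ℤ) : ZMod (p^2)) * β - ((B:ℤ) : ZMod (p^2)) := by
    rw [← hsum, ← hprod]; ring
  have hvk : ∀ k, ((v k : ℤ) : ZMod (p^2)) = α^k + β^k := by
    intro k
    induction k using Nat.strong_induction_on with
    | _ k ih =>
      match k with
      | 0 => rw [hv0]; push_cast; ring
      | 1 => rw [hv1, pow_one, pow_one, hsum]
      | (n+2) =>
        have h1 := ih (n+1) (by omega)
        have h0 := ih n (by omega)
        have hr := hvrec (n+1) (by omega)
        simp only [Nat.add_sub_cancel] at hr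
        rw [hr]
        push_cast
        rw [h1, h0]
        linear_combination (-(α^n)) * hα2 + (-(β^n)) * hβ2
  set u := (-4 : ZMod (p^2)) * (((A:ℤ) : ZMod (p^2)) * α * ι) with hudef
  set w := (-4 : ZMod (p^2)) * (((A:ℤ) : ZMod (p^2)) * β * ι) with hwdef
  -- rewrite each term of the sum
  have hterm : ∀ k ∈ Finset.range p,
      (A : ZMod (p ^ 2)) ^ k * (v k : ZMod (p ^ 2)) * (Nat.choose (2 * k) k : ZMod (p ^ 2)) *
        (((4 * B : ℤ) : ZMod (p ^ 2)) ^ k)⁻¹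
      = (((Nn p).choose k : ℕ) : ZMod (p^2)) * (u^k + w^k) := by
    intro k hk
    have hkp := Finset.mem_range.mp hk
    have hinvpow : ((((4*B:ℤ) : ZMod (p^2)))^k)⁻¹ = ι^k := by
      have hx : IsUnit ((((4*B:ℤ) : ZMod (p^2)))^k) := h4Bu.pow k
      have hh1 : ((((4*B:ℤ) : ZMod (p^2)))^k) * ((((4*B:ℤ) : ZMod (p^2)))^k)⁻¹ = 1 :=
        ZMod.mul_inv_of_unit _ hx
      have hh2 : ((((4*B:ℤ) : ZMod (p^2)))^k) * ι^k = 1 := by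
        rw [← mul_pow, hι1, one_pow]
      exact hx.mul_left_cancel (hh1.trans hh2.symm)
    have hupow : u^k = (-4 : ZMod (p^2))^k * (((A:ℤ) : ZMod (p^2))^k * α^k * ι^k) := by
      rw [hudef, mul_pow (-4 : ZMod (p^2)) (((A:ℤ) : ZMod (p^2)) * α * ι) k,
        mul_pow (((A:ℤ) : ZMod (p^2)) * α) ι k, mul_pow ((A:ℤ) : ZMod (p^2)) α k]
    have hwpow : w^k = (-4 : ZMod (p^2))^k * (((A:ℤ) : ZMod (p^2))^k * β^k * ι^k) := by
      rw [hwdef, mul_pow (-4 : ZMod (p^2)) (((A:ℤ) : ZMod (p^2)) * β * ι) k,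
        mul_pow (((A:ℤ) : ZMod (p^2)) * β) ι k, mul_pow ((A:ℤ) : ZMod (p^2)) β k]
    rw [hinvpow, hvk k, CC hodd hkp, hupow, hwpow]
    ring
  rw [Finset.sum_congr rfl hterm]
  -- split each coefficient
  have hsplit : ∀ k ∈ Finset.range p,
      (((Nn p).choose k : ℕ) : ZMod (p^2)) * (u^k + w^k)
      = ((((Mh p).choose k : ℕ) : ZMod (p^2)) * u^k + (((Mh p).choose k : ℕ) : ZMod (p^2)) * w^k)
        + (p : ZMod (p^2)) * (((Mh p : ℕ) : ZMod (p^2))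
            * (chat p k * u^k + chat p k * w^k)) := by
    intro k hk
    rw [Ndecomp hodd (Finset.mem_range.mp hk)]
    ring
  rw [Finset.sum_congr rfl hsplit, Finset.sum_add_distrib, Finset.sum_add_distrib]
  rw [binomsum hodd u, binomsum hodd w]
  have hpull : ∑ k ∈ Finset.range p, (p : ZMod (p^2)) * (((Mh p : ℕ) : ZMod (p^2))
        * (chat p k * u^k + chat p k * w^k))
      = (p : ZMod (p^2)) * (((Mh p : ℕ) : ZMod (p^2))
          * ∑ k ∈ Finset.range p, (chat p k * u^k + chat p k * w^k)) := by
    rw [Finset.mul_sum, Finset.mul_sum]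
  rw [hpull]
  -- key algebraic facts about u and w
  have hAα : ((A:ℤ) : ZMod (p^2)) * α = α*α + ((B:ℤ) : ZMod (p^2)) := by
    rw [← hsum, ← hprod]; ring
  have hAβ : ((A:ℤ) : ZMod (p^2)) * β = β*β + ((B:ℤ) : ZMod (p^2)) := by
    rw [← hsum, ← hprod]; ring
  have hι4 : (4 : ZMod (p^2)) * ((B:ℤ) : ZMod (p^2)) * ι = 1 := by
    have : ((4*B : ℤ) : ZMod (p^2)) = (4 : ZMod (p^2)) * ((B:ℤ) : ZMod (p^2)) := by push_cast; ring
    rw [← this]; exact hι1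
  have hu1 : 1 + u = -((4 : ZMod (p^2))*ι) * (α*α) := by
    rw [hudef]
    linear_combination (-(4 : ZMod (p^2))*ι) * hAα - hι4
  have hw1 : 1 + w = -((4 : ZMod (p^2))*ι) * (β*β) := by
    rw [hwdef]
    linear_combination (-(4 : ZMod (p^2))*ι) * hAβ - hι4
  have huw : (1+u)*(1+w) = 1 := by
    rw [hu1, hw1]
    linear_combination (16*ι^2*(α*β + ((B:ℤ) : ZMod (p^2)))) * hprod
      + (4*((B:ℤ) : ZMod (p^2))*ι + 1) * hι4
  -- the p-multiple vanishes
  have hφu : phi p ((1:ZMod (p^2))+u) * phi p ((1:ZMod (p^2))+w) = 1 := by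
    rw [← map_mul, huw, map_one]
  have hab : (1 + phi p u) * (1 + phi p w) = 1 := by
    have h := hφu
    rw [map_add, map_add, map_one] at h
    exact h
  have hφchat : ∀ k, k < p → phi p (chat p k) = cc p k := by
    intro k hkp
    rw [chat, cc, map_sum]
    refine Finset.sum_congr rfl (fun i hi => ?_)
    have hi' : i < k := Finset.mem_range.mp hi
    have hiu : IsUnit (((i+1 : ℕ)) : ZMod (p^2)) :=
      isUnit_natCast_of_lt_sq (by omega) (by omega)
    rw [map_mul, map_mul, map_pow, map_neg, map_one, phi_inv hiu, map_natCast, map_natCast]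
  have hzero : (p : ZMod (p^2)) * (((Mh p : ℕ) : ZMod (p^2))
      * ∑ k ∈ Finset.range p, (chat p k * u^k + chat p k * w^k)) = 0 := by
    apply pmul_eq_zero
    rw [map_mul]
    have hS : phi p (∑ k ∈ Finset.range p, (chat p k * u^k + chat p k * w^k)) = 0 := by
      rw [map_sum]
      have : ∀ k ∈ Finset.range p, phi p (chat p k * u^k + chat p k * w^k)
          = cc p k * (phi p u)^k + cc p k * (phi p w)^k := by
        intro k hk
        rw [map_add, map_mul, map_mul, map_pow, map_pow, hφchat k (Finset.mem_range.mp hk)]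
      rw [Finset.sum_congr rfl this, Finset.sum_add_distrib]
      exact crux hodd (phi p u) (phi p w) hab
    rw [hS, mul_zero]
  rw [hzero, add_zero]
  -- compute the main term
  set g := (1+u)^(Mh p) with hgdef
  have hgh : g * ((1+w)^(Mh p)) = 1 := by
    rw [hgdef, ← mul_pow, huw, one_pow]
  have hgu : IsUnit g := IsUnit.of_mul_eq_one _ hgh
  -- ε
  have hBF : ((-B : ℤ) : ZMod p) ≠ 0 := by
    intro h0
    rw [ZMod.intCast_zmod_eq_zero_iff_dvd] at h0
    exact hB ((dvd_neg).mp h0)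
  have hεsq : (legendreSym p (-B)) * (legendreSym p (-B)) = 1 := by
    rcases legendreSym.eq_one_or_neg_one p hBF with h | h <;> rw [h] <;> norm_num
  -- φ g = ε in ZMod p
  have hφg : phi p g = ((legendreSym p (-B) : ℤ) : ZMod p) := by
    have haα : phi p α ≠ 0 := phi_ne_zero_of_unit hαu
    have hφι : phi p ι = (((4*B : ℤ) : ZMod p))⁻¹ := by
      rw [hιdef, phi_inv h4Bu, map_intCast]
    have hφ1u : phi p ((1:ZMod (p^2))+u)
        = -((4 : ZMod p) * (((4*B : ℤ) : ZMod p))⁻¹) * (phi p α * phi p α) := by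
      rw [hu1, map_mul, map_mul, map_neg, map_mul, hφι, map_ofNat]
    have hg1 : phi p g = (-((4 : ZMod p) * (((4*B : ℤ) : ZMod p))⁻¹) * (phi p α * phi p α))^(Mh p) := by
      rw [hgdef, map_pow, hφ1u]
    have hc : ((4*B : ℤ) : ZMod p) ≠ 0 := by
      intro h0
      rw [ZMod.intCast_zmod_eq_zero_iff_dvd] at h0
      exact h4B h0
    have hcinv : ((4*B : ℤ) : ZMod p) * (((4*B : ℤ) : ZMod p))⁻¹ = 1 := mul_inv_cancel₀ hc
    have hBFne : ((B : ℤ) : ZMod p) ≠ 0 := by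
      intro h0
      rw [ZMod.intCast_zmod_eq_zero_iff_dvd] at h0
      exact hB h0
    have hfermat : (phi p α)^(2 * Mh p) = 1 := by
      have h2M : 2 * Mh p = p - 1 := by have := hMp (p := p) hodd; omega
      rw [h2M]
      exact ZMod.pow_card_sub_one_eq_one haα
    have hBfer : (((B : ℤ) : ZMod p))^(2 * Mh p) = 1 := by
      have h2M : 2 * Mh p = p - 1 := by have := hMp (p := p) hodd; omega
      rw [h2M]
      exact ZMod.pow_card_sub_one_eq_one hBFne
    have hmain : (-((4 : ZMod p) * (((4*B : ℤ) : ZMod p))⁻¹) * (phi p α * phi p α))^(Mh p)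
        = (((-B : ℤ)) : ZMod p)^(Mh p) := by
      apply mul_right_cancel₀ (b := (((4*B : ℤ) : ZMod p))^(Mh p)) (pow_ne_zero _ hc)
      have base1 : (-((4 : ZMod p) * (((4*B : ℤ) : ZMod p))⁻¹) * (phi p α * phi p α))
            * ((4*B : ℤ) : ZMod p)
          = ((-(4 : ZMod p)) * ((((4*B : ℤ) : ZMod p)) * (((4*B : ℤ) : ZMod p))⁻¹))
            * (phi p α)^2 := by ring
      have lhs1 : (-((4 : ZMod p) * (((4*B : ℤ) : ZMod p))⁻¹) * (phi p α * phi p α))^(Mh p)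
            * (((4*B : ℤ) : ZMod p))^(Mh p)
          = ((-(4 : ZMod p)) * ((((4*B : ℤ) : ZMod p)) * (((4*B : ℤ) : ZMod p))⁻¹))^(Mh p)
            * (phi p α)^(2 * Mh p) := by
        rw [← mul_pow, base1, mul_pow, pow_mul]
      rw [lhs1, hfermat, mul_one, hcinv]
      have base2 : (((-B : ℤ)) : ZMod p) * ((4*B : ℤ) : ZMod p)
          = (-(4 : ZMod p)) * (((B : ℤ) : ZMod p))^2 := by push_cast; ring
      have rhs1 : (((-B : ℤ)) : ZMod p)^(Mh p) * (((4*B : ℤ) : ZMod p))^(Mh p)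
          = ((-(4 : ZMod p)))^(Mh p) * (((B : ℤ) : ZMod p))^(2 * Mh p) := by
        rw [← mul_pow, base2, mul_pow, pow_mul]
      rw [rhs1, hBfer, mul_one, mul_one]
    rw [hg1, hmain, legendreSym.eq_pow]
    congr 1
    have := hMp (p := p) hodd
    unfold Mh
    omega
  set εR := ((legendreSym p (-B) : ℤ) : ZMod (p^2)) with hεRdef
  have hφdiff : phi p (g - εR) = 0 := by
    rw [map_sub, hφg, hεRdef, map_intCast, sub_self]
  have hDD : (g - εR) * (g - εR) = 0 := mul_eq_zero_of_phi hφdiff hφdiff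
  have hεR2 : εR * εR = 1 := by
    rw [hεRdef, ← Int.cast_mul, hεsq, Int.cast_one]
  have hkey : g * (2*εR - g) = 1 := by
    linear_combination -hDD + hεR2
  have hfin : (1+w)^(Mh p) = 2*εR - g := hgu.mul_left_cancel (hgh.trans hkey.symm)
  rw [hfin, hgdef]
  ring
end
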